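/- arXiv:2302.04353 — 12 statements merged into one kernel-verified Lean document; each statement's English description precedes it below -/
import Mathlib

section
/- Let 0 < α < β and let A : C_α(ℝ) → C_β(ℝ) be a bounded linear operator, i.e. there is M ≥ 0 with |Af|_β ≤ M|f|_α for all f ∈ C_α(ℝ). For r > 0 let B_r = {f ∈ C_α(ℝ) : |f|_α < r}. Suppose that for every r > 0 and every X > 0 the family of restrictions {(Af)|_{[-X,X]} : f ∈ B_r} is uniformly equicontinuous. Then A, viewed as an operator from C_α(ℝ) to C_α(ℝ) (via the inclusion C_β(ℝ) ⊆ C_α(ℝ)), is a compact operator: the image under A of every bounded subset of C_α(ℝ) is relatively compact in the |·|_α-norm; equivalently, every |·|_α-bounded sequence (f_n) has a subsequence (f_{n_j}) such that (Af_{n_j}) converges in the |·|_α-norm. -/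
/-!
Multiplying by the weight `w x = (1 + |x|) ^ α` turns the claim into uniform convergence of a
subsequence of `G n = w • A (f n)`. The `G n` are equicontinuous (the weight is continuous, the
`A (f n)` are equicontinuous on compacts and bounded at each point) and pointwise bounded, so by
Arzelà–Ascoli in `C(ℝ, ℂ)` a subsequence converges locally uniformly. Since
`‖G n x‖ ≤ C (1 + |x|) ^ (α - β)` uniformly in `n` and `α < β`, the convergence is uniform on `ℝ`.
-/

open Filter

/-- The weighted sup "norm" `|f|_α = sup_x (1+|x|)^α ‖f x‖` on `C_α(ℝ)`. -/
noncomputable def anorm (α : ℝ) (f : ℝ → ℂ) : ℝ :=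
  ⨆ x : ℝ, (1 + |x|) ^ α * ‖f x‖

open Set Topology Uniformity

theorem ContinuousMap.exists_subseq_tendstoLocallyUniformly {X α : Type*} [TopologicalSpace X]
    [WeaklyLocallyCompactSpace X] [SigmaCompactSpace X] [UniformSpace α] [T2Space α]
    [IsCountablyGenerated (𝓤 α)] (F : ℕ → C(X, α))
    (hF : Equicontinuous fun n => ⇑(F n)) (hpt : ∀ x, ∃ Q, IsCompact Q ∧ ∀ n, F n x ∈ Q) :
    ∃ φ : ℕ → ℕ, StrictMono φ ∧ ∃ g : C(X, α),
      TendstoLocallyUniformly (fun j => ⇑(F (φ j))) g atTop := by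
  have hK : IsCompact (closure (range F)) := by
    refine ArzelaAscoli.isCompact_closure_of_isClosedEmbedding (𝔖 := {K | IsCompact K})
      (fun _ hK => hK) ⟨isUniformEmbedding_toUniformOnFunIsCompact.isEmbedding, ?_⟩
      (fun K _ => ?_) (fun K _ x _ => ?_)
    · convert UniformOnFun.isClosed_setOfPred_continuous (β := α)
        (CompactlyCoherentSpace.isCoherentWith (X := X)) using 1
      exact range_toUniformOnFunIsCompact
    · refine ((equicontinuous_iff_range.mp hF).comp fun f : range F => ⟨f.1, ?_⟩).equicontinuousOn
        K
      obtain ⟨n, hn⟩ := f.2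
      exact ⟨n, congrArg _ hn⟩
    · obtain ⟨Q, hQ, hFQ⟩ := hpt x
      exact ⟨Q, hQ, by rintro _ ⟨n, rfl⟩; exact hFQ n⟩
  -- `C(X, α)` is first countable since `X` is σ-compact, so compactness gives a subsequence.
  obtain ⟨g, -, φ, hφ, hlim⟩ := hK.tendsto_subseq fun n => subset_closure (mem_range_self n)
  exact ⟨φ, hφ, g, ContinuousMap.tendsto_iff_tendstoLocallyUniformly.mp hlim⟩

theorem TendstoLocallyUniformly.tendstoUniformly_of_norm_le {ι X E : Type*} [TopologicalSpace X]
    [SeminormedAddCommGroup E] {F : ι → X → E} {g : X → E} {l : Filter ι} [l.NeBot]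
    {b : X → ℝ} (h : TendstoLocallyUniformly F g l) (hb : Tendsto b (cocompact X) (𝓝 0))
    (hFb : ∀ i x, ‖F i x‖ ≤ b x) : TendstoUniformly F g l := by
  rw [Metric.tendstoUniformly_iff]
  intro ε hε
  obtain ⟨K, hK, hKb⟩ := mem_cocompact.mp (hb.eventually (gt_mem_nhds (half_pos hε)))
  have hg : ∀ x, ‖g x‖ ≤ b x := fun x =>
    le_of_tendsto (h.tendstoLocallyUniformlyOn.tendsto_at (mem_univ x)).norm
      (Eventually.of_forall fun i => hFb i x)
  have hKunif := Metric.tendstoUniformlyOn_iff.mp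
    ((tendstoLocallyUniformlyOn_iff_tendstoUniformlyOn_of_compact hK).mp
      h.tendstoLocallyUniformlyOn) ε hε
  filter_upwards [hKunif] with i hi x
  by_cases hx : x ∈ K
  · exact hi x hx
  · have hbx : b x < ε / 2 := hKb hx
    calc dist (g x) (F i x) ≤ ‖g x‖ + ‖F i x‖ := dist_le_norm_add_norm _ _
      _ ≤ b x + b x := add_le_add (hg x) (hFb i x)
      _ < ε := by linarith

theorem EquicontinuousAt.smul_of_bddAbove {ι X 𝕜 E : Type*} [TopologicalSpace X] [NormedField 𝕜]
    [SeminormedAddCommGroup E] [NormedSpace 𝕜 E] {F : ι → X → E} {w : X → 𝕜} {x₀ : X}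
    (hF : EquicontinuousAt F x₀) (hw : ContinuousAt w x₀)
    (hb : BddAbove (range fun i => ‖F i x₀‖)) :
    EquicontinuousAt (fun i x => w x • F i x) x₀ := by
  obtain ⟨B, hB⟩ := hb
  have hFB : ∀ i, ‖F i x₀‖ ≤ |B| := fun i => (hB (mem_range_self i)).trans (le_abs_self B)
  set W := ‖w x₀‖ + 1
  have hW : 0 < W := by positivity
  rw [Metric.equicontinuousAt_iff_right] at hF ⊢
  intro ε hε
  have hε' : 0 < ε / 2 / (|B| + 1) := by positivity
  filter_upwards [hF (ε / 2 / W) (by positivity), hw.norm.eventually (gt_mem_nhds (lt_add_one _)),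
    hw.eventually (Metric.ball_mem_nhds _ hε')] with x hFx hwx hwx₀ i
  have h₁ : ‖w x₀ - w x‖ * ‖F i x₀‖ ≤ ε / 2 := by
    rw [dist_eq_norm, norm_sub_rev] at hwx₀
    calc ‖w x₀ - w x‖ * ‖F i x₀‖ ≤ ε / 2 / (|B| + 1) * |B| := by gcongr; exact hFB i
      _ ≤ ε / 2 := by
        rw [div_mul_eq_mul_div, div_le_iff₀ (by positivity)]
        nlinarith [abs_nonneg B]
  have h₂ : ‖w x‖ * ‖F i x₀ - F i x‖ < ε / 2 := by
    rw [← dist_eq_norm]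
    calc ‖w x‖ * dist (F i x₀) (F i x) ≤ W * dist (F i x₀) (F i x) := by gcongr
      _ < W * (ε / 2 / W) := by gcongr; exact hFx i
      _ = ε / 2 := by field_simp
  calc dist (w x₀ • F i x₀) (w x • F i x)
      = ‖(w x₀ - w x) • F i x₀ + w x • (F i x₀ - F i x)‖ := by
        rw [dist_eq_norm]; congr 1; module
    _ ≤ ‖w x₀ - w x‖ * ‖F i x₀‖ + ‖w x‖ * ‖F i x₀ - F i x‖ := by
        rw [← norm_smul, ← norm_smul]; exact norm_add_le _ _
    _ < ε := by linarith

theorem equicontinuous_of_forall_Icc {ι E : Type*} [PseudoMetricSpace E] {F : ι → ℝ → E}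
    (h : ∀ X > 0, ∀ ε > 0, ∃ δ > 0, ∀ i, ∀ x ∈ Icc (-X) X, ∀ y ∈ Icc (-X) X,
      |x - y| < δ → dist (F i x) (F i y) < ε) :
    Equicontinuous F := by
  intro x₀
  rw [Metric.equicontinuousAt_iff]
  intro ε hε
  obtain ⟨δ, hδ, hF⟩ := h (|x₀| + 1) (by positivity) ε hε
  refine ⟨min δ 1, by positivity, fun x hx i => ?_⟩
  rw [Real.dist_eq] at hx
  have hIcc : ∀ {y}, |y - x₀| < 1 → y ∈ Icc (-(|x₀| + 1)) (|x₀| + 1) := fun {y} hy =>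
    abs_le.mp (by linarith [abs_sub_abs_le_abs_sub y x₀])
  exact hF i x₀ (hIcc (by simp)) x (hIcc (hx.trans_le (min_le_right _ _)))
    (by rw [abs_sub_comm]; exact hx.trans_le (min_le_left _ _))

theorem tendsto_one_add_abs_rpow_cocompact {γ : ℝ} (hγ : γ < 0) :
    Tendsto (fun x : ℝ => (1 + |x|) ^ γ) (cocompact ℝ) (𝓝 0) := by
  have h : Tendsto (fun x : ℝ => 1 + |x|) (cocompact ℝ) atTop :=
    tendsto_atTop_add_const_left _ 1 tendsto_norm_cocompact_atTop
  simpa only [neg_neg, Function.comp_def] using (tendsto_rpow_neg_atTop (neg_pos.mpr hγ)).comp h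

theorem one_add_abs_rpow_mul_norm_le {E : Type*} [SeminormedAddCommGroup E] {α β C x : ℝ} {z : E}
    (h : (1 + |x|) ^ β * ‖z‖ ≤ C) :
    (1 + |x|) ^ α * ‖z‖ ≤ C * (1 + |x|) ^ (α - β) := by
  have hx : 0 < 1 + |x| := by positivity
  calc (1 + |x|) ^ α * ‖z‖ = (1 + |x|) ^ (α - β) * ((1 + |x|) ^ β * ‖z‖) := by
        rw [← mul_assoc, ← Real.rpow_add hx, sub_add_cancel]
    _ ≤ (1 + |x|) ^ (α - β) * C := by gcongr
    _ = C * (1 + |x|) ^ (α - β) := mul_comm _ _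

theorem mul_norm_sub_inv_smul {E : Type*} [SeminormedAddCommGroup E] [NormedSpace ℝ E] {c : ℝ}
    (hc : 0 < c) (u v : E) : c * ‖u - c⁻¹ • v‖ = ‖c • u - v‖ := by
  rw [← norm_smul_of_nonneg hc.le, smul_sub, smul_inv_smul₀ hc.ne']

section WeightedOperator

variable {α β M r : ℝ} {A : (ℝ → ℂ) →ₗ[ℂ] (ℝ → ℂ)}

theorem one_add_abs_rpow_mul_norm_apply_le
    (hbd : ∀ f : ℝ → ℂ, Continuous f → BddAbove (range fun x => (1 + |x|) ^ α * ‖f x‖) →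
      Continuous (A f) ∧ ∀ x : ℝ, (1 + |x|) ^ β * ‖A f x‖ ≤ M * anorm α f)
    {f : ℝ → ℂ} (hf : Continuous f) (hfr : ∀ x, (1 + |x|) ^ α * ‖f x‖ ≤ r) (x : ℝ) :
    (1 + |x|) ^ β * ‖A f x‖ ≤ |M| * |r| := by
  have hanorm : anorm α f ≤ |r| := (ciSup_le hfr).trans (le_abs_self r)
  have hanorm₀ : 0 ≤ anorm α f := Real.iSup_nonneg fun x => by positivity
  calc (1 + |x|) ^ β * ‖A f x‖ ≤ M * anorm α f := (hbd f hf ⟨r, forall_mem_range.mpr hfr⟩).2 x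
    _ ≤ |M| * anorm α f := by gcongr; exact le_abs_self M
    _ ≤ |M| * |r| := by gcongr

theorem equicontinuous_apply_of_forall_Icc {ι : Type*}
    (hequi : ∀ r > (0 : ℝ), ∀ X > (0 : ℝ), ∀ ε > (0 : ℝ), ∃ δ > (0 : ℝ),
      ∀ f : ℝ → ℂ, Continuous f → BddAbove (range fun x => (1 + |x|) ^ α * ‖f x‖) →
        anorm α f < r → ∀ x ∈ Icc (-X) X, ∀ y ∈ Icc (-X) X, |x - y| < δ → ‖A f x - A f y‖ < ε)
    {f : ι → ℝ → ℂ} (hf : ∀ i, Continuous (f i)) (hfr : ∀ i x, (1 + |x|) ^ α * ‖f i x‖ ≤ r) :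
    Equicontinuous fun i => A (f i) := by
  refine equicontinuous_of_forall_Icc fun X hX ε hε => ?_
  obtain ⟨δ, hδ, hA⟩ := hequi (|r| + 1) (by positivity) X hX ε hε
  refine ⟨δ, hδ, fun i x hx y hy hxy => ?_⟩
  have hanorm : anorm α (f i) < |r| + 1 := (ciSup_le (hfr i)).trans_lt (by linarith [le_abs_self r])
  rw [dist_eq_norm]
  exact hA (f i) (hf i) ⟨r, forall_mem_range.mpr (hfr i)⟩ hanorm x hx y hy hxy

end WeightedOperator

theorem compactness_criterion_weighted_spaces_general (α β : ℝ) (hαβ : α < β)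
    (A : (ℝ → ℂ) →ₗ[ℂ] (ℝ → ℂ)) (M : ℝ)
    (hbd : ∀ f : ℝ → ℂ, Continuous f →
      BddAbove (Set.range fun x => (1 + |x|) ^ α * ‖f x‖) →
      Continuous (A f) ∧ ∀ x : ℝ, (1 + |x|) ^ β * ‖A f x‖ ≤ M * anorm α f)
    (hequi : ∀ r > (0 : ℝ), ∀ X > (0 : ℝ), ∀ ε > (0 : ℝ), ∃ δ > (0 : ℝ),
      ∀ f : ℝ → ℂ, Continuous f →
        BddAbove (Set.range fun x => (1 + |x|) ^ α * ‖f x‖) →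
        anorm α f < r →
        ∀ x ∈ Set.Icc (-X) X, ∀ y ∈ Set.Icc (-X) X, |x - y| < δ →
          ‖A f x - A f y‖ < ε) :
    ∀ (f : ℕ → ℝ → ℂ) (r : ℝ),
      (∀ n, Continuous (f n)) →
      (∀ n x, (1 + |x|) ^ α * ‖f n x‖ ≤ r) →
      ∃ n : ℕ → ℕ, StrictMono n ∧ ∃ g : ℝ → ℂ,
        ∀ ε > (0 : ℝ), ∃ N : ℕ, ∀ j ≥ N, ∀ x : ℝ,
          (1 + |x|) ^ α * ‖A (f (n j)) x - g x‖ ≤ ε := by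
  intro f r hf hfr
  have hAf := fun n => one_add_abs_rpow_mul_norm_apply_le hbd (hf n) (hfr n)
  have hw : Continuous fun x : ℝ => (1 + |x|) ^ α :=
    (continuous_const.add continuous_abs).rpow_const fun x =>
      Or.inl (by positivity : (0 : ℝ) < 1 + |x|).ne'
  let G : ℕ → C(ℝ, ℂ) := fun n => ⟨fun x => (1 + |x|) ^ α • A (f n) x,
    hw.smul (hbd _ (hf n) ⟨r, forall_mem_range.mpr (hfr n)⟩).1⟩
  have hG : ∀ n x, ‖G n x‖ ≤ |M| * |r| * (1 + |x|) ^ (α - β) := fun n x => by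
    rw [ContinuousMap.coe_mk, norm_smul, Real.norm_of_nonneg (by positivity)]
    exact one_add_abs_rpow_mul_norm_le (hAf n x)
  have hGequi : Equicontinuous fun n => ⇑(G n) := fun x₀ =>
    (equicontinuous_apply_of_forall_Icc hequi hf hfr x₀).smul_of_bddAbove hw.continuousAt
      ⟨|M| * |r| / (1 + |x₀|) ^ β,
        forall_mem_range.mpr fun n => (le_div_iff₀' (by positivity)).mpr (hAf n x₀)⟩
  obtain ⟨φ, hφ, g, hloc⟩ := ContinuousMap.exists_subseq_tendstoLocallyUniformly G hGequi
    fun x => ⟨_, isCompact_closedBall 0 _, fun n => mem_closedBall_zero_iff.mpr (hG n x)⟩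
  have hdecay : Tendsto (fun x : ℝ => |M| * |r| * (1 + |x|) ^ (α - β)) (cocompact ℝ) (𝓝 0) := by
    simpa using (tendsto_one_add_abs_rpow_cocompact (sub_neg.mpr hαβ)).const_mul (|M| * |r|)
  have hunif := hloc.tendstoUniformly_of_norm_le hdecay fun n x => hG (φ n) x
  refine ⟨φ, hφ, fun x => ((1 + |x|) ^ α)⁻¹ • g x, fun ε hε => ?_⟩
  obtain ⟨N, hN⟩ := eventually_atTop.mp (Metric.tendstoUniformly_iff.mp hunif ε hε)
  refine ⟨N, fun j hj x => ?_⟩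
  rw [mul_norm_sub_inv_smul (by positivity), ← dist_eq_norm, dist_comm]
  exact (hN j hj x).le

/-- Let `0 < α < β` and let `A : C_α(ℝ) → C_β(ℝ)` be a bounded linear
operator.  If for every `r > 0` and `X > 0` the image of the ball `B_r` restricted to
`[-X, X]` is uniformly equicontinuous, then `A : C_α(ℝ) → C_α(ℝ)` is compact: every
`|·|_α`-bounded sequence `(f_n)` has a subsequence `(f_{n_j})` with `(A f_{n_j})`
converging in the `|·|_α`-norm. -/
theorem compactness_criterion_weighted_spaces (α β : ℝ) (hα : 0 < α) (hαβ : α < β)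
    (A : (ℝ → ℂ) →ₗ[ℂ] (ℝ → ℂ)) (M : ℝ)
    (hbd : ∀ f : ℝ → ℂ, Continuous f →
      BddAbove (Set.range fun x => (1 + |x|) ^ α * ‖f x‖) →
      Continuous (A f) ∧ ∀ x : ℝ, (1 + |x|) ^ β * ‖A f x‖ ≤ M * anorm α f)
    (hequi : ∀ r > (0 : ℝ), ∀ X > (0 : ℝ), ∀ ε > (0 : ℝ), ∃ δ > (0 : ℝ),
      ∀ f : ℝ → ℂ, Continuous f →
        BddAbove (Set.range fun x => (1 + |x|) ^ α * ‖f x‖) →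
        anorm α f < r →
        ∀ x ∈ Set.Icc (-X) X, ∀ y ∈ Set.Icc (-X) X, |x - y| < δ →
          ‖A f x - A f y‖ < ε) :
    ∀ (f : ℕ → ℝ → ℂ) (r : ℝ),
      (∀ n, Continuous (f n)) →
      (∀ n x, (1 + |x|) ^ α * ‖f n x‖ ≤ r) →
      ∃ n : ℕ → ℕ, StrictMono n ∧ ∃ g : ℝ → ℂ,
        ∀ ε > (0 : ℝ), ∃ N : ℕ, ∀ j ≥ N, ∀ x : ℝ,
          (1 + |x|) ^ α * ‖A (f (n j)) x - g x‖ ≤ ε :=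
  compactness_criterion_weighted_spaces_general α β hαβ A M hbd hequi
end

section
/- Let 0 < α < 1/2 and m ≥ 0. Then there is a constant M (depending only on α) with the following property: if k : ℝ × ℝ → ℂ is measurable and satisfies |k(x,y)| ≤ m·(1 + |x| + |y|)^{-1/2} for all x, y ∈ ℝ, then for every continuous function τ : ℝ → ℂ with |τ|_{α+1/2} < ∞ and every x ∈ ℝ, the function y ↦ k(x,y)τ(y) is integrable and |∫_{-∞}^{∞} k(x,y) τ(y) dy| ≤ M · m · |τ|_{α+1/2} · (1 + |x|)^{-α}. -/
/-!
Put `X = |x|`. The integrand is bounded by `m T (1 + X + |y|)^(-1/2) (1 + |y|)^(-α-1/2)`.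
On `|y| ≤ X` the first factor is at most `(1 + X)^(-1/2)`, and since `α < 1/2` the remaining
integral over `|y| ≤ X` grows like `(1 + X)^(1/2-α)`. On `|y| > X` the first factor is at most
`(1 + |y|)^(-1/2)`, and since `α > 0` the tail integral of `(1 + |y|)^(-1-α)` is of order
`(1 + X)^(-α)`.
-/

open MeasureTheory Set

lemma integrable_one_add_abs_rpow_neg {p : ℝ} (hp : 1 < p) :
    Integrable fun y : ℝ => (1 + |y|) ^ (-p) := by
  simpa [Real.norm_eq_abs] using
    integrable_one_add_norm (E := ℝ) (μ := volume) (r := p) (by simpa using hp)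

lemma intervalIntegral_one_add_rpow_neg {s : ℝ} (hs : s < 1) (a b : ℝ) :
    ∫ t in a..b, (1 + t) ^ (-s) = ((1 + b) ^ (1 - s) - (1 + a) ^ (1 - s)) / (1 - s) := by
  rw [intervalIntegral.integral_comp_add_left (fun u : ℝ => u ^ (-s)),
    integral_rpow (Or.inl (by linarith))]
  ring_nf

lemma setIntegral_Ioi_one_add_rpow_neg {p c : ℝ} (hp : 1 < p) (hc : -1 < c) :
    ∫ t in Ioi c, (1 + t) ^ (-p) = (1 + c) ^ (1 - p) / (p - 1) := by
  have h := (measurePreserving_add_left volume (1 : ℝ)).setIntegral_preimage_emb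
    (measurableEmbedding_addLeft 1) (fun u : ℝ => u ^ (-p)) (Ioi (1 + c))
  simp only [preimage_const_add_Ioi, add_sub_cancel_left] at h
  rw [h, integral_Ioi_rpow_of_lt (by linarith) (by linarith), neg_add_eq_sub, neg_div,
    ← div_neg, neg_sub]

noncomputable def kernelWeight (α X y : ℝ) : ℝ :=
  (1 + X + |y|) ^ (-(1 / 2) : ℝ) * (1 + |y|) ^ (-(α + 1 / 2))

section kernelWeight

variable {α X : ℝ}

@[simp]
lemma kernelWeight_abs (y : ℝ) : kernelWeight α X |y| = kernelWeight α X y := by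
  simp [kernelWeight]

lemma continuous_kernelWeight (hX : -1 < X) : Continuous (kernelWeight α X) := by
  have hpos (y : ℝ) : 0 < 1 + X + |y| := by linarith [abs_nonneg y]
  have hpos' (y : ℝ) : 0 < 1 + |y| := by positivity
  exact ((continuous_const.add continuous_abs).rpow_const fun y => Or.inl (hpos y).ne').mul
    ((continuous_const.add continuous_abs).rpow_const fun y => Or.inl (hpos' y).ne')

lemma kernelWeight_le_rpow_mul_rpow (hX : -1 < X) (y : ℝ) :
    kernelWeight α X y ≤ (1 + X) ^ (-(1 / 2) : ℝ) * (1 + |y|) ^ (-(α + 1 / 2)) := by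
  unfold kernelWeight
  gcongr ?_ * _
  exact Real.rpow_le_rpow_of_nonpos (by linarith) (by linarith [abs_nonneg y]) (by norm_num)

lemma kernelWeight_le_rpow (hX : 0 ≤ X) (y : ℝ) :
    kernelWeight α X y ≤ (1 + |y|) ^ (-(1 + α)) := by
  have h1 : (1 + |y|) ^ (-(1 / 2) : ℝ) * (1 + |y|) ^ (-(α + 1 / 2)) =
      (1 + |y|) ^ (-(1 + α)) := by
    rw [← Real.rpow_add (by positivity)]
    ring_nf
  rw [kernelWeight, ← h1]
  gcongr ?_ * _
  exact Real.rpow_le_rpow_of_nonpos (by positivity) (by linarith) (by norm_num)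

lemma integrable_kernelWeight (hα : 0 < α) (hX : 0 ≤ X) : Integrable (kernelWeight α X) :=
  (integrable_one_add_abs_rpow_neg (by linarith : 1 < 1 + α)).mono'
    (continuous_kernelWeight (by linarith)).aestronglyMeasurable
    (ae_of_all _ fun y => by
      rw [Real.norm_of_nonneg (by unfold kernelWeight; positivity)]
      exact kernelWeight_le_rpow hX y)

lemma setIntegral_Ioc_kernelWeight_le (hα : α < 1 / 2) (hX : 0 ≤ X) :
    ∫ y in Ioc 0 X, kernelWeight α X y ≤ (1 + X) ^ (-α) / (1 / 2 - α) := by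
  have hs : α + 1 / 2 < 1 := by linarith
  have hint : IntervalIntegrable (fun t : ℝ => (1 + t) ^ (-(α + 1 / 2))) volume 0 X := by
    simpa using (intervalIntegral.intervalIntegrable_rpow' (a := 1) (b := 1 + X)
      (by linarith : -1 < -(α + 1 / 2))).comp_add_left 1
  rw [← intervalIntegral.integral_of_le hX]
  calc ∫ y in 0..X, kernelWeight α X y
      ≤ ∫ t in 0..X, (1 + X) ^ (-(1 / 2) : ℝ) * (1 + t) ^ (-(α + 1 / 2)) := by
        refine intervalIntegral.integral_mono_on hX
          ((continuous_kernelWeight (by linarith)).intervalIntegrable _ _) (hint.const_mul _)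
          fun t ht => ?_
        simpa [abs_of_nonneg ht.1] using kernelWeight_le_rpow_mul_rpow (α := α) (by linarith) t
    _ = (1 + X) ^ (-(1 / 2) : ℝ) * (((1 + X) ^ (1 / 2 - α) - 1) / (1 / 2 - α)) := by
        rw [intervalIntegral.integral_const_mul, intervalIntegral_one_add_rpow_neg hs, add_zero,
          Real.one_rpow, show 1 - (α + 1 / 2) = 1 / 2 - α by ring]
    _ ≤ (1 + X) ^ (-α) / (1 / 2 - α) := by
        have hX1 : (0 : ℝ) < 1 + X := by linarith
        rw [mul_div_assoc', mul_sub, mul_one, ← Real.rpow_add hX1,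
          show -(1 / 2) + (1 / 2 - α) = -α by ring]
        gcongr ?_ / _
        linarith [Real.rpow_nonneg hX1.le (-(1 / 2) : ℝ)]

lemma setIntegral_Ioi_kernelWeight_le (hα : 0 < α) (hX : 0 ≤ X) :
    ∫ y in Ioi X, kernelWeight α X y ≤ (1 + X) ^ (-α) / α := by
  have hp : 1 < 1 + α := by linarith
  calc ∫ y in Ioi X, kernelWeight α X y
      ≤ ∫ t in Ioi X, (1 + |t|) ^ (-(1 + α)) :=
        setIntegral_mono_on (integrable_kernelWeight hα hX).integrableOn
          (integrable_one_add_abs_rpow_neg hp).integrableOn measurableSet_Ioi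
          fun t _ => kernelWeight_le_rpow hX t
    _ = ∫ t in Ioi X, (1 + t) ^ (-(1 + α)) :=
        setIntegral_congr_fun measurableSet_Ioi fun t ht => by
          rw [abs_of_nonneg (hX.trans ht.le)]
    _ = (1 + X) ^ (-α) / α := by
        rw [setIntegral_Ioi_one_add_rpow_neg hp (by linarith)]
        ring_nf

lemma integral_kernelWeight_le (hα0 : 0 < α) (hα : α < 1 / 2) (hX : 0 ≤ X) :
    ∫ y, kernelWeight α X y ≤ (2 / (1 / 2 - α) + 2 / α) * (1 + X) ^ (-α) := by
  have hint := integrable_kernelWeight hα0 hX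
  calc ∫ y, kernelWeight α X y
      = 2 * ((∫ y in Ioc 0 X, kernelWeight α X y) + ∫ y in Ioi X, kernelWeight α X y) := by
        rw [← setIntegral_union (Ioc_disjoint_Ioi le_rfl) measurableSet_Ioi
          hint.integrableOn hint.integrableOn, Ioc_union_Ioi_eq_Ioi hX, ← integral_comp_abs]
        simp
    _ ≤ 2 * ((1 + X) ^ (-α) / (1 / 2 - α) + (1 + X) ^ (-α) / α) := by
        gcongr
        exacts [setIntegral_Ioc_kernelWeight_le hα hX, setIntegral_Ioi_kernelWeight_le hα0 hX]
    _ = (2 / (1 / 2 - α) + 2 / α) * (1 + X) ^ (-α) := by ring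

end kernelWeight

lemma le_mul_rpow_neg_of_rpow_mul_le {a b p T : ℝ} (hb : 0 < b) (h : b ^ p * a ≤ T) :
    a ≤ T * b ^ (-p) := by
  rw [Real.rpow_neg hb.le, ← div_eq_mul_inv, le_div_iff₀ (by positivity), mul_comm]
  exact h

/-- Let `0 < α < 1/2` and `m ≥ 0`.  There is a constant `M` (depending
only on `α`) such that for any measurable kernel `k` with
`|k(x,y)| ≤ m (1+|x|+|y|)^{-1/2}` and any continuous `τ` with `|τ|_{α+1/2}` finite
(bounded by `T`), the function `y ↦ k(x,y)τ(y)` is integrable for every `x`, and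
`|∫ k(x,y)τ(y)dy| ≤ M m T (1+|x|)^{-α}`. -/
theorem kernel_D_mapping_estimate (α : ℝ) (hα0 : 0 < α) (hα : α < 1 / 2) :
    ∃ M : ℝ, 0 < M ∧ ∀ m : ℝ, 0 ≤ m → ∀ k : ℝ → ℝ → ℂ,
      Measurable (Function.uncurry k) →
      (∀ x y : ℝ, ‖k x y‖ ≤ m * (1 + |x| + |y|) ^ (-(1 / 2) : ℝ)) →
      ∀ τ : ℝ → ℂ, Continuous τ → ∀ T : ℝ,
        (∀ y : ℝ, (1 + |y|) ^ (α + 1 / 2) * ‖τ y‖ ≤ T) →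
        ∀ x : ℝ, Integrable (fun y => k x y * τ y) ∧
          ‖∫ y : ℝ, k x y * τ y‖ ≤ M * m * T * (1 + |x|) ^ (-α) := by
  have hα' : 0 < 1 / 2 - α := by linarith
  refine ⟨2 / (1 / 2 - α) + 2 / α, by positivity, ?_⟩
  intro m hm k hk hkb τ hτ T hT x
  have hT0 : 0 ≤ T := (by positivity : 0 ≤ (1 + |0|) ^ (α + 1 / 2) * ‖τ 0‖).trans (hT 0)
  have hbound (y : ℝ) : ‖k x y * τ y‖ ≤ m * T * kernelWeight α |x| y := by
    rw [norm_mul, kernelWeight]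
    calc ‖k x y‖ * ‖τ y‖
        ≤ (m * (1 + |x| + |y|) ^ (-(1 / 2) : ℝ)) * (T * (1 + |y|) ^ (-(α + 1 / 2))) :=
          mul_le_mul (hkb x y) (le_mul_rpow_neg_of_rpow_mul_le (by positivity) (hT y))
            (norm_nonneg _) (by positivity)
      _ = _ := by ring
  have hmeas : AEStronglyMeasurable (fun y => k x y * τ y) :=
    ((hk.comp measurable_prodMk_left).mul hτ.measurable).aestronglyMeasurable
  have hdom := (integrable_kernelWeight hα0 (abs_nonneg x)).const_mul (m * T)
  refine ⟨hdom.mono' hmeas (ae_of_all _ hbound), ?_⟩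
  calc ‖∫ y, k x y * τ y‖
      ≤ ∫ y, m * T * kernelWeight α |x| y :=
        norm_integral_le_of_norm_le hdom (ae_of_all _ hbound)
    _ = m * T * ∫ y, kernelWeight α |x| y := integral_const_mul _ _
    _ ≤ m * T * ((2 / (1 / 2 - α) + 2 / α) * (1 + |x|) ^ (-α)) := by
        gcongr
        exact integral_kernelWeight_le hα0 hα (abs_nonneg x)
    _ = _ := by ring
end

section
/- Let 0 < α < 1/2 and d > 0. There is a constant M_α > 0 (depending only on α and d) with the following property. Let m > 0 and let k_D, k_C : ℝ × ℝ → ℂ be measurable kernels such that (i) |k_D(x,y)| ≤ m·(1+|x|+|y|)^{-1/2} for all x,y; (ii) |k_C(x,y)| ≤ m·(1+|x|+|y|)^{-3/2} whenever max(|x|,|y|) > d, and |k_C(x,y)| ≤ m·(1+|log|x−y||) whenever |x| ≤ d, |y| ≤ d, x ≠ y; (iii) for every τ ∈ C_{α+1/2}(ℝ) the function x ↦ ∫ k_D(x,y)τ(y)dy is continuous, and for every σ ∈ C_α(ℝ) the function x ↦ ∫ k_C(x,y)σ(y)dy is continuous. If M_α · m < 1, then for every g ∈ C_α(ℝ) and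 h ∈ C_{α+1/2}(ℝ) there exists a unique pair (σ, τ) ∈ C_α(ℝ) × C_{α+1/2}(ℝ) satisfying, for all x ∈ ℝ, σ(x) + ∫_{-∞}^{∞} k_D(x,y)τ(y)dy = g(x) and ∫_{-∞}^{∞} k_C(x,y)σ(y)dy + τ(x) = h(x). -/
/-!
Multiplying by the weights `(1 + |x|) ^ α` and `(1 + |x|) ^ (α + 1/2)` identifies `C_α(ℝ)`
and `C_{α+1/2}(ℝ)` with `ℝ →ᵇ ℂ` and turns the system into `p + L p = q` with
`L (u, v) = (A_D v, A_C u)`. Both operators have norm at most a constant times `m`. Off the box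
`[-d, d]²` this is the estimate
`∫ (1 + |x| + |y|) ^ (-s) * (1 + |y|) ^ (-γ) dy ≤ C * (1 + |x|) ^ (1 - s - γ)`
for `0 ≤ γ < 1 < s + γ`, obtained by splitting the integral at `|y| = |x|`; on the box the
logarithmic singularity is integrable. Once `‖L‖ < 1`, the Neumann series inverts `1 + L`.
-/

open MeasureTheory Set Real
open scoped BoundedContinuousFunction

lemma continuous_one_add_abs_rpow (β : ℝ) : Continuous fun x : ℝ => (1 + |x|) ^ β :=
  (by fun_prop : Continuous fun x : ℝ => 1 + |x|).rpow_const fun x => Or.inl (by positivity)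

lemma one_add_abs_rpow_mul_rpow_neg (β x : ℝ) : (1 + |x|) ^ β * (1 + |x|) ^ (-β) = 1 := by
  rw [← rpow_add (by positivity), add_neg_cancel, rpow_zero]

/-- `f ∈ C_β(ℝ)`. -/
def MemWeighted (β : ℝ) (f : ℝ → ℂ) : Prop :=
  Continuous f ∧ BddAbove (range fun x => (1 + |x|) ^ β * ‖f x‖)

open BoundedContinuousFunction

section Weighted

variable {β : ℝ}

noncomputable def MemWeighted.toBCF {f : ℝ → ℂ} (hf : MemWeighted β f) : ℝ →ᵇ ℂ :=
  ofNormedAddCommGroup (fun x => (1 + |x|) ^ β • f x)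
    ((continuous_one_add_abs_rpow β).smul hf.1) hf.2.choose fun x => by
      rw [norm_smul, norm_of_nonneg (by positivity)]
      exact hf.2.choose_spec ⟨x, rfl⟩

lemma MemWeighted.toBCF_apply {f : ℝ → ℂ} (hf : MemWeighted β f) (x : ℝ) :
    hf.toBCF x = (1 + |x|) ^ β • f x :=
  rfl

noncomputable def unweight (β : ℝ) (u : ℝ →ᵇ ℂ) (x : ℝ) : ℂ :=
  (1 + |x|) ^ (-β) • u x

lemma norm_unweight_le (u : ℝ →ᵇ ℂ) (x : ℝ) :
    ‖unweight β u x‖ ≤ ‖u‖ * (1 + |x|) ^ (-β) := by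
  rw [unweight, norm_smul, norm_of_nonneg (by positivity), mul_comm]
  exact mul_le_mul_of_nonneg_right (u.norm_coe_le_norm x) (by positivity)

lemma unweight_add (u v : ℝ →ᵇ ℂ) :
    unweight β (u + v) = unweight β u + unweight β v := by
  ext x
  exact smul_add _ (u x) (v x)

lemma unweight_smul (c : ℂ) (u : ℝ →ᵇ ℂ) : unweight β (c • u) = c • unweight β u := by
  ext x
  exact smul_comm _ c (u x)

lemma rpow_smul_unweight (u : ℝ →ᵇ ℂ) (x : ℝ) :
    (1 + |x|) ^ β • unweight β u x = u x := by
  rw [unweight, smul_smul, one_add_abs_rpow_mul_rpow_neg, one_smul]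

lemma memWeighted_unweight (u : ℝ →ᵇ ℂ) : MemWeighted β (unweight β u) := by
  refine ⟨(continuous_one_add_abs_rpow _).smul u.continuous, ‖u‖, ?_⟩
  rintro _ ⟨x, rfl⟩
  calc (1 + |x|) ^ β * ‖unweight β u x‖ ≤ (1 + |x|) ^ β * (‖u‖ * (1 + |x|) ^ (-β)) :=
        mul_le_mul_of_nonneg_left (norm_unweight_le u x) (by positivity)
    _ = ‖u‖ := by rw [mul_left_comm, one_add_abs_rpow_mul_rpow_neg, mul_one]

lemma unweight_toBCF {f : ℝ → ℂ} (hf : MemWeighted β f) : unweight β hf.toBCF = f := by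
  ext x
  rw [unweight, hf.toBCF_apply, smul_smul, mul_comm, one_add_abs_rpow_mul_rpow_neg, one_smul]

lemma add_rpow_smul_eq_rpow_smul_iff (u : ℝ →ᵇ ℂ) (x : ℝ) (z w : ℂ) :
    u x + (1 + |x|) ^ β • z = (1 + |x|) ^ β • w ↔ unweight β u x + z = w := by
  rw [← rpow_smul_unweight (β := β) u x, ← smul_add, smul_right_inj (by positivity)]

end Weighted

/-- A Schur-type bound: `f ↦ ∫ y, k x y * f y` maps `C_β(ℝ)` to `C_γ(ℝ)` with norm at most `C`. -/
def WeightedKernelBound (k : ℝ → ℝ → ℂ) (β γ C : ℝ) : Prop :=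
  ∀ x, AEStronglyMeasurable (k x) ∧ Integrable (fun y => ‖k x y‖ * (1 + |y|) ^ (-β)) ∧
    ∫ y, ‖k x y‖ * (1 + |y|) ^ (-β) ≤ C * (1 + |x|) ^ (-γ)

namespace WeightedKernelBound

variable {k : ℝ → ℝ → ℂ} {β γ C : ℝ}

lemma nonneg (hk : WeightedKernelBound k β γ C) : 0 ≤ C := by
  simpa using (integral_nonneg fun y => by positivity).trans (hk 0).2.2

lemma integrable_mul (hk : WeightedKernelBound k β γ C) {f : ℝ → ℂ} {N : ℝ}
    (hf : AEStronglyMeasurable f) (hfN : ∀ y, ‖f y‖ ≤ N * (1 + |y|) ^ (-β)) (x : ℝ) :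
    Integrable fun y => k x y * f y := by
  refine ((hk x).2.1.const_mul N).mono' ((hk x).1.mul hf) (ae_of_all _ fun y => ?_)
  rw [norm_mul, mul_left_comm]
  exact mul_le_mul_of_nonneg_left (hfN y) (norm_nonneg _)

lemma norm_integral_mul_le (hk : WeightedKernelBound k β γ C) {f : ℝ → ℂ} {N : ℝ}
    (hfN : ∀ y, ‖f y‖ ≤ N * (1 + |y|) ^ (-β)) (x : ℝ) :
    ‖∫ y, k x y * f y‖ ≤ C * N * (1 + |x|) ^ (-γ) := by
  have hN : 0 ≤ N := nonneg_of_mul_nonneg_left ((norm_nonneg _).trans (hfN 0)) (by positivity)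
  calc ‖∫ y, k x y * f y‖ ≤ ∫ y, N * (‖k x y‖ * (1 + |y|) ^ (-β)) := by
        refine norm_integral_le_of_norm_le ((hk x).2.1.const_mul N) (ae_of_all _ fun y => ?_)
        rw [norm_mul, mul_left_comm]
        exact mul_le_mul_of_nonneg_left (hfN y) (norm_nonneg _)
    _ ≤ N * (C * (1 + |x|) ^ (-γ)) := by
        rw [integral_const_mul]
        exact mul_le_mul_of_nonneg_left (hk x).2.2 hN
    _ = C * N * (1 + |x|) ^ (-γ) := by ring

lemma integrable_mul_unweight (hk : WeightedKernelBound k β γ C) (u : ℝ →ᵇ ℂ) (x : ℝ) :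
    Integrable fun y => k x y * unweight β u y :=
  hk.integrable_mul (memWeighted_unweight u).1.aestronglyMeasurable (norm_unweight_le u) x

lemma norm_rpow_smul_integral_le (hk : WeightedKernelBound k β γ C) (u : ℝ →ᵇ ℂ) (x : ℝ) :
    ‖(1 + |x|) ^ γ • ∫ y, k x y * unweight β u y‖ ≤ C * ‖u‖ := by
  rw [norm_smul, norm_of_nonneg (by positivity)]
  calc (1 + |x|) ^ γ * ‖∫ y, k x y * unweight β u y‖
      ≤ (1 + |x|) ^ γ * (C * ‖u‖ * (1 + |x|) ^ (-γ)) :=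
        mul_le_mul_of_nonneg_left (hk.norm_integral_mul_le (norm_unweight_le u) x) (by positivity)
    _ = C * ‖u‖ := by rw [mul_left_comm, one_add_abs_rpow_mul_rpow_neg, mul_one]

noncomputable def toCLM (hk : WeightedKernelBound k β γ C)
    (hc : ∀ f, MemWeighted β f → Continuous fun x => ∫ y, k x y * f y) :
    (ℝ →ᵇ ℂ) →L[ℂ] (ℝ →ᵇ ℂ) :=
  LinearMap.mkContinuous
    { toFun := fun u =>
        ofNormedAddCommGroup (fun x => (1 + |x|) ^ γ • ∫ y, k x y * unweight β u y)
          ((continuous_one_add_abs_rpow γ).smul (hc _ (memWeighted_unweight u))) (C * ‖u‖)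
          (hk.norm_rpow_smul_integral_le u)
      map_add' := fun u v => by
        ext x
        change (1 + |x|) ^ γ • ∫ y, k x y * unweight β (u + v) y =
          (1 + |x|) ^ γ • (∫ y, k x y * unweight β u y) +
            (1 + |x|) ^ γ • ∫ y, k x y * unweight β v y
        rw [← smul_add, ← integral_add (hk.integrable_mul_unweight u x)
          (hk.integrable_mul_unweight v x), unweight_add]
        simp only [Pi.add_apply, mul_add]
      map_smul' := fun c u => by
        ext x
        change (1 + |x|) ^ γ • ∫ y, k x y * unweight β (c • u) y =
          c • (1 + |x|) ^ γ • ∫ y, k x y * unweight β u y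
        rw [unweight_smul, smul_comm c]
        simp only [Pi.smul_apply, smul_eq_mul, mul_left_comm _ c, integral_const_mul] }
    C fun u => norm_ofNormedAddCommGroup_le _ (mul_nonneg hk.nonneg (norm_nonneg u))
      (hk.norm_rpow_smul_integral_le u)

lemma norm_toCLM_le (hk : WeightedKernelBound k β γ C)
    (hc : ∀ f, MemWeighted β f → Continuous fun x => ∫ y, k x y * f y) :
    ‖hk.toCLM hc‖ ≤ C :=
  LinearMap.mkContinuous_norm_le _ hk.nonneg _

end WeightedKernelBound

theorem ContinuousLinearMap.existsUnique_add_apply_eq {𝕜 E : Type*}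
    [NontriviallyNormedField 𝕜] [NormedAddCommGroup E] [NormedSpace 𝕜 E] [CompleteSpace E]
    (L : E →L[𝕜] E) (hL : ‖L‖ < 1) (q : E) : ∃! p, p + L p = q := by
  have hunit : IsUnit (1 + L) := by
    simpa using isUnit_one_sub_of_norm_lt_one (x := -L) (by rwa [norm_neg])
  simpa using (ContinuousLinearMap.isUnit_iff_bijective.mp hunit).existsUnique q

theorem existsUnique_weighted_system {k₁ k₂ : ℝ → ℝ → ℂ} {β γ C₁ C₂ : ℝ}
    (hk₁ : WeightedKernelBound k₁ γ β C₁) (hk₂ : WeightedKernelBound k₂ β γ C₂)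
    (hc₁ : ∀ f, MemWeighted γ f → Continuous fun x => ∫ y, k₁ x y * f y)
    (hc₂ : ∀ f, MemWeighted β f → Continuous fun x => ∫ y, k₂ x y * f y)
    (hC₁ : C₁ < 1) (hC₂ : C₂ < 1) {g h : ℝ → ℂ} (hg : MemWeighted β g)
    (hh : MemWeighted γ h) :
    ∃! p : (ℝ → ℂ) × (ℝ → ℂ), MemWeighted β p.1 ∧ MemWeighted γ p.2 ∧
      (∀ x, p.1 x + ∫ y, k₁ x y * p.2 y = g x) ∧
      (∀ x, (∫ y, k₂ x y * p.1 y) + p.2 x = h x) := by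
  set L := ((hk₁.toCLM hc₁).comp (ContinuousLinearMap.snd ℂ _ _)).prod
    ((hk₂.toCLM hc₂).comp (ContinuousLinearMap.fst ℂ _ _))
  have hL : ‖L‖ < 1 := by
    rw [ContinuousLinearMap.opNorm_prod, Prod.norm_def, max_lt_iff]
    constructor
    · exact ((ContinuousLinearMap.opNorm_comp_le _ _).trans (mul_le_of_le_one_right (norm_nonneg _)
        (ContinuousLinearMap.norm_snd_le ..))).trans_lt ((hk₁.norm_toCLM_le hc₁).trans_lt hC₁)
    · exact ((ContinuousLinearMap.opNorm_comp_le _ _).trans (mul_le_of_le_one_right (norm_nonneg _)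
        (ContinuousLinearMap.norm_fst_le ..))).trans_lt ((hk₂.norm_toCLM_le hc₂).trans_lt hC₂)
  have hsolves : ∀ u v, (u, v) + L (u, v) = (hg.toBCF, hh.toBCF) ↔
      (∀ x, unweight β u x + ∫ y, k₁ x y * unweight γ v y = g x) ∧
        (∀ x, (∫ y, k₂ x y * unweight β u y) + unweight γ v x = h x) := by
    intro u v
    simp only [L, Prod.ext_iff, BoundedContinuousFunction.ext_iff, ContinuousLinearMap.prod_apply,
      ContinuousLinearMap.comp_apply, ContinuousLinearMap.coe_fst', ContinuousLinearMap.coe_snd']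
    refine and_congr (forall_congr' fun x => ?_) (forall_congr' fun x => ?_)
    · exact add_rpow_smul_eq_rpow_smul_iff u x _ _
    · exact (add_rpow_smul_eq_rpow_smul_iff v x _ _).trans (by rw [add_comm])
  obtain ⟨⟨u, v⟩, huv, huniq⟩ := L.existsUnique_add_apply_eq hL (hg.toBCF, hh.toBCF)
  refine ⟨(unweight β u, unweight γ v),
    ⟨memWeighted_unweight u, memWeighted_unweight v, (hsolves u v).mp huv⟩, ?_⟩
  rintro ⟨f₁, f₂⟩ ⟨hf₁, hf₂, hsys⟩
  have hsys' := (hsolves hf₁.toBCF hf₂.toBCF).mpr (by rwa [unweight_toBCF, unweight_toBCF])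
  obtain ⟨rfl, rfl⟩ := Prod.ext_iff.mp (huniq _ hsys')
  rw [unweight_toBCF, unweight_toBCF]

lemma one_add_preimage_Ioi (c : ℝ) : (fun t : ℝ => 1 + t) ⁻¹' Ioi (1 + c) = Ioi c := by
  rw [preimage_const_add_Ioi, add_sub_cancel_left]

lemma integrableOn_Ioi_one_add_rpow {δ c : ℝ} (hδ : 0 < δ) (hc : -1 < c) :
    IntegrableOn (fun t : ℝ => (1 + t) ^ (-(1 + δ))) (Ioi c) := by
  rw [← one_add_preimage_Ioi c]
  exact ((measurePreserving_add_left volume 1).integrableOn_comp_preimage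
    (Homeomorph.addLeft 1).measurableEmbedding (f := fun u : ℝ => u ^ (-(1 + δ)))).mpr
    (integrableOn_Ioi_rpow_of_lt (by linarith) (by linarith))

lemma integral_Ioi_one_add_rpow {δ c : ℝ} (hδ : 0 < δ) (hc : -1 < c) :
    ∫ t in Ioi c, (1 + t) ^ (-(1 + δ)) = (1 + c) ^ (-δ) / δ := by
  rw [← one_add_preimage_Ioi c, (measurePreserving_add_left volume 1).setIntegral_preimage_emb
      (Homeomorph.addLeft 1).measurableEmbedding (fun u : ℝ => u ^ (-(1 + δ))),
    integral_Ioi_rpow_of_lt (by linarith) (by linarith), show -(1 + δ) + 1 = -δ by ring, neg_div,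
    div_neg, neg_neg]

lemma integral_Ioc_zero_rpow {γ R : ℝ} (hγ : γ < 1) (hR : 0 ≤ R) :
    ∫ t in Ioc 0 R, t ^ (-γ) = R ^ (1 - γ) / (1 - γ) := by
  rw [← intervalIntegral.integral_of_le hR, integral_rpow (Or.inl (by linarith)),
    show -γ + 1 = 1 - γ by ring, zero_rpow (by linarith), sub_zero]

section DecayIntegral

variable {s γ δ R : ℝ}

lemma rpow_mul_rpow_le_one_add_rpow (hs : 0 ≤ s) (hsγ : s + γ = 1 + δ) (hR : 0 ≤ R) {t : ℝ}
    (ht : 0 ≤ t) : (1 + R + t) ^ (-s) * (1 + t) ^ (-γ) ≤ (1 + t) ^ (-(1 + δ)) := by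
  calc (1 + R + t) ^ (-s) * (1 + t) ^ (-γ) ≤ (1 + t) ^ (-s) * (1 + t) ^ (-γ) :=
        mul_le_mul_of_nonneg_right
          (rpow_le_rpow_of_nonpos (by positivity) (by linarith) (by linarith)) (by positivity)
    _ = (1 + t) ^ (-(1 + δ)) := by
        rw [← rpow_add (by positivity), ← hsγ, neg_add]

lemma integrableOn_Ioi_rpow_mul_rpow (hγ : γ < 1) (hδ : 0 < δ) (hsγ : s + γ = 1 + δ)
    (hR : 0 ≤ R) : IntegrableOn (fun t => (1 + R + t) ^ (-s) * (1 + t) ^ (-γ)) (Ioi 0) := by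
  refine (integrableOn_Ioi_one_add_rpow hδ (by norm_num : (-1 : ℝ) < 0)).mono'
    (by fun_prop) (ae_restrict_of_forall_mem measurableSet_Ioi fun t (ht : 0 < t) => ?_)
  rw [norm_of_nonneg (by positivity)]
  exact rpow_mul_rpow_le_one_add_rpow (by linarith) hsγ hR ht.le

lemma integral_Ioc_rpow_mul_rpow_le (hγ0 : 0 ≤ γ) (hγ1 : γ < 1) (hδ : 0 < δ)
    (hsγ : s + γ = 1 + δ) (hR : 0 ≤ R) :
    ∫ t in Ioc 0 R, (1 + R + t) ^ (-s) * (1 + t) ^ (-γ) ≤ (1 + R) ^ (-δ) / (1 - γ) := by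
  have hint : IntegrableOn (fun t : ℝ => t ^ (-γ)) (Ioc 0 R) :=
    (intervalIntegrable_iff_integrableOn_Ioc_of_le hR).mp
      (intervalIntegral.intervalIntegrable_rpow' (by linarith))
  have hγ : 0 < 1 - γ := by linarith
  calc ∫ t in Ioc 0 R, (1 + R + t) ^ (-s) * (1 + t) ^ (-γ)
      ≤ ∫ t in Ioc 0 R, (1 + R) ^ (-s) * t ^ (-γ) := by
        refine setIntegral_mono_on ((integrableOn_Ioi_rpow_mul_rpow hγ1 hδ hsγ hR).mono_set
          Ioc_subset_Ioi_self) (hint.const_mul _) measurableSet_Ioc fun t ⟨ht, _⟩ => ?_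
        exact mul_le_mul (rpow_le_rpow_of_nonpos (by positivity) (by linarith) (by linarith))
          (rpow_le_rpow_of_nonpos ht (by linarith) (by linarith)) (by positivity) (by positivity)
    _ = (1 + R) ^ (-s) * (R ^ (1 - γ) / (1 - γ)) := by
        rw [integral_const_mul, integral_Ioc_zero_rpow hγ1 hR]
    _ ≤ (1 + R) ^ (-s) * ((1 + R) ^ (1 - γ) / (1 - γ)) := by
        gcongr
        linarith
    _ = (1 + R) ^ (-δ) / (1 - γ) := by
        rw [mul_div_assoc', ← rpow_add (by positivity)]
        congr 2
        linarith

lemma integral_Ioi_rpow_mul_rpow_le (hγ : γ < 1) (hδ : 0 < δ) (hsγ : s + γ = 1 + δ)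
    (hR : 0 ≤ R) :
    ∫ t in Ioi R, (1 + R + t) ^ (-s) * (1 + t) ^ (-γ) ≤ (1 + R) ^ (-δ) / δ := by
  rw [← integral_Ioi_one_add_rpow hδ (by linarith : -1 < R)]
  exact setIntegral_mono_on ((integrableOn_Ioi_rpow_mul_rpow hγ hδ hsγ hR).mono_set
      (Ioi_subset_Ioi hR)) (integrableOn_Ioi_one_add_rpow hδ (by linarith)) measurableSet_Ioi
    fun t ht => rpow_mul_rpow_le_one_add_rpow (by linarith) hsγ hR (hR.trans (le_of_lt ht))

lemma integral_Ioi_zero_rpow_mul_rpow_le (hγ0 : 0 ≤ γ) (hγ1 : γ < 1) (hδ : 0 < δ)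
    (hsγ : s + γ = 1 + δ) (hR : 0 ≤ R) :
    ∫ t in Ioi 0, (1 + R + t) ^ (-s) * (1 + t) ^ (-γ) ≤
      (1 / (1 - γ) + 1 / δ) * (1 + R) ^ (-δ) := by
  have hG := integrableOn_Ioi_rpow_mul_rpow hγ1 hδ hsγ hR
  rw [← Ioc_union_Ioi_eq_Ioi hR, setIntegral_union Ioc_disjoint_Ioi_same measurableSet_Ioi
    (hG.mono_set Ioc_subset_Ioi_self) (hG.mono_set (Ioi_subset_Ioi hR))]
  calc _ ≤ (1 + R) ^ (-δ) / (1 - γ) + (1 + R) ^ (-δ) / δ :=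
        add_le_add (integral_Ioc_rpow_mul_rpow_le hγ0 hγ1 hδ hsγ hR)
          (integral_Ioi_rpow_mul_rpow_le hγ1 hδ hsγ hR)
    _ = (1 / (1 - γ) + 1 / δ) * (1 + R) ^ (-δ) := by ring

lemma integrable_rpow_mul_rpow (hs : 0 ≤ s) (hsγ : s + γ = 1 + δ) (hδ : 0 < δ) (x : ℝ) :
    Integrable fun y : ℝ => (1 + |x| + |y|) ^ (-s) * (1 + |y|) ^ (-γ) := by
  refine (integrable_one_add_norm (E := ℝ) (μ := volume) (r := 1 + δ) (by simp; linarith)).mono'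
    (by fun_prop) (ae_of_all _ fun y => ?_)
  rw [norm_of_nonneg (by positivity), norm_eq_abs]
  exact rpow_mul_rpow_le_one_add_rpow hs hsγ (abs_nonneg x) (abs_nonneg y)

lemma integral_rpow_mul_rpow_le (hγ0 : 0 ≤ γ) (hγ1 : γ < 1) (hδ : 0 < δ)
    (hsγ : s + γ = 1 + δ) (x : ℝ) :
    ∫ y, (1 + |x| + |y|) ^ (-s) * (1 + |y|) ^ (-γ) ≤
      (2 / (1 - γ) + 2 / δ) * (1 + |x|) ^ (-δ) := by
  rw [integral_comp_abs (f := fun t => (1 + |x| + t) ^ (-s) * (1 + t) ^ (-γ))]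
  calc _ ≤ 2 * ((1 / (1 - γ) + 1 / δ) * (1 + |x|) ^ (-δ)) :=
        mul_le_mul_of_nonneg_left
          (integral_Ioi_zero_rpow_mul_rpow_le hγ0 hγ1 hδ hsγ (abs_nonneg x))
          zero_le_two
    _ = _ := by ring

end DecayIntegral

noncomputable def truncatedLog (d : ℝ) : ℝ → ℝ :=
  (Icc (-(2 * d)) (2 * d)).indicator fun u => 1 + |log (|u|)|

lemma truncatedLog_nonneg (d u : ℝ) : 0 ≤ truncatedLog d u :=
  indicator_nonneg (fun _ _ => by positivity) u

lemma integrable_truncatedLog (d : ℝ) : Integrable (truncatedLog d) := by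
  refine IntegrableOn.integrable_indicator ?_ measurableSet_Icc
  have hlog : IntervalIntegrable (fun u => 1 + |log (|u|)|) volume (-(2 * d)) (2 * d) := by
    simp_rw [log_abs]
    exact intervalIntegrable_const.add intervalIntegral.intervalIntegrable_log'.norm
  exact ((intervalIntegrable_iff' (by finiteness)).mp hlog).mono_set Icc_subset_uIcc

section KernelBounds

variable {k : ℝ → ℝ → ℂ} {s γ δ m : ℝ}

lemma weightedKernelBound_of_ae_le {β C : ℝ} (hk : Measurable (Function.uncurry k))
    (hmaj : ∀ x, ∃ g : ℝ → ℝ, Integrable g ∧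
      (∀ᵐ y, ‖k x y‖ * (1 + |y|) ^ (-β) ≤ g y) ∧ ∫ y, g y ≤ C * (1 + |x|) ^ (-γ)) :
    WeightedKernelBound k β γ C := by
  intro x
  obtain ⟨g, hg, hkg, hgC⟩ := hmaj x
  have hkx : AEStronglyMeasurable (k x) := hk.of_uncurry_left.aestronglyMeasurable
  have hnorm : ∀ᵐ y, ‖‖k x y‖ * (1 + |y|) ^ (-β)‖ ≤ g y :=
    hkg.mono fun y hy => by rwa [norm_of_nonneg (by positivity)]
  exact ⟨hkx, hg.mono' (hkx.norm.mul (continuous_one_add_abs_rpow _).aestronglyMeasurable) hnorm,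
    (le_abs_self _).trans ((norm_integral_le_of_norm_le hg hnorm).trans hgC)⟩

lemma norm_mul_rpow_le_of_norm_le {x y : ℝ} (hxy : ‖k x y‖ ≤ m * (1 + |x| + |y|) ^ (-s)) :
    ‖k x y‖ * (1 + |y|) ^ (-γ) ≤ m * ((1 + |x| + |y|) ^ (-s) * (1 + |y|) ^ (-γ)) := by
  rw [← mul_assoc]
  exact mul_le_mul_of_nonneg_right hxy (by positivity)

lemma weightedKernelBound_of_norm_le_rpow (hγ0 : 0 ≤ γ) (hγ1 : γ < 1) (hδ : 0 < δ)
    (hsγ : s + γ = 1 + δ) (hm : 0 ≤ m) (hk : Measurable (Function.uncurry k))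
    (hbound : ∀ x y, ‖k x y‖ ≤ m * (1 + |x| + |y|) ^ (-s)) :
    WeightedKernelBound k γ δ (m * (2 / (1 - γ) + 2 / δ)) := by
  refine weightedKernelBound_of_ae_le hk fun x =>
    ⟨fun y => m * ((1 + |x| + |y|) ^ (-s) * (1 + |y|) ^ (-γ)),
      (integrable_rpow_mul_rpow (by linarith) hsγ hδ x).const_mul m,
      ae_of_all _ fun y => norm_mul_rpow_le_of_norm_le (hbound x y), ?_⟩
  rw [integral_const_mul, mul_assoc]
  exact mul_le_mul_of_nonneg_left (integral_rpow_mul_rpow_le hγ0 hγ1 hδ hsγ x) hm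

variable {d : ℝ}
  (hfar : ∀ x y, d < max |x| |y| → ‖k x y‖ ≤ m * (1 + |x| + |y|) ^ (-s))
  (hnear : ∀ x y, |x| ≤ d → |y| ≤ d → x ≠ y →
    ‖k x y‖ ≤ m * (1 + |log (|x - y|)|))
include hfar hnear

lemma norm_mul_rpow_le_of_log (hγ0 : 0 ≤ γ) (hm : 0 ≤ m) {x y : ℝ} (hx : |x| ≤ d)
    (hyx : y ≠ x) : ‖k x y‖ * (1 + |y|) ^ (-γ) ≤
      m * ((1 + |x| + |y|) ^ (-s) * (1 + |y|) ^ (-γ) + truncatedLog d (x - y)) := by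
  by_cases hy : |y| ≤ d
  · have hxy : x - y ∈ Icc (-(2 * d)) (2 * d) := by
      constructor <;> linarith [abs_le.mp hx, abs_le.mp hy]
    calc ‖k x y‖ * (1 + |y|) ^ (-γ) ≤ ‖k x y‖ :=
          mul_le_of_le_one_right (norm_nonneg _)
            (rpow_le_one_of_one_le_of_nonpos (by linarith [abs_nonneg y]) (by linarith))
      _ ≤ m * truncatedLog d (x - y) := by
          rw [truncatedLog, indicator_of_mem hxy]
          exact hnear x y hx hy hyx.symm
      _ ≤ _ := mul_le_mul_of_nonneg_left (le_add_of_nonneg_left (by positivity)) hm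
  · calc _ ≤ m * ((1 + |x| + |y|) ^ (-s) * (1 + |y|) ^ (-γ)) :=
          norm_mul_rpow_le_of_norm_le (hfar x y (lt_max_of_lt_right (not_le.mp hy)))
      _ ≤ _ := mul_le_mul_of_nonneg_left (le_add_of_nonneg_right (truncatedLog_nonneg _ _)) hm

lemma weightedKernelBound_of_log (hγ0 : 0 ≤ γ) (hγ1 : γ < 1) (hδ : 0 < δ)
    (hsγ : s + γ = 1 + δ) (hm : 0 ≤ m) (hd : 0 ≤ d) (hk : Measurable (Function.uncurry k)) :
    WeightedKernelBound k γ δ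
      (m * (2 / (1 - γ) + 2 / δ + (1 + d) ^ δ * ∫ u, truncatedLog d u)) := by
  have hdecay := integrable_rpow_mul_rpow (by linarith) hsγ hδ
  have hlog : 0 ≤ ∫ u, truncatedLog d u := integral_nonneg (truncatedLog_nonneg d)
  refine weightedKernelBound_of_ae_le hk fun x => ?_
  by_cases hx : |x| ≤ d
  · have hae : ∀ᵐ y, y ≠ x := compl_mem_ae_iff.mpr (measure_singleton x)
    refine ⟨fun y => m * ((1 + |x| + |y|) ^ (-s) * (1 + |y|) ^ (-γ) + truncatedLog d (x - y)),
      ((hdecay x).add ((integrable_truncatedLog d).comp_sub_left x)).const_mul m,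
      hae.mono fun y hyx => norm_mul_rpow_le_of_log hfar hnear hγ0 hm hx hyx, ?_⟩
    have hone : 1 ≤ (1 + d) ^ δ * (1 + |x|) ^ (-δ) :=
      calc 1 = (1 + |x|) ^ δ * (1 + |x|) ^ (-δ) := (one_add_abs_rpow_mul_rpow_neg δ x).symm
        _ ≤ (1 + d) ^ δ * (1 + |x|) ^ (-δ) := mul_le_mul_of_nonneg_right
          (rpow_le_rpow (by positivity) (by linarith) hδ.le) (by positivity)
    rw [integral_const_mul, integral_add (hdecay x) ((integrable_truncatedLog d).comp_sub_left x),
      integral_sub_left_eq_self, mul_assoc]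
    refine mul_le_mul_of_nonneg_left ?_ hm
    calc _ ≤ (2 / (1 - γ) + 2 / δ) * (1 + |x|) ^ (-δ) +
          (∫ u, truncatedLog d u) * ((1 + d) ^ δ * (1 + |x|) ^ (-δ)) :=
          add_le_add (integral_rpow_mul_rpow_le hγ0 hγ1 hδ hsγ x) (le_mul_of_one_le_right hlog hone)
      _ = _ := by ring
  · refine ⟨fun y => m * ((1 + |x| + |y|) ^ (-s) * (1 + |y|) ^ (-γ)), (hdecay x).const_mul m,
      ae_of_all _ fun y =>
        norm_mul_rpow_le_of_norm_le (hfar x y (lt_max_of_lt_left (not_le.mp hx))), ?_⟩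
    rw [integral_const_mul, mul_assoc]
    refine mul_le_mul_of_nonneg_left ?_ hm
    refine (integral_rpow_mul_rpow_le hγ0 hγ1 hδ hsγ x).trans
      (mul_le_mul_of_nonneg_right (le_add_of_nonneg_right ?_) (by positivity))
    exact mul_nonneg (by positivity) hlog

end KernelBounds

/-- For `0 < α < 1/2` and `d > 0` there is a constant `M_α > 0` so that
for any `m > 0` and any measurable kernels `k_D, k_C` satisfying the decay estimates
(i)–(ii) and the continuity property (iii), if `M_α · m < 1`, then for all
`g ∈ C_α(ℝ)`, `h ∈ C_{α+1/2}(ℝ)` there is a unique pair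
`(σ, τ) ∈ C_α(ℝ) × C_{α+1/2}(ℝ)` solving the 2×2 system of boundary integral
equations `σ + k_D τ = g`, `k_C σ + τ = h`. -/
theorem small_contrast_solvability (α d : ℝ) (hα0 : 0 < α) (hα : α < 1 / 2) (hd : 0 < d) :
    ∃ M : ℝ, 0 < M ∧ ∀ m : ℝ, 0 < m →
      ∀ kD kC : ℝ → ℝ → ℂ,
        Measurable (Function.uncurry kD) → Measurable (Function.uncurry kC) →
        (∀ x y : ℝ, ‖kD x y‖ ≤ m * (1 + |x| + |y|) ^ (-(1 / 2) : ℝ)) →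
        (∀ x y : ℝ, d < max (|x|) (|y|) →
          ‖kC x y‖ ≤ m * (1 + |x| + |y|) ^ (-(3 / 2) : ℝ)) →
        (∀ x y : ℝ, |x| ≤ d → |y| ≤ d → x ≠ y →
          ‖kC x y‖ ≤ m * (1 + |Real.log (|x - y|)|)) →
        (∀ τ : ℝ → ℂ, Continuous τ →
          BddAbove (Set.range fun y => (1 + |y|) ^ (α + 1 / 2) * ‖τ y‖) →
          Continuous fun x => ∫ y : ℝ, kD x y * τ y) →
        (∀ σ : ℝ → ℂ, Continuous σ →
          BddAbove (Set.range fun y => (1 + |y|) ^ α * ‖σ y‖) →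
          Continuous fun x => ∫ y : ℝ, kC x y * σ y) →
        M * m < 1 →
        ∀ g h : ℝ → ℂ,
          Continuous g → BddAbove (Set.range fun x => (1 + |x|) ^ α * ‖g x‖) →
          Continuous h → BddAbove (Set.range fun x => (1 + |x|) ^ (α + 1 / 2) * ‖h x‖) →
          ∃! p : (ℝ → ℂ) × (ℝ → ℂ),
            (Continuous p.1 ∧ BddAbove (Set.range fun x => (1 + |x|) ^ α * ‖p.1 x‖)) ∧
            (Continuous p.2 ∧
              BddAbove (Set.range fun x => (1 + |x|) ^ (α + 1 / 2) * ‖p.2 x‖)) ∧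
            (∀ x : ℝ, p.1 x + ∫ y : ℝ, kD x y * p.2 y = g x) ∧
            (∀ x : ℝ, (∫ y : ℝ, kC x y * p.1 y) + p.2 x = h x) := by
  set CD := 2 / (1 - (α + 1 / 2)) + 2 / α
  set CC := 2 / (1 - α) + 2 / (α + 1 / 2) + (1 + d) ^ (α + 1 / 2) * ∫ u, truncatedLog d u
  have hCD : 0 < CD := add_pos (div_pos two_pos (by linarith)) (div_pos two_pos hα0)
  have hCC : 0 ≤ CC :=
    add_nonneg (add_nonneg (div_nonneg zero_le_two (by linarith)) (by positivity))
      (mul_nonneg (by positivity) (integral_nonneg (truncatedLog_nonneg d)))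
  refine ⟨CD + CC, by linarith,
    fun m hm kD kC hkD hkC hD hC₁ hC₂ hcD hcC hM g h hg hgb hh hhb => ?_⟩
  refine existsUnique_weighted_system
    (weightedKernelBound_of_norm_le_rpow (by linarith) (by linarith) hα0 (by ring) hm.le hkD hD)
    (weightedKernelBound_of_log hC₁ hC₂ hα0.le (by linarith) (by linarith) (by ring) hm.le
      hd.le hkC)
    (fun f hf => hcD f hf.1 hf.2) (fun f hf => hcC f hf.1 hf.2) ?_ ?_ ⟨hg, hgb⟩ ⟨hh, hhb⟩
  all_goals nlinarith
end

section
/- Let k > 0 and d > 0, and let ψ : ℝ → ℝ be a smooth function with 0 ≤ ψ ≤ 1, ψ(z) = 0 for z ≤ d, and ψ(z) = 1 for z ≥ d + 1. Then there exist positive constants m and M such that for all X ≥ 0 and Y ≥ 0, | ∫_d^∞ ψ(z) e^{ikz} (X + z)^{-1/2} (Y + z)^{-3/2} dz | ≤ M · (X + m)^{-1/2} (Y + m)^{-3/2}. (The integral is absolutely convergent; the content of the estimate is the extra decay in X, which is not available without the oscillatory factor e^{ikz}.) -/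
open MeasureTheory Set Filter Topology

lemma hasDerivAt_shift_rpow (b p : ℝ) {z : ℝ} (hz : 0 < b + z) :
    HasDerivAt (fun z => (b + z) ^ p) (p * (b + z) ^ (p - 1)) z := by
  have h := (Real.hasDerivAt_rpow_const (x := b + z) (p := p) (Or.inl hz.ne')).comp z
    ((hasDerivAt_id z).const_add b)
  simpa [Function.comp_def] using h

lemma integral_shift_rpow (b d p : ℝ) (hd : 0 < d) (hb : 0 ≤ b) (hp : p < -1) :
    IntegrableOn (fun z => (b + z) ^ p) (Set.Ioi d) ∧
      ∫ z in Set.Ioi d, (b + z) ^ p = (b + d) ^ (p + 1) / (-(p + 1)) := by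
  have hp1 : p + 1 < 0 := by linarith
  have hp1' : p + 1 ≠ 0 := by linarith
  have hpos : ∀ z ∈ Set.Ici d, 0 < b + z := fun z hz => by
    have : d ≤ z := hz; linarith
  have hderiv : ∀ z ∈ Set.Ici d,
      HasDerivAt (fun z => (b + z) ^ (p + 1) / (p + 1)) ((b + z) ^ p) z := by
    intro z hz
    have h := (hasDerivAt_shift_rpow b (p + 1) (hpos z hz)).div_const (p + 1)
    simpa [add_sub_cancel_right, mul_div_assoc, mul_div_cancel_left₀ _ hp1'] using h
  have htend : Tendsto (fun z => (b + z) ^ (p + 1) / (p + 1)) atTop (𝓝 0) := by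
    have t1 : Tendsto (fun z : ℝ => b + z) atTop atTop :=
      tendsto_atTop_add_const_left _ b tendsto_id
    have t2 := (tendsto_rpow_neg_atTop (show 0 < -(p + 1) by linarith)).comp t1
    have t3 : Tendsto (fun z : ℝ => (b + z) ^ (p + 1)) atTop (𝓝 0) := by
      simpa [Function.comp_def] using t2
    simpa using t3.div_const (p + 1)
  have hcont : ContinuousWithinAt (fun z => (b + z) ^ (p + 1) / (p + 1)) (Set.Ici d) d :=
    (hderiv d Set.self_mem_Ici).continuousAt.continuousWithinAt
  have hnn : ∀ z ∈ Set.Ioi d, 0 ≤ (b + z) ^ p := fun z hz =>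
    Real.rpow_nonneg (hpos z (Set.mem_Ici.2 (le_of_lt (Set.mem_Ioi.1 hz)))).le p
  refine ⟨integrableOn_Ioi_deriv_of_nonneg hcont (fun z hz => hderiv z (Set.mem_Ici.2 (le_of_lt (Set.mem_Ioi.1 hz)))) hnn htend,
    ?_⟩
  have := integral_Ioi_of_hasDerivAt_of_nonneg hcont (fun z hz => hderiv z (Set.mem_Ici.2 (le_of_lt (Set.mem_Ioi.1 hz)))) hnn htend
  rw [this, zero_sub, div_neg]

/-- Let `k > 0`, `d > 0` and let `ψ` be a smooth cutoff with
`0 ≤ ψ ≤ 1`, `ψ = 0` on `(-∞, d]` and `ψ = 1` on `[d+1, ∞)`.  Then there are positive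
constants `m, M` such that for all `X, Y ≥ 0`,
`|∫_d^∞ ψ(z) e^{ikz} (X+z)^{-1/2} (Y+z)^{-3/2} dz| ≤ M (X+m)^{-1/2} (Y+m)^{-3/2}`. -/
theorem oscillatory_composition_estimate (k d : ℝ) (hk : 0 < k) (hd : 0 < d)
    (ψ : ℝ → ℝ) (hψ : ContDiff ℝ (⊤ : ℕ∞) ψ) (hψ0 : ∀ z, 0 ≤ ψ z) (hψ1 : ∀ z, ψ z ≤ 1)
    (hz0 : ∀ z : ℝ, z ≤ d → ψ z = 0) (hz1 : ∀ z : ℝ, d + 1 ≤ z → ψ z = 1) :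
    ∃ m : ℝ, 0 < m ∧ ∃ M : ℝ, 0 < M ∧ ∀ X : ℝ, 0 ≤ X → ∀ Y : ℝ, 0 ≤ Y →
      ‖∫ z in Set.Ioi d, (ψ z : ℂ) * Complex.exp (Complex.I * k * z) *
          (((X + z) ^ (-(1 / 2) : ℝ) : ℝ) : ℂ) * (((Y + z) ^ (-(3 / 2) : ℝ) : ℝ) : ℂ)‖ ≤
        M * (X + m) ^ (-(1 / 2) : ℝ) * (Y + m) ^ (-(3 / 2) : ℝ) := by
  obtain ⟨C, hC⟩ := (isCompact_Icc (a := d) (b := d + 1)).exists_bound_of_continuousOn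
    (hψ.continuous_deriv (by simp)).continuousOn
  set C0 : ℝ := max C 0 with hC0def
  have hC0 : 0 ≤ C0 := le_max_right _ _
  have hCb : ∀ z ∈ Set.Icc d (d + 1), |deriv ψ z| ≤ C0 := fun z hz =>
    (hC z hz).trans (le_max_left _ _)
  have hderiv0 : ∀ z : ℝ, d + 1 < z → deriv ψ z = 0 := by
    intro z hz
    have h : ψ =ᶠ[𝓝 z] fun _ => (1 : ℝ) :=
      Filter.eventuallyEq_of_mem (Ioi_mem_nhds hz) (fun y hy => hz1 y (le_of_lt hy))
    rw [h.deriv_eq]; exact deriv_const z 1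
  refine ⟨d, hd, (C0 + 2) / k, by positivity, ?_⟩
  intro X hX Y hY
  have hXp : ∀ z ∈ Set.Ici d, 0 < X + z := fun z hz => by
    have : d ≤ z := hz; linarith
  have hYp : ∀ z ∈ Set.Ici d, 0 < Y + z := fun z hz => by
    have : d ≤ z := hz; linarith
  have hXd : 0 < X + d := hXp d Set.self_mem_Ici
  have hYd : 0 < Y + d := hYp d Set.self_mem_Ici
  -- norm of the oscillatory factor
  have hE1 : ∀ z : ℝ, ‖Complex.exp (Complex.I * (k : ℂ) * (z : ℂ))‖ = 1 := by
    intro z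
    rw [show Complex.I * (k : ℂ) * (z : ℂ) = ((k * z : ℝ) : ℂ) * Complex.I by
      push_cast; ring]
    exact Complex.norm_exp_ofReal_mul_I _
  -- integrability of shifted powers
  obtain ⟨iX, eX⟩ := integral_shift_rpow X d (-(3 / 2)) hd hX (by norm_num)
  obtain ⟨iY5, eY5⟩ := integral_shift_rpow Y d (-(5 / 2)) hd hY (by norm_num)
  obtain ⟨iY3, eY3⟩ := integral_shift_rpow Y d (-(3 / 2)) hd hY (by norm_num)
  have eX' : ∫ z in Set.Ioi d, (X + z) ^ (-(3 / 2) : ℝ) = 2 * (X + d) ^ (-(1 / 2) : ℝ) := by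
    rw [eX, show (-(3 / 2) + 1 : ℝ) = -(1 / 2) by norm_num]; ring
  have eY5' : ∫ z in Set.Ioi d, (Y + z) ^ (-(5 / 2) : ℝ)
      = (2 / 3) * (Y + d) ^ (-(3 / 2) : ℝ) := by
    rw [eY5, show (-(5 / 2) + 1 : ℝ) = -(3 / 2) by norm_num]; ring
  -- monotonicity of shifted powers
  have hmonoX : ∀ z, d ≤ z → ∀ p : ℝ, p ≤ 0 → (X + z) ^ p ≤ (X + d) ^ p := fun z hz p hp =>
    Real.rpow_le_rpow_of_nonpos hXd (by linarith) hp
  have hmonoY : ∀ z, d ≤ z → ∀ p : ℝ, p ≤ 0 → (Y + z) ^ p ≤ (Y + d) ^ p := fun z hz p hp =>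
    Real.rpow_le_rpow_of_nonpos hYd (by linarith) hp
  -- the integrand
  set f : ℝ → ℂ := fun z => (ψ z : ℂ) * Complex.exp (Complex.I * k * z) *
      (((X + z) ^ (-(1 / 2) : ℝ) : ℝ) : ℂ) * (((Y + z) ^ (-(3 / 2) : ℝ) : ℝ) : ℂ) with hfdef
  -- continuity of pieces
  have hψcont : Continuous ψ := hψ.continuous
  have hcX : ∀ p : ℝ, ContinuousOn (fun z : ℝ => (X + z) ^ p) (Set.Ici d) := fun p =>
    ContinuousOn.rpow_const (continuous_const.add continuous_id).continuousOn
      (fun z hz => Or.inl (hXp z hz).ne')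
  have hcY : ∀ p : ℝ, ContinuousOn (fun z : ℝ => (Y + z) ^ p) (Set.Ici d) := fun p =>
    ContinuousOn.rpow_const (continuous_const.add continuous_id).continuousOn
      (fun z hz => Or.inl (hYp z hz).ne')
  have hcE : Continuous fun z : ℝ => Complex.exp (Complex.I * k * z) :=
    Complex.continuous_exp.comp (continuous_const.mul Complex.continuous_ofReal)
  have hfc : ContinuousOn f (Set.Ici d) := by
    rw [hfdef]
    exact (((Complex.continuous_ofReal.comp hψcont).continuousOn.mul hcE.continuousOn).mul
      (Complex.continuous_ofReal.comp_continuousOn (hcX _))).mul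
      (Complex.continuous_ofReal.comp_continuousOn (hcY _))
  -- pointwise bound for the integrand
  have hfnorm : ∀ z ∈ Set.Ioi d,
      ‖f z‖ ≤ (X + d) ^ (-(1 / 2) : ℝ) * (Y + z) ^ (-(3 / 2) : ℝ) := by
    intro z hz
    have hz' : d ≤ z := le_of_lt hz
    have hXz := hXp z hz'
    have hYz := hYp z hz'
    have h1 : |ψ z| ≤ 1 := by rw [abs_of_nonneg (hψ0 z)]; exact hψ1 z
    have h2 : (X + z) ^ (-(1 / 2) : ℝ) ≤ (X + d) ^ (-(1 / 2) : ℝ) :=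
      hmonoX z hz' _ (by norm_num)
    rw [hfdef]
    simp only [norm_mul, hE1 z, mul_one, Complex.norm_real, Real.norm_eq_abs,
      abs_of_nonneg (Real.rpow_nonneg hXz.le _), abs_of_nonneg (Real.rpow_nonneg hYz.le _)]
    have hv : 0 ≤ (Y + z) ^ (-(3 / 2) : ℝ) := Real.rpow_nonneg hYz.le _
    have hu : 0 ≤ (X + z) ^ (-(1 / 2) : ℝ) := Real.rpow_nonneg hXz.le _
    calc |ψ z| * (X + z) ^ (-(1 / 2) : ℝ) * (Y + z) ^ (-(3 / 2) : ℝ)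
        ≤ 1 * (X + d) ^ (-(1 / 2) : ℝ) * (Y + z) ^ (-(3 / 2) : ℝ) := by
          apply mul_le_mul_of_nonneg_right _ hv
          exact mul_le_mul h1 h2 hu (by norm_num)
      _ = (X + d) ^ (-(1 / 2) : ℝ) * (Y + z) ^ (-(3 / 2) : ℝ) := by ring
  have hfint : IntegrableOn f (Set.Ioi d) := by
    apply Integrable.mono' (iY3.const_mul ((X + d) ^ (-(1 / 2) : ℝ)))
    · exact (hfc.mono (Set.Ioi_subset_Ici le_rfl)).aestronglyMeasurable measurableSet_Ioi
    · exact Filter.eventually_of_mem (self_mem_ae_restrict measurableSet_Ioi) hfnorm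
  -- the derivative correction term
  set G : ℝ → ℂ := fun z => Complex.exp (Complex.I * k * z) *
      (((deriv ψ z : ℝ) : ℂ) * (((X + z) ^ (-(1 / 2) : ℝ) : ℝ) : ℂ) * (((Y + z) ^ (-(3 / 2) : ℝ) : ℝ) : ℂ)
        + (ψ z : ℂ) * (((-(1 / 2) * (X + z) ^ (-(3 / 2) : ℝ) : ℝ) : ℂ)
              * (((Y + z) ^ (-(3 / 2) : ℝ) : ℝ) : ℂ)
            + (((X + z) ^ (-(1 / 2) : ℝ) : ℝ) : ℂ)
              * ((-(3 / 2) * (Y + z) ^ (-(5 / 2) : ℝ) : ℝ) : ℂ))) with hGdef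
  -- f is differentiable with derivative I k f + G
  have hfderiv : ∀ z ∈ Set.Ioi d, HasDerivAt f (Complex.I * k * f z + G z) z := by
    intro z hz
    have hz' : d ≤ z := le_of_lt hz
    have hXz := hXp z hz'
    have hYz := hYp z hz'
    have h1 : HasDerivAt (fun z : ℝ => ((ψ z : ℝ) : ℂ)) (((deriv ψ z : ℝ) : ℂ)) z :=
      ((hψ.differentiable (by simp) z).hasDerivAt).ofReal_comp
    have h2 : HasDerivAt (fun z : ℝ => Complex.exp (Complex.I * k * z))
        (Complex.I * k * Complex.exp (Complex.I * k * z)) z := by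
      have h := (((hasDerivAt_id (z : ℂ)).const_mul (Complex.I * k)).cexp).comp_ofReal
      simpa [mul_comm] using h
    have h3r : HasDerivAt (fun z : ℝ => (X + z) ^ (-(1 / 2) : ℝ))
        (-(1 / 2) * (X + z) ^ (-(3 / 2) : ℝ)) z := by
      have h := hasDerivAt_shift_rpow X (-(1 / 2)) hXz
      rw [show (-(1 / 2) : ℝ) - 1 = -(3 / 2) by norm_num] at h
      exact h
    have h4r : HasDerivAt (fun z : ℝ => (Y + z) ^ (-(3 / 2) : ℝ))
        (-(3 / 2) * (Y + z) ^ (-(5 / 2) : ℝ)) z := by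
      have h := hasDerivAt_shift_rpow Y (-(3 / 2)) hYz
      rw [show (-(3 / 2) : ℝ) - 1 = -(5 / 2) by norm_num] at h
      exact h
    have h3 : HasDerivAt (fun z : ℝ => (((X + z) ^ (-(1 / 2) : ℝ) : ℝ) : ℂ))
        ((-(1 / 2) * (X + z) ^ (-(3 / 2) : ℝ) : ℝ) : ℂ) z := h3r.ofReal_comp
    have h4 : HasDerivAt (fun z : ℝ => (((Y + z) ^ (-(3 / 2) : ℝ) : ℝ) : ℂ))
        ((-(3 / 2) * (Y + z) ^ (-(5 / 2) : ℝ) : ℝ) : ℂ) z := h4r.ofReal_comp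
    have h := ((h1.mul h2).mul h3).mul h4
    refine h.congr_deriv ?_
    rw [hfdef, hGdef]
    simp only [Pi.mul_apply]
    push_cast
    ring
  -- boundary behaviour
  have hFd : f d = 0 := by rw [hfdef]; simp [hz0 d le_rfl]
  have hftend : Tendsto f atTop (𝓝 (0 : ℂ)) := by
    have hb : ∀ᶠ z : ℝ in atTop, ‖f z‖ ≤ (X + d) ^ (-(1 / 2) : ℝ) * z ^ (-(3 / 2) : ℝ) := by
      filter_upwards [eventually_gt_atTop d] with z hz
      refine (hfnorm z hz).trans ?_
      have hz0' : 0 < z := lt_trans hd hz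
      have : (Y + z) ^ (-(3 / 2) : ℝ) ≤ z ^ (-(3 / 2) : ℝ) :=
        Real.rpow_le_rpow_of_nonpos hz0' (by linarith) (by norm_num)
      exact mul_le_mul_of_nonneg_left this (Real.rpow_nonneg hXd.le _)
    have htg : Tendsto (fun z : ℝ => (X + d) ^ (-(1 / 2) : ℝ) * z ^ (-(3 / 2) : ℝ))
        atTop (𝓝 0) := by
      have := (tendsto_rpow_neg_atTop (show (0 : ℝ) < 3 / 2 by norm_num)).const_mul
        ((X + d) ^ (-(1 / 2) : ℝ))
      simpa using this
    exact squeeze_zero_norm' hb htg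
  have hfcontd : ContinuousWithinAt f (Set.Ici d) d := hfc d Set.self_mem_Ici
  -- the majorant for G
  set c1 : ℝ := C0 * ((X + d) ^ (-(1 / 2) : ℝ) * (Y + d) ^ (-(3 / 2) : ℝ)) with hc1
  set c2 : ℝ := (1 / 2) * (Y + d) ^ (-(3 / 2) : ℝ) with hc2
  set c3 : ℝ := (3 / 2) * (X + d) ^ (-(1 / 2) : ℝ) with hc3
  have hc1nn : 0 ≤ c1 := by
    rw [hc1]; positivity
  set Φ : ℝ → ℝ := fun z => Set.indicator (Set.Ioc d (d + 1)) (fun _ => c1) z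
      + c2 * (X + z) ^ (-(3 / 2) : ℝ) + c3 * (Y + z) ^ (-(5 / 2) : ℝ) with hPhi
  have hind : Integrable (Set.indicator (Set.Ioc d (d + 1)) fun _ => c1) := by
    rw [integrable_indicator_iff measurableSet_Ioc]
    exact integrableOn_const measure_Ioc_lt_top.ne
  have hPhiInt : IntegrableOn Φ (Set.Ioi d) :=
    ((hind.integrableOn.add (iX.const_mul c2)).add (iY5.const_mul c3))
  have hindval : ∫ z in Set.Ioi d, Set.indicator (Set.Ioc d (d + 1)) (fun _ => c1) z = c1 := by
    rw [setIntegral_indicator measurableSet_Ioc,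
      Set.inter_eq_self_of_subset_right Set.Ioc_subset_Ioi_self, setIntegral_const]
    simp [Real.volume_Ioc]
  have hPhiVal : ∫ z in Set.Ioi d, Φ z
      = (C0 + 2) * ((X + d) ^ (-(1 / 2) : ℝ) * (Y + d) ^ (-(3 / 2) : ℝ)) := by
    have i1 : IntegrableOn (fun z => Set.indicator (Set.Ioc d (d + 1)) (fun _ => c1) z
        + c2 * (X + z) ^ (-(3 / 2) : ℝ)) (Set.Ioi d) := hind.integrableOn.add (iX.const_mul c2)
    have i0 : IntegrableOn (fun z => Set.indicator (Set.Ioc d (d + 1)) (fun _ => c1) z)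
        (Set.Ioi d) := hind.integrableOn
    rw [hPhi, integral_add i1 (iY5.const_mul c3),
      integral_add i0 (iX.const_mul c2), integral_const_mul, integral_const_mul,
      hindval, eX', eY5', hc1, hc2, hc3]
    ring
  -- pointwise bound for G
  have hGnorm : ∀ z ∈ Set.Ioi d, ‖G z‖ ≤ Φ z := by
    intro z hz
    have hz' : d ≤ z := le_of_lt hz
    have hXz := hXp z hz'
    have hYz := hYp z hz'
    have hu : 0 ≤ (X + z) ^ (-(1 / 2) : ℝ) := Real.rpow_nonneg hXz.le _
    have hv : 0 ≤ (Y + z) ^ (-(3 / 2) : ℝ) := Real.rpow_nonneg hYz.le _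
    have hu3 : 0 ≤ (X + z) ^ (-(3 / 2) : ℝ) := Real.rpow_nonneg hXz.le _
    have hv5 : 0 ≤ (Y + z) ^ (-(5 / 2) : ℝ) := Real.rpow_nonneg hYz.le _
    have huD : (X + z) ^ (-(1 / 2) : ℝ) ≤ (X + d) ^ (-(1 / 2) : ℝ) :=
      hmonoX z hz' _ (by norm_num)
    have hvD : (Y + z) ^ (-(3 / 2) : ℝ) ≤ (Y + d) ^ (-(3 / 2) : ℝ) :=
      hmonoY z hz' _ (by norm_num)
    have hψz1 : |ψ z| ≤ 1 := by rw [abs_of_nonneg (hψ0 z)]; exact hψ1 z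
    -- bound for the ψ' term
    have hterm1 : |deriv ψ z| * (X + z) ^ (-(1 / 2) : ℝ) * (Y + z) ^ (-(3 / 2) : ℝ)
        ≤ Set.indicator (Set.Ioc d (d + 1)) (fun _ => c1) z := by
      by_cases hzle : z ≤ d + 1
      · have hmem : z ∈ Set.Ioc d (d + 1) := ⟨hz, hzle⟩
        rw [Set.indicator_of_mem hmem, hc1]
        have hb := hCb z ⟨hz', hzle⟩
        calc |deriv ψ z| * (X + z) ^ (-(1 / 2) : ℝ) * (Y + z) ^ (-(3 / 2) : ℝ)
            ≤ C0 * (X + d) ^ (-(1 / 2) : ℝ) * (Y + d) ^ (-(3 / 2) : ℝ) := by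
              apply mul_le_mul (mul_le_mul hb huD hu (abs_nonneg _ |>.trans hb)) hvD hv
              positivity
          _ = C0 * ((X + d) ^ (-(1 / 2) : ℝ) * (Y + d) ^ (-(3 / 2) : ℝ)) := by ring
      · rw [hderiv0 z (lt_of_not_ge hzle)]
        simp only [abs_zero, zero_mul]
        exact Set.indicator_nonneg (fun _ _ => hc1nn) z
    -- bound for the ψ terms
    have hterm2 : |ψ z| * ((1 / 2) * (X + z) ^ (-(3 / 2) : ℝ) * (Y + z) ^ (-(3 / 2) : ℝ)
          + (X + z) ^ (-(1 / 2) : ℝ) * ((3 / 2) * (Y + z) ^ (-(5 / 2) : ℝ)))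
        ≤ c2 * (X + z) ^ (-(3 / 2) : ℝ) + c3 * (Y + z) ^ (-(5 / 2) : ℝ) := by
      rw [hc2, hc3]
      have hsum_nn : 0 ≤ (1 / 2) * (X + z) ^ (-(3 / 2) : ℝ) * (Y + z) ^ (-(3 / 2) : ℝ)
          + (X + z) ^ (-(1 / 2) : ℝ) * ((3 / 2) * (Y + z) ^ (-(5 / 2) : ℝ)) := by positivity
      calc |ψ z| * ((1 / 2) * (X + z) ^ (-(3 / 2) : ℝ) * (Y + z) ^ (-(3 / 2) : ℝ)
              + (X + z) ^ (-(1 / 2) : ℝ) * ((3 / 2) * (Y + z) ^ (-(5 / 2) : ℝ)))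
          ≤ 1 * ((1 / 2) * (X + z) ^ (-(3 / 2) : ℝ) * (Y + z) ^ (-(3 / 2) : ℝ)
              + (X + z) ^ (-(1 / 2) : ℝ) * ((3 / 2) * (Y + z) ^ (-(5 / 2) : ℝ))) :=
            mul_le_mul_of_nonneg_right hψz1 hsum_nn
        _ ≤ (1 / 2) * (Y + d) ^ (-(3 / 2) : ℝ) * (X + z) ^ (-(3 / 2) : ℝ)
              + (3 / 2) * (X + d) ^ (-(1 / 2) : ℝ) * (Y + z) ^ (-(5 / 2) : ℝ) := by
            rw [one_mul]
            apply add_le_add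
            · calc (1 / 2) * (X + z) ^ (-(3 / 2) : ℝ) * (Y + z) ^ (-(3 / 2) : ℝ)
                  ≤ (1 / 2) * (X + z) ^ (-(3 / 2) : ℝ) * (Y + d) ^ (-(3 / 2) : ℝ) := by
                    apply mul_le_mul_of_nonneg_left hvD (by positivity)
                _ = (1 / 2) * (Y + d) ^ (-(3 / 2) : ℝ) * (X + z) ^ (-(3 / 2) : ℝ) := by ring
            · calc (X + z) ^ (-(1 / 2) : ℝ) * ((3 / 2) * (Y + z) ^ (-(5 / 2) : ℝ))
                  ≤ (X + d) ^ (-(1 / 2) : ℝ) * ((3 / 2) * (Y + z) ^ (-(5 / 2) : ℝ)) := by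
                    apply mul_le_mul_of_nonneg_right huD (by positivity)
                _ = (3 / 2) * (X + d) ^ (-(1 / 2) : ℝ) * (Y + z) ^ (-(5 / 2) : ℝ) := by ring
    -- assemble
    rw [hGdef, hPhi]
    simp only [norm_mul, hE1 z, one_mul]
    calc ‖((deriv ψ z : ℝ) : ℂ) * (((X + z) ^ (-(1 / 2) : ℝ) : ℝ) : ℂ)
            * (((Y + z) ^ (-(3 / 2) : ℝ) : ℝ) : ℂ)
          + (ψ z : ℂ) * (((-(1 / 2) * (X + z) ^ (-(3 / 2) : ℝ) : ℝ) : ℂ)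
              * (((Y + z) ^ (-(3 / 2) : ℝ) : ℝ) : ℂ)
            + (((X + z) ^ (-(1 / 2) : ℝ) : ℝ) : ℂ)
              * ((-(3 / 2) * (Y + z) ^ (-(5 / 2) : ℝ) : ℝ) : ℂ))‖
        ≤ ‖((deriv ψ z : ℝ) : ℂ) * (((X + z) ^ (-(1 / 2) : ℝ) : ℝ) : ℂ)
            * (((Y + z) ^ (-(3 / 2) : ℝ) : ℝ) : ℂ)‖
          + ‖(ψ z : ℂ)‖ * (‖((-(1 / 2) * (X + z) ^ (-(3 / 2) : ℝ) : ℝ) : ℂ)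
              * (((Y + z) ^ (-(3 / 2) : ℝ) : ℝ) : ℂ)‖
            + ‖(((X + z) ^ (-(1 / 2) : ℝ) : ℝ) : ℂ)
              * ((-(3 / 2) * (Y + z) ^ (-(5 / 2) : ℝ) : ℝ) : ℂ)‖) := by
          refine (norm_add_le _ _).trans (add_le_add le_rfl ?_)
          rw [norm_mul]
          exact mul_le_mul_of_nonneg_left (norm_add_le _ _) (norm_nonneg _)
      _ ≤ Set.indicator (Set.Ioc d (d + 1)) (fun _ => c1) z
            + (c2 * (X + z) ^ (-(3 / 2) : ℝ) + c3 * (Y + z) ^ (-(5 / 2) : ℝ)) := by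
          apply add_le_add
          · simp only [norm_mul, Complex.norm_real, Real.norm_eq_abs,
              abs_of_nonneg hu, abs_of_nonneg hv]
            exact hterm1
          · simp only [norm_mul, Complex.norm_real, Real.norm_eq_abs,
              abs_of_nonneg hu, abs_of_nonneg hv, abs_of_nonneg hu3, abs_of_nonneg hv5,
              show |(-(1 / 2) : ℝ)| = 1 / 2 by norm_num,
              show |(-(3 / 2) : ℝ)| = 3 / 2 by norm_num]
            exact hterm2
      _ = Set.indicator (Set.Ioc d (d + 1)) (fun _ => c1) z
            + c2 * (X + z) ^ (-(3 / 2) : ℝ) + c3 * (Y + z) ^ (-(5 / 2) : ℝ) := by ring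
  -- continuity / integrability of G
  have hGc : ContinuousOn G (Set.Ici d) := by
    rw [hGdef]
    have hdc : Continuous (deriv ψ) := hψ.continuous_deriv (by simp)
    apply ContinuousOn.mul hcE.continuousOn
    apply ContinuousOn.add
    · exact ((Complex.continuous_ofReal.comp hdc).continuousOn.mul
        (Complex.continuous_ofReal.comp_continuousOn (hcX _))).mul
        (Complex.continuous_ofReal.comp_continuousOn (hcY _))
    · apply ContinuousOn.mul (Complex.continuous_ofReal.comp hψcont).continuousOn
      apply ContinuousOn.add
      · exact (Complex.continuous_ofReal.comp_continuousOn
          ((hcX _).const_smul (-(1 / 2) : ℝ))).mul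
          (Complex.continuous_ofReal.comp_continuousOn (hcY _))
      · exact (Complex.continuous_ofReal.comp_continuousOn (hcX _)).mul
          (Complex.continuous_ofReal.comp_continuousOn ((hcY _).const_smul (-(3 / 2) : ℝ)))
  have hGint : IntegrableOn G (Set.Ioi d) := by
    apply Integrable.mono' hPhiInt
    · exact (hGc.mono (Set.Ioi_subset_Ici le_rfl)).aestronglyMeasurable measurableSet_Ioi
    · exact Filter.eventually_of_mem (self_mem_ae_restrict measurableSet_Ioi) hGnorm
  -- fundamental theorem of calculus
  have hsumInt : IntegrableOn (fun z => Complex.I * k * f z + G z) (Set.Ioi d) :=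
    (hfint.const_mul (Complex.I * k)).add hGint
  have hFTC := integral_Ioi_of_hasDerivAt_of_tendsto hfcontd hfderiv hsumInt hftend
  rw [hFd, sub_zero] at hFTC
  have hsplit : (∫ z in Set.Ioi d, (Complex.I * k * f z + G z))
      = Complex.I * k * (∫ z in Set.Ioi d, f z) + ∫ z in Set.Ioi d, G z := by
    rw [integral_add (hfint.const_mul _) hGint, integral_const_mul]
  rw [hsplit] at hFTC
  have heq : Complex.I * k * (∫ z in Set.Ioi d, f z) = - ∫ z in Set.Ioi d, G z := by
    linear_combination hFTC
  have hnormIk : ‖Complex.I * (k : ℂ)‖ = k := by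
    simp [abs_of_pos hk]
  have h1 : k * ‖∫ z in Set.Ioi d, f z‖ = ‖∫ z in Set.Ioi d, G z‖ := by
    rw [← hnormIk, ← norm_mul, heq, norm_neg]
  have h2 : ‖∫ z in Set.Ioi d, G z‖ ≤ ∫ z in Set.Ioi d, Φ z :=
    norm_integral_le_of_norm_le hPhiInt
      (Filter.eventually_of_mem (self_mem_ae_restrict measurableSet_Ioi) hGnorm)
  rw [hPhiVal] at h2
  have h3 : k * ‖∫ z in Set.Ioi d, f z‖
      ≤ (C0 + 2) * ((X + d) ^ (-(1 / 2) : ℝ) * (Y + d) ^ (-(3 / 2) : ℝ)) := h1.le.trans h2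
  rw [show (C0 + 2) / k * (X + d) ^ (-(1 / 2) : ℝ) * (Y + d) ^ (-(3 / 2) : ℝ)
      = ((C0 + 2) * ((X + d) ^ (-(1 / 2) : ℝ) * (Y + d) ^ (-(3 / 2) : ℝ))) / k by
    field_simp]
  rw [le_div_iff₀ hk]
  linarith [h3]
end

section
/- Let 0 < k₁ < k₂ and d > 0. Then there exists ξ with k₁ < ξ < k₂ such that (2ξ² − k₁² − k₂²) · sin(2d√(k₂² − ξ²)) / √(k₂² − ξ²) + 2√(ξ² − k₁²) · cos(2d√(k₂² − ξ²)) = 0. Equivalently, the equation tan(2d√(k₂² − ξ²)) = 2√((k₂² − ξ²)(ξ² − k₁²)) / (k₁² + k₂² − 2ξ²) has a solution in (k₁, k₂). -/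
open Real Set
set_option maxHeartbeats 1000000 in


noncomputable def Wfun (k₁ k₂ d ξ : ℝ) : ℝ :=
  (2 * ξ ^ 2 - k₁ ^ 2 - k₂ ^ 2) * Real.sin (2 * d * Real.sqrt (k₂ ^ 2 - ξ ^ 2)) /
      Real.sqrt (k₂ ^ 2 - ξ ^ 2) +
    2 * Real.sqrt (ξ ^ 2 - k₁ ^ 2) * Real.cos (2 * d * Real.sqrt (k₂ ^ 2 - ξ ^ 2))

set_option maxHeartbeats 1000000 in
lemma wkey (k₁ k₂ d : ℝ) (h1 : 0 < k₁) (h2 : k₁ < k₂) (hd : 0 < d)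
    (a : ℝ) (ha1 : k₁ < a) (ha2 : a < k₂) (hfa : Wfun k₁ k₂ d a < 0) :
    ∃ ξ : ℝ, k₁ < ξ ∧ ξ < k₂ ∧ Wfun k₁ k₂ d ξ = 0 := by
  have hπ := Real.pi_pos
  set ε : ℝ := min (min ((k₂^2 - k₁^2)/2) ((π/(4*d))^2)) (k₂^2 - a^2) / 2 with hεdef
  have hεpos : 0 < ε := by
    have h3 : 0 < (π/(4*d))^2 := by positivity
    have : 0 < k₂^2 - a^2 := by nlinarith
    have : 0 < (k₂^2 - k₁^2)/2 := by nlinarith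
    simp only [hεdef]
    positivity
  have hε1 : ε < (k₂^2 - k₁^2)/2 := by
    have := min_le_left (min ((k₂^2 - k₁^2)/2) ((π/(4*d))^2)) (k₂^2 - a^2)
    have := min_le_left ((k₂^2 - k₁^2)/2) ((π/(4*d))^2)
    simp only [hεdef]; nlinarith
  have hε2 : ε < (π/(4*d))^2 := by
    have := min_le_left (min ((k₂^2 - k₁^2)/2) ((π/(4*d))^2)) (k₂^2 - a^2)
    have := min_le_right ((k₂^2 - k₁^2)/2) ((π/(4*d))^2)
    simp only [hεdef]; nlinarith
  have hε3 : ε < k₂^2 - a^2 := by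
    have := min_le_right (min ((k₂^2 - k₁^2)/2) ((π/(4*d))^2)) (k₂^2 - a^2)
    simp only [hεdef]; nlinarith
  set b : ℝ := Real.sqrt (k₂^2 - ε) with hbdef
  have hb2 : b^2 = k₂^2 - ε := Real.sq_sqrt (by nlinarith)
  have hbpos : 0 < b := Real.sqrt_pos.mpr (by nlinarith)
  have hab : a < b := by nlinarith [sq_nonneg (a - b), sq_nonneg a, ha1, h1]
  have hbk2 : b < k₂ := by nlinarith
  -- value at b is positive
  have hAb : Real.sqrt (k₂^2 - b^2) = Real.sqrt ε := by rw [hb2]; ring_nf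
  clear hεdef hbdef
  clear_value ε b
  have hsε : Real.sqrt ε < π/(4*d) := by
    have h4d : 0 < π/(4*d) := by positivity
    nlinarith [Real.sq_sqrt hεpos.le, Real.sqrt_nonneg ε]
  have hsεpos : 0 < Real.sqrt ε := Real.sqrt_pos.mpr hεpos
  have hfb : 0 < Wfun k₁ k₂ d b := by
    unfold Wfun
    rw [hAb]
    have harg1 : 0 < 2 * d * Real.sqrt ε := by positivity
    have hlt : 2 * d * Real.sqrt ε < 2 * d * (π/(4*d)) :=
      mul_lt_mul_of_pos_left hsε (by positivity)
    have heq : 2 * d * (π/(4*d)) = π/2 := by field_simp; ring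
    have harg2' : 2 * d * Real.sqrt ε < π/2 := heq ▸ hlt
    have harg2 : 2 * d * Real.sqrt ε < π := by linarith
    have hsin : 0 < Real.sin (2 * d * Real.sqrt ε) :=
      Real.sin_pos_of_pos_of_lt_pi harg1 harg2
    have hcos : 0 < Real.cos (2 * d * Real.sqrt ε) :=
      Real.cos_pos_of_mem_Ioo ⟨by linarith, harg2'⟩
    have hcoef : 0 < 2 * b^2 - k₁^2 - k₂^2 := by nlinarith
    have hB : 0 < Real.sqrt (b^2 - k₁^2) := Real.sqrt_pos.mpr (by nlinarith)
    have t1 : 0 < (2 * b ^ 2 - k₁ ^ 2 - k₂ ^ 2) * Real.sin (2 * d * Real.sqrt ε) /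
        Real.sqrt ε := by positivity
    have t2 : 0 < 2 * Real.sqrt (b ^ 2 - k₁ ^ 2) * Real.cos (2 * d * Real.sqrt ε) := by
      positivity
    linarith
  -- continuity
  have hcont : ContinuousOn (Wfun k₁ k₂ d) (Set.Icc a b) := by
    apply ContinuousOn.add
    · apply ContinuousOn.div
      · fun_prop
      · fun_prop
      · intro x hx
        have : x ≤ b := hx.2
        have hxa : a ≤ x := hx.1
        have : 0 < k₂^2 - x^2 := by nlinarith
        exact (Real.sqrt_pos.mpr this).ne'
    · fun_prop
  have h0 : (0:ℝ) ∈ Set.Ioo (Wfun k₁ k₂ d a) (Wfun k₁ k₂ d b) := ⟨hfa, hfb⟩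
  obtain ⟨ξ, hξ, hξ0⟩ := intermediate_value_Ioo hab.le hcont h0
  exact ⟨ξ, lt_trans ha1 hξ.1, lt_trans hξ.2 hbk2, hξ0⟩


set_option maxHeartbeats 1000000 in
/-- Negative value at `a = √(k₂² - (θ/2d)²)` for suitable `θ ∈ (0, c)` with `cos θ < 0`. -/
lemma wneg (k₁ k₂ d θ : ℝ) (h1 : 0 < k₁) (h2 : k₁ < k₂) (hd : 0 < d)
    (hθ0 : 0 < θ) (hθc : θ < 2 * d * Real.sqrt (k₂ ^ 2 - k₁ ^ 2))
    (hsign : Real.sin θ * (2 * (k₂ ^ 2 - (θ / (2 * d)) ^ 2) - k₁ ^ 2 - k₂ ^ 2) ≤ 0)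
    (hcos : Real.cos θ < 0) :
    ∃ a : ℝ, k₁ < a ∧ a < k₂ ∧ Wfun k₁ k₂ d a < 0 := by
  have hA0 : (Real.sqrt (k₂ ^ 2 - k₁ ^ 2)) ^ 2 = k₂ ^ 2 - k₁ ^ 2 :=
    Real.sq_sqrt (by nlinarith)
  have hA0nn : 0 ≤ Real.sqrt (k₂ ^ 2 - k₁ ^ 2) := Real.sqrt_nonneg _
  set A₀ := Real.sqrt (k₂ ^ 2 - k₁ ^ 2) with hA0def
  clear hA0def
  have hθA : θ / (2 * d) < A₀ := by
    rw [div_lt_iff₀ (by positivity)]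
    linarith [hθc]
  have hθdpos : 0 < θ / (2 * d) := by positivity
  have hsq : (θ / (2 * d)) ^ 2 < A₀ ^ 2 := by nlinarith
  set a := Real.sqrt (k₂ ^ 2 - (θ / (2 * d)) ^ 2) with hadef
  have ha2 : a ^ 2 = k₂ ^ 2 - (θ / (2 * d)) ^ 2 := Real.sq_sqrt (by nlinarith)
  have hann : 0 ≤ a := Real.sqrt_nonneg _
  clear hadef
  clear_value a A₀
  have hak1 : k₁ < a := by nlinarith
  have hak2 : a < k₂ := by nlinarith
  refine ⟨a, hak1, hak2, ?_⟩
  have hAa : Real.sqrt (k₂ ^ 2 - a ^ 2) = θ / (2 * d) := by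
    rw [ha2]
    have : k₂ ^ 2 - (k₂ ^ 2 - (θ / (2 * d)) ^ 2) = (θ / (2 * d)) ^ 2 := by ring
    rw [this, Real.sqrt_sq hθdpos.le]
  have harg : 2 * d * (θ / (2 * d)) = θ := by field_simp
  unfold Wfun
  rw [hAa, harg]
  have hB : 0 < Real.sqrt (a ^ 2 - k₁ ^ 2) := Real.sqrt_pos.mpr (by nlinarith)
  have hterm2 : 2 * Real.sqrt (a ^ 2 - k₁ ^ 2) * Real.cos θ < 0 := by
    have := mul_pos (mul_pos two_pos hB) (neg_pos.mpr hcos)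
    nlinarith
  have hterm1 : (2 * a ^ 2 - k₁ ^ 2 - k₂ ^ 2) * Real.sin θ / (θ / (2 * d)) ≤ 0 := by
    apply div_nonpos_of_nonpos_of_nonneg _ hθdpos.le
    have : Real.sin θ * (2 * a ^ 2 - k₁ ^ 2 - k₂ ^ 2) ≤ 0 := by rw [ha2]; exact hsign
    nlinarith [this]
  linarith

set_option maxHeartbeats 1000000 in
/-- Negative value near `k₁` in the shallow case `c ≤ π/2`. -/
lemma wneg_small (k₁ k₂ d : ℝ) (h1 : 0 < k₁) (h2 : k₁ < k₂) (hd : 0 < d)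
    (hc : 2 * d * Real.sqrt (k₂ ^ 2 - k₁ ^ 2) ≤ π / 2) :
    ∃ a : ℝ, k₁ < a ∧ a < k₂ ∧ Wfun k₁ k₂ d a < 0 := by
  have hπ := Real.pi_pos
  obtain ⟨A₀, hA0def⟩ : ∃ x : ℝ, x = Real.sqrt (k₂ ^ 2 - k₁ ^ 2) := ⟨_, rfl⟩
  have hA0 : A₀ ^ 2 = k₂ ^ 2 - k₁ ^ 2 := by rw [hA0def]; exact Real.sq_sqrt (by nlinarith)
  have hA0pos : 0 < A₀ := by rw [hA0def]; exact Real.sqrt_pos.mpr (by nlinarith)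
  rw [← hA0def] at hc
  obtain ⟨c, hcdef⟩ : ∃ x : ℝ, x = 2 * d * A₀ := ⟨_, rfl⟩
  rw [← hcdef] at hc
  have hcpos : 0 < c := by rw [hcdef]; positivity
  have h3 : (Real.sqrt 3) ^ 2 = 3 := Real.sq_sqrt (by norm_num)
  have h3nn : 0 ≤ Real.sqrt 3 := Real.sqrt_nonneg 3
  have h3le : Real.sqrt 3 ≤ 2 := by
    have h4 : Real.sqrt 3 ≤ Real.sqrt 4 := Real.sqrt_le_sqrt (by norm_num)
    have : Real.sqrt 4 = 2 := by
      rw [show (4:ℝ) = 2 ^ 2 by norm_num, Real.sqrt_sq (by norm_num : (0:ℝ) ≤ 2)]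
    linarith
  have h3pos : 0 < Real.sqrt 3 := Real.sqrt_pos.mpr (by norm_num)
  have hscarg0 : 0 < Real.sqrt 3 / 2 * c := by positivity
  have hscargle : Real.sqrt 3 / 2 * c ≤ π / 2 := by
    have := mul_le_mul_of_nonneg_right (show Real.sqrt 3 / 2 ≤ 1 by linarith) hcpos.le
    linarith
  obtain ⟨s, hsdef⟩ : ∃ x : ℝ, x = Real.sin (Real.sqrt 3 / 2 * c) := ⟨_, rfl⟩
  have hspos : 0 < s := by
    rw [hsdef]; exact Real.sin_pos_of_pos_of_lt_pi hscarg0 (by linarith)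
  have hsle : s ≤ 1 := by rw [hsdef]; exact Real.sin_le_one _
  obtain ⟨t, htdef⟩ : ∃ x : ℝ, x = min (A₀ ^ 2 / 4) ((A₀ * s / 4) ^ 2) / 2 := ⟨_, rfl⟩
  have htpos : 0 < t := by
    have h1' : 0 < A₀ ^ 2 / 4 := by positivity
    have h2' : 0 < (A₀ * s / 4) ^ 2 := by positivity
    rw [htdef]; positivity
  have ht1 : t ≤ A₀ ^ 2 / 8 := by
    have := min_le_left (A₀ ^ 2 / 4) ((A₀ * s / 4) ^ 2)
    rw [htdef]; linarith
  have ht2 : 2 * t ≤ (A₀ * s / 4) ^ 2 := by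
    have := min_le_right (A₀ ^ 2 / 4) ((A₀ * s / 4) ^ 2)
    rw [htdef]; linarith
  obtain ⟨a, hadef⟩ : ∃ x : ℝ, x = Real.sqrt (k₁ ^ 2 + t) := ⟨_, rfl⟩
  have ha2 : a ^ 2 = k₁ ^ 2 + t := by rw [hadef]; exact Real.sq_sqrt (by positivity)
  have hann : 0 ≤ a := by rw [hadef]; exact Real.sqrt_nonneg _
  obtain ⟨A, hAdef⟩ : ∃ x : ℝ, x = Real.sqrt (k₂ ^ 2 - a ^ 2) := ⟨_, rfl⟩
  have hA2 : A ^ 2 = k₂ ^ 2 - a ^ 2 := by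
    rw [hAdef]; exact Real.sq_sqrt (by linarith [ha2, ht1, hA0, sq_nonneg A₀])
  have hAnn : 0 ≤ A := by rw [hAdef]; exact Real.sqrt_nonneg _
  have hA0sqpos : 0 < A₀ ^ 2 := by positivity
  have hak1 : k₁ < a :=
    lt_of_pow_lt_pow_left₀ 2 hann (by rw [ha2]; linarith)
  have hak2 : a < k₂ :=
    lt_of_pow_lt_pow_left₀ 2 (by linarith : (0:ℝ) ≤ k₂) (by rw [ha2]; linarith)
  have hApos : 0 < A := by
    rw [hAdef]
    exact Real.sqrt_pos.mpr (by rw [ha2]; linarith)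
  have hAleA0 : A ≤ A₀ := by
    rw [hAdef, hA0def]
    exact Real.sqrt_le_sqrt (by rw [ha2]; linarith)
  have hAge : Real.sqrt 3 / 2 * A₀ ≤ A := by
    have hid : (Real.sqrt 3 / 2 * A₀) ^ 2 = (Real.sqrt 3) ^ 2 / 4 * A₀ ^ 2 := by ring
    rw [h3] at hid
    refine le_of_pow_le_pow_left₀ two_ne_zero hAnn ?_
    rw [hid, hA2, ha2]
    linarith
  have hargge : Real.sqrt 3 / 2 * c ≤ 2 * d * A := by
    rw [hcdef]
    have := mul_le_mul_of_nonneg_left hAge (by positivity : (0:ℝ) ≤ 2 * d)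
    linarith
  have hargle : 2 * d * A ≤ c := by
    rw [hcdef]
    have := mul_le_mul_of_nonneg_left hAleA0 (by positivity : (0:ℝ) ≤ 2 * d)
    linarith
  have hsinge : s ≤ Real.sin (2 * d * A) := by
    rw [hsdef]
    exact Real.sin_le_sin_of_le_of_le_pi_div_two (by linarith) (by linarith) hargge
  have hsinnn : 0 ≤ Real.sin (2 * d * A) := by linarith
  refine ⟨a, hak1, hak2, ?_⟩
  unfold Wfun
  rw [← hAdef]
  have hBt : Real.sqrt (a ^ 2 - k₁ ^ 2) = Real.sqrt t := by rw [ha2]; ring_nf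
  rw [hBt]
  obtain ⟨B, hBdef⟩ : ∃ x : ℝ, x = Real.sqrt t := ⟨_, rfl⟩
  rw [← hBdef]
  have hB2 : B ^ 2 = t := by rw [hBdef]; exact Real.sq_sqrt htpos.le
  have hBnn : 0 ≤ B := by rw [hBdef]; exact Real.sqrt_nonneg _
  -- second term bound
  have hcos1 : Real.cos (2 * d * A) ≤ 1 := Real.cos_le_one _
  have hsecond : 2 * B * Real.cos (2 * d * A) ≤ 2 * B := by
    have := mul_le_mul_of_nonneg_left hcos1 (by positivity : (0:ℝ) ≤ 2 * B)
    linarith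
  have hA0s : 0 < A₀ * s := mul_pos hA0pos hspos
  have h2B : 2 * B < 3 / 4 * A₀ * s := by
    have hx : (0:ℝ) < A₀ * s / 4 := by linarith
    have hBx : B < A₀ * s / 4 := by
      refine lt_of_pow_lt_pow_left₀ 2 hx.le ?_
      have : (A₀ * s / 4) ^ 2 > 0 := by positivity
      rw [hB2]
      linarith
    linarith
  -- first term bound
  have hcoef : 2 * a ^ 2 - k₁ ^ 2 - k₂ ^ 2 ≤ -(3 / 4 * A₀ ^ 2) := by
    rw [ha2]; linarith
  have hcoefneg : 2 * a ^ 2 - k₁ ^ 2 - k₂ ^ 2 ≤ 0 := by linarith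
  have hN : (2 * a ^ 2 - k₁ ^ 2 - k₂ ^ 2) * Real.sin (2 * d * A) ≤ -(3 / 4 * A₀ ^ 2 * s) := by
    have e1 := mul_le_mul_of_nonpos_left hsinge hcoefneg
    have e2 := mul_le_mul_of_nonneg_right hcoef hspos.le
    linarith [e1, e2]
  have hfirst : (2 * a ^ 2 - k₁ ^ 2 - k₂ ^ 2) * Real.sin (2 * d * A) / A ≤ -(3 / 4 * A₀ * s) := by
    rw [div_le_iff₀ hApos]
    have := mul_le_mul_of_nonneg_left hAleA0 (by positivity : (0:ℝ) ≤ 3 / 4 * A₀ * s)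
    linarith [hN, this]
  linarith

set_option maxHeartbeats 1000000 in
/-- For any `0 < k₁ < k₂` and `d > 0`, the Wronskian expression
`(2ξ² − k₁² − k₂²) sin(2d√(k₂²−ξ²))/√(k₂²−ξ²) + 2√(ξ²−k₁²) cos(2d√(k₂²−ξ²))`
vanishes for some `ξ ∈ (k₁, k₂)`: the wave guide supports at least one guided mode. -/
theorem exists_guided_mode (k₁ k₂ d : ℝ) (h1 : 0 < k₁) (h2 : k₁ < k₂) (hd : 0 < d) :
    ∃ ξ : ℝ, k₁ < ξ ∧ ξ < k₂ ∧
      (2 * ξ ^ 2 - k₁ ^ 2 - k₂ ^ 2) * Real.sin (2 * d * Real.sqrt (k₂ ^ 2 - ξ ^ 2)) /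
          Real.sqrt (k₂ ^ 2 - ξ ^ 2) +
        2 * Real.sqrt (ξ ^ 2 - k₁ ^ 2) * Real.cos (2 * d * Real.sqrt (k₂ ^ 2 - ξ ^ 2)) = 0 := by
  have hπ := Real.pi_pos
  have hneg : ∃ a : ℝ, k₁ < a ∧ a < k₂ ∧ Wfun k₁ k₂ d a < 0 := by
    obtain ⟨A₀, hA0def⟩ : ∃ x : ℝ, x = Real.sqrt (k₂ ^ 2 - k₁ ^ 2) := ⟨_, rfl⟩
    have hA0sq : A₀ ^ 2 = k₂ ^ 2 - k₁ ^ 2 := by rw [hA0def]; exact Real.sq_sqrt (by nlinarith)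
    have hA0pos : 0 < A₀ := by rw [hA0def]; exact Real.sqrt_pos.mpr (by nlinarith)
    obtain ⟨c, hcdef⟩ : ∃ x : ℝ, x = 2 * d * A₀ := ⟨_, rfl⟩
    have hcpos : 0 < c := by rw [hcdef]; positivity
    have hcsqrt : c = 2 * d * Real.sqrt (k₂ ^ 2 - k₁ ^ 2) := by rw [hcdef, hA0def]
    rcases le_or_gt c (π / 2) with hle | hgt
    · exact wneg_small k₁ k₂ d h1 h2 hd (hcsqrt ▸ hle)
    · rcases lt_or_ge π c with hcπ | hcπ
      · apply wneg k₁ k₂ d π h1 h2 hd hπ (hcsqrt ▸ hcπ)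
        · simp [Real.sin_pi]
        · simp [Real.cos_pi]
      · have h2sq : (Real.sqrt 2) ^ 2 = 2 := Real.sq_sqrt (by norm_num)
        have h2nn : 0 ≤ Real.sqrt 2 := Real.sqrt_nonneg 2
        have h2gt1 : 1 < Real.sqrt 2 := by
          have : Real.sqrt 1 < Real.sqrt 2 := Real.sqrt_lt_sqrt (by norm_num) (by norm_num)
          rwa [Real.sqrt_one] at this
        have h2lt2 : Real.sqrt 2 < 2 := by
          have h4 : Real.sqrt 2 < Real.sqrt 4 := Real.sqrt_lt_sqrt (by norm_num) (by norm_num)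
          have : Real.sqrt 4 = 2 := by
            rw [show (4:ℝ) = 2 ^ 2 by norm_num, Real.sqrt_sq (by norm_num : (0:ℝ) ≤ 2)]
          linarith
        obtain ⟨θ, hθdef⟩ : ∃ x : ℝ, x = (max (π / 2) (c * Real.sqrt 2 / 2) + c) / 2 := ⟨_, rfl⟩
        have hclt : c * Real.sqrt 2 / 2 < c := by
          have := mul_lt_mul_of_pos_left h2lt2 hcpos
          linarith
        have hmaxlt : max (π / 2) (c * Real.sqrt 2 / 2) < c :=
          max_lt (by linarith) hclt
        have hmax1 : π / 2 ≤ max (π / 2) (c * Real.sqrt 2 / 2) := le_max_left _ _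
        have hmax2 : c * Real.sqrt 2 / 2 ≤ max (π / 2) (c * Real.sqrt 2 / 2) := le_max_right _ _
        have hθc : θ < c := by rw [hθdef]; linarith
        have hθhalf : π / 2 < θ := by rw [hθdef]; linarith
        have hθgt : c * Real.sqrt 2 / 2 < θ := by rw [hθdef]; linarith
        have hθπ : θ ≤ π := by linarith
        have hθ0 : 0 < θ := by linarith
        apply wneg k₁ k₂ d θ h1 h2 hd hθ0 (hcsqrt ▸ hθc)
        · have hsin : 0 ≤ Real.sin θ := Real.sin_nonneg_of_nonneg_of_le_pi hθ0.le hθπ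
          have hcx : (0:ℝ) ≤ c * Real.sqrt 2 / 2 := by positivity
          have hθ2 : c ^ 2 / 2 < θ ^ 2 := by
            have hp := pow_lt_pow_left₀ hθgt hcx (two_ne_zero)
            have hid : (c * Real.sqrt 2 / 2) ^ 2 = (Real.sqrt 2) ^ 2 * c ^ 2 / 4 := by ring
            rw [hid, h2sq] at hp
            linarith
          have hfac : 2 * (k₂ ^ 2 - (θ / (2 * d)) ^ 2) - k₁ ^ 2 - k₂ ^ 2 ≤ 0 := by
            have hdd : (θ / (2 * d)) ^ 2 = θ ^ 2 / (4 * d ^ 2) := by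
              rw [div_pow]; congr 1; ring
            have h4 : (0:ℝ) < 4 * d ^ 2 := by positivity
            have hc2 : c ^ 2 = 4 * d ^ 2 * (k₂ ^ 2 - k₁ ^ 2) := by
              calc c ^ 2 = 4 * d ^ 2 * A₀ ^ 2 := by rw [hcdef]; ring
                _ = 4 * d ^ 2 * (k₂ ^ 2 - k₁ ^ 2) := by rw [hA0sq]
            have hge : (k₂ ^ 2 - k₁ ^ 2) / 2 ≤ θ ^ 2 / (4 * d ^ 2) := by
              rw [div_le_div_iff₀ (by norm_num) h4]
              linarith
            rw [hdd]
            linarith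
          exact mul_nonpos_of_nonneg_of_nonpos hsin hfac
        · exact Real.cos_neg_of_pi_div_two_lt_of_lt hθhalf (by linarith)
  obtain ⟨a, ha1, ha2, hfa⟩ := hneg
  obtain ⟨ξ, hh1, hh2, hh3⟩ := wkey k₁ k₂ d h1 h2 hd a ha1 ha2 hfa
  unfold Wfun at hh3
  exact ⟨ξ, hh1, hh2, hh3⟩
end

section
/- Let 0 < k₁ < k₂ and d > 0. There exists a constant C > 0 such that for every ξ > k₂, writing Ã = √(ξ² − k₂²) and B̃ = √(ξ² − k₁²), one has e^{−2dB̃} · [ (2ξ² − k₁² − k₂²) · sinh(2dÃ)/Ã + 2B̃ · cosh(2dÃ) ] ≥ C · ξ. (In particular this expression is strictly positive, so the Wronskian has no zeros with |ξ| > k₂, and |W(ξ)| grows at least linearly in |ξ|.) -/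
/-!
Dropping the nonnegative `sinh` term and bounding `cosh` below by half the exponential leaves
`B̃ e^{-2d(B̃ - Ã)}`. Since `B̃² - Ã² = k₂² - k₁²`, subadditivity of `√` gives
`B̃ - Ã ≤ √(k₂² - k₁²)`, and for `ξ ≥ k₂` one has `B̃ ≥ ξ √(k₂² - k₁²) / k₂`.
-/

open Real

namespace Real

theorem sqrt_add_le_add_sqrt {a b : ℝ} (ha : 0 ≤ a) (hb : 0 ≤ b) : √(a + b) ≤ √a + √b := by
  rw [sqrt_le_left (by positivity)]
  nlinarith [sq_sqrt ha, sq_sqrt hb, sqrt_nonneg a, sqrt_nonneg b]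

theorem exp_div_two_le_cosh (x : ℝ) : exp x / 2 ≤ cosh x := by
  rw [cosh_eq]
  linarith [exp_pos (-x)]

theorem sinh_mul_div_nonneg {c a : ℝ} (hc : 0 ≤ c) (ha : 0 ≤ a) : 0 ≤ sinh (c * a) / a :=
  div_nonneg (sinh_nonneg_iff.2 (mul_nonneg hc ha)) ha

theorem mul_sqrt_sub_sq_le {k₁ k₂ ξ : ℝ} (hk₂ : 0 < k₂) (hξ : k₂ ≤ ξ) :
    √(k₂ ^ 2 - k₁ ^ 2) / k₂ * ξ ≤ √(ξ ^ 2 - k₁ ^ 2) := by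
  have hratio : 1 ≤ (ξ / k₂) ^ 2 := one_le_pow₀ ((one_le_div hk₂).2 hξ)
  calc √(k₂ ^ 2 - k₁ ^ 2) / k₂ * ξ = √((k₂ ^ 2 - k₁ ^ 2) * (ξ / k₂) ^ 2) := by
        rw [sqrt_mul' _ (sq_nonneg _), sqrt_sq (by positivity [hk₂.le.trans hξ])]
        ring
    _ ≤ √(ξ ^ 2 - k₁ ^ 2) := by
        apply sqrt_le_sqrt
        have hexpand : (k₂ ^ 2 - k₁ ^ 2) * (ξ / k₂) ^ 2 = ξ ^ 2 - k₁ ^ 2 * (ξ / k₂) ^ 2 := by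
          field_simp
        nlinarith [sq_nonneg k₁]

theorem mul_exp_neg_sub_le_exp_neg_mul_sinh_div_add_cosh {c d A B : ℝ} (hc : 0 ≤ c)
    (hd : 0 ≤ d) (hA : 0 ≤ A) (hB : 0 ≤ B) :
    B * exp (-(2 * d * (B - A))) ≤
      exp (-(2 * d * B)) * (c * sinh (2 * d * A) / A + 2 * B * cosh (2 * d * A)) := by
  have hsinh : 0 ≤ c * sinh (2 * d * A) / A := by
    rw [mul_div_assoc]
    exact mul_nonneg hc (sinh_mul_div_nonneg (by positivity) hA)
  calc B * exp (-(2 * d * (B - A))) = exp (-(2 * d * B)) * (2 * B * (exp (2 * d * A) / 2)) := by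
        rw [show -(2 * d * (B - A)) = -(2 * d * B) + 2 * d * A by ring, exp_add]
        ring
    _ ≤ exp (-(2 * d * B)) * (2 * B * cosh (2 * d * A)) := by
        gcongr
        exact exp_div_two_le_cosh _
    _ ≤ exp (-(2 * d * B)) * (c * sinh (2 * d * A) / A + 2 * B * cosh (2 * d * A)) := by
        gcongr
        exact le_add_of_nonneg_left hsinh

end Real

/-- For `0 < k₁ < k₂` and `d > 0` there is `C > 0` such that for every
`ξ > k₂`, with `Ã = √(ξ²−k₂²)` and `B̃ = √(ξ²−k₁²)`,
`e^{−2dB̃} [(2ξ² − k₁² − k₂²) sinh(2dÃ)/Ã + 2B̃ cosh(2dÃ)] ≥ C ξ`: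
the Wronskian has no zeros beyond `k₂` and grows at least linearly. -/
theorem wronskian_lower_bound_beyond_k2 (k₁ k₂ d : ℝ)
    (h1 : 0 < k₁) (h2 : k₁ < k₂) (hd : 0 < d) :
    ∃ C : ℝ, 0 < C ∧ ∀ ξ : ℝ, k₂ < ξ →
      C * ξ ≤ Real.exp (-(2 * d * Real.sqrt (ξ ^ 2 - k₁ ^ 2))) *
        ((2 * ξ ^ 2 - k₁ ^ 2 - k₂ ^ 2) * Real.sinh (2 * d * Real.sqrt (ξ ^ 2 - k₂ ^ 2)) /
            Real.sqrt (ξ ^ 2 - k₂ ^ 2) +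
          2 * Real.sqrt (ξ ^ 2 - k₁ ^ 2) * Real.cosh (2 * d * Real.sqrt (ξ ^ 2 - k₂ ^ 2))) := by
  have hk₂ : 0 < k₂ := h1.trans h2
  have hgap : 0 < k₂ ^ 2 - k₁ ^ 2 := by nlinarith
  set m := √(k₂ ^ 2 - k₁ ^ 2)
  refine ⟨m / k₂ * exp (-(2 * d * m)), by positivity, fun ξ hξ => ?_⟩
  set A := √(ξ ^ 2 - k₂ ^ 2)
  set B := √(ξ ^ 2 - k₁ ^ 2)
  have hA : 0 ≤ ξ ^ 2 - k₂ ^ 2 := by nlinarith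
  have hBA : B - A ≤ m := by
    have hsub := sqrt_add_le_add_sqrt hA hgap.le
    rw [show ξ ^ 2 - k₂ ^ 2 + (k₂ ^ 2 - k₁ ^ 2) = ξ ^ 2 - k₁ ^ 2 by ring] at hsub
    linarith
  calc m / k₂ * exp (-(2 * d * m)) * ξ = m / k₂ * ξ * exp (-(2 * d * m)) := by ring
    _ ≤ B * exp (-(2 * d * (B - A))) := by
        gcongr
        exact mul_sqrt_sub_sq_le hk₂ hξ.le
    _ ≤ _ := mul_exp_neg_sub_le_exp_neg_mul_sinh_div_add_cosh (by nlinarith) hd.le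
        (Real.sqrt_nonneg _) (Real.sqrt_nonneg _)
end

section
/- Let 0 < k₁ < k₂ and d > 0, and assume 2d√(k₂² − k₁²) ≠ nπ for every positive integer n. Define F : (k₁, k₂) → ℝ by F(ξ) = (2ξ² − k₁² − k₂²) · sin(2d√(k₂² − ξ²)) / √(k₂² − ξ²) + 2√(ξ² − k₁²) · cos(2d√(k₂² − ξ²)). Then the zero set {ξ ∈ (k₁, k₂) : F(ξ) = 0} is finite. -/
/-!
On `(k₁, k₂)` the Wronskian is real analytic, so if it had infinitely many zeros they would
accumulate at a point of `[k₁, k₂]`. Replacing `sin (2 d s) / s` by `2 d sinc (2 d s)` extends it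
continuously to the closed interval. An interior accumulation point is excluded by the identity
theorem, since the function would then vanish on `(k₁, k₂)` and, by continuity, at `k₂`. The
endpoints are excluded because the extension does not vanish there: at `k₂` its value is
`2 d (k₂² - k₁²) + 2 √(k₂² - k₁²) > 0`, and at `k₁` it is a nonzero multiple of
`sin (2 d √(k₂² - k₁²))`, which is nonzero by the non-resonance condition.
-/

open Set Filter Topology Real
open scoped ContDiff

theorem AnalyticOnNhd.finite_zeros_Icc_of_ne_zero_endpoints {E : Type*} [NormedAddCommGroup E]
    [NormedSpace ℝ E] {g : ℝ → E} {a b : ℝ} (han : AnalyticOnNhd ℝ g (Ioo a b))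
    (hc : ContinuousOn g (Icc a b)) (ha : g a ≠ 0) (hb : g b ≠ 0) :
    {x ∈ Icc a b | g x = 0}.Finite := by
  by_contra hinf
  obtain ⟨x, -, hacc⟩ := Set.Infinite.exists_accPt_of_subset_isCompact hinf isCompact_Icc
    (fun _ h => h.1)
  have hclosed : IsClosed {x ∈ Icc a b | g x = 0} :=
    hc.preimage_isClosed_of_isClosed isClosed_Icc isClosed_singleton
  obtain ⟨⟨hax, hxb⟩, hgx⟩ : x ∈ {x ∈ Icc a b | g x = 0} :=
    hclosed.closure_subset hacc.clusterPt.mem_closure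
  have hx : x ∈ Ioo a b :=
    ⟨hax.lt_of_ne (by rintro rfl; exact ha hgx), hxb.lt_of_ne (by rintro rfl; exact hb hgx)⟩
  have hzero : EqOn g 0 (Ioo a b) :=
    han.eqOn_zero_of_preconnected_of_frequently_eq_zero isPreconnected_Ioo hx
      (accPt_iff_frequently_nhdsNE.1 hacc |>.mono fun _ hy => hy.2)
  have hab : a < b := hx.1.trans hx.2
  exact hb (hzero.of_subset_closure hc continuousOn_const Ioo_subset_Icc_self
    (closure_Ioo hab.ne).ge (right_mem_Icc.2 hab.le))

lemma Real.sin_mul_div_eq_mul_sinc (c : ℝ) {s : ℝ} (hs : s ≠ 0) :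
    sin (c * s) / s = c * sinc (c * s) := by
  rcases eq_or_ne c 0 with rfl | hc
  · simp
  · rw [sinc_of_ne_zero (mul_ne_zero hc hs)]
    field_simp

lemma Real.sin_ne_zero_of_pos_of_forall_ne_nat_mul_pi {x : ℝ} (hx : 0 < x)
    (h : ∀ n : ℕ, 0 < n → x ≠ n * π) : sin x ≠ 0 := by
  intro hsin
  obtain ⟨n, hn⟩ := sin_eq_zero_iff.1 hsin
  have hn_pos : 0 < n := by
    have : (0 : ℝ) < n * π := hn ▸ hx
    exact_mod_cast pos_of_mul_pos_left this pi_pos.le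
  lift n to ℕ using hn_pos.le
  exact h n (by exact_mod_cast hn_pos) (by exact_mod_cast hn.symm)

noncomputable def slabWronskian (k₁ k₂ d ξ : ℝ) : ℝ :=
  (2 * ξ ^ 2 - k₁ ^ 2 - k₂ ^ 2) * sin (2 * d * √(k₂ ^ 2 - ξ ^ 2)) / √(k₂ ^ 2 - ξ ^ 2) +
    2 * √(ξ ^ 2 - k₁ ^ 2) * cos (2 * d * √(k₂ ^ 2 - ξ ^ 2))

/-- `slabWronskian` with `sin (c s) / s` written as `c * sinc (c s)`: this removes the junk value
`0 / 0 = 0` at `ξ = k₂` and makes the function continuous on all of `ℝ`. -/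
noncomputable def slabWronskianExt (k₁ k₂ d ξ : ℝ) : ℝ :=
  (2 * ξ ^ 2 - k₁ ^ 2 - k₂ ^ 2) * (2 * d * sinc (2 * d * √(k₂ ^ 2 - ξ ^ 2))) +
    2 * √(ξ ^ 2 - k₁ ^ 2) * cos (2 * d * √(k₂ ^ 2 - ξ ^ 2))

section
variable (k₁ k₂ d : ℝ)

lemma continuous_slabWronskianExt : Continuous (slabWronskianExt k₁ k₂ d) := by
  unfold slabWronskianExt
  fun_prop

lemma slabWronskianExt_eq {ξ : ℝ} (hξ : ξ ^ 2 < k₂ ^ 2) :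
    slabWronskianExt k₁ k₂ d ξ = slabWronskian k₁ k₂ d ξ := by
  rw [slabWronskianExt, slabWronskian, mul_div_assoc, sin_mul_div_eq_mul_sinc]
  exact (sqrt_pos.2 (sub_pos.2 hξ)).ne'

lemma analyticAt_slabWronskian {ξ : ℝ} (h₁ : k₁ ^ 2 < ξ ^ 2) (h₂ : ξ ^ 2 < k₂ ^ 2) :
    AnalyticAt ℝ (slabWronskian k₁ k₂ d) ξ := by
  have hs₁ : ξ ^ 2 - k₁ ^ 2 ≠ 0 := (sub_pos.2 h₁).ne'
  have hs₂ : k₂ ^ 2 - ξ ^ 2 ≠ 0 := (sub_pos.2 h₂).ne'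
  have hsqrt : √(k₂ ^ 2 - ξ ^ 2) ≠ 0 := (sqrt_pos.2 (sub_pos.2 h₂)).ne'
  have : ContDiffAt ℝ ω (slabWronskian k₁ k₂ d) ξ := by
    unfold slabWronskian
    fun_prop (disch := assumption)
  exact this.analyticAt

lemma analyticOnNhd_slabWronskianExt (hk₁ : 0 ≤ k₁) :
    AnalyticOnNhd ℝ (slabWronskianExt k₁ k₂ d) (Ioo k₁ k₂) :=
  AnalyticOnNhd.congr isOpen_Ioo
    (fun ξ ⟨hkξ, hξk⟩ => analyticAt_slabWronskian k₁ k₂ d (by nlinarith) (by nlinarith))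
    (fun ξ ⟨hkξ, hξk⟩ => (slabWronskianExt_eq k₁ k₂ d (by nlinarith)).symm)

variable {k₁ k₂ d}

lemma slabWronskianExt_left_ne_zero (hk : k₁ ^ 2 < k₂ ^ 2) (hd : 0 < d)
    (hres : ∀ n : ℕ, 0 < n → 2 * d * √(k₂ ^ 2 - k₁ ^ 2) ≠ n * π) :
    slabWronskianExt k₁ k₂ d k₁ ≠ 0 := by
  have hx : 0 < 2 * d * √(k₂ ^ 2 - k₁ ^ 2) := by
    have := sqrt_pos.2 (sub_pos.2 hk)
    positivity
  have hsin := sin_ne_zero_of_pos_of_forall_ne_nat_mul_pi hx hres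
  have hcoef : 2 * k₁ ^ 2 - k₁ ^ 2 - k₂ ^ 2 ≠ 0 := by linarith
  simp only [slabWronskianExt, sub_self, sqrt_zero, mul_zero, zero_mul, add_zero,
    sinc_of_ne_zero hx.ne']
  exact mul_ne_zero hcoef (mul_ne_zero (by positivity) (div_ne_zero hsin hx.ne'))

lemma slabWronskianExt_right_pos (hk : k₁ ^ 2 < k₂ ^ 2) (hd : 0 ≤ d) :
    0 < slabWronskianExt k₁ k₂ d k₂ := by
  have hcoef : 2 * k₂ ^ 2 - k₁ ^ 2 - k₂ ^ 2 = k₂ ^ 2 - k₁ ^ 2 := by ring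
  have := sub_pos.2 hk
  simp only [slabWronskianExt, sub_self, sqrt_zero, mul_zero, sinc_zero, cos_zero, mul_one, hcoef]
  positivity

end

/-- For `0 < k₁ < k₂`, `d > 0`, under the non-resonance condition
`2d√(k₂²−k₁²) ≠ nπ` for all positive integers `n`, the set of zeros in `(k₁, k₂)` of the
Wronskian expression
`F(ξ) = (2ξ²−k₁²−k₂²) sin(2d√(k₂²−ξ²))/√(k₂²−ξ²) + 2√(ξ²−k₁²) cos(2d√(k₂²−ξ²))`
is finite. -/
theorem wronskian_zero_set_finite (k₁ k₂ d : ℝ)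
    (h1 : 0 < k₁) (h2 : k₁ < k₂) (hd : 0 < d)
    (hres : ∀ n : ℕ, 0 < n → 2 * d * Real.sqrt (k₂ ^ 2 - k₁ ^ 2) ≠ n * Real.pi) :
    Set.Finite {ξ : ℝ | ξ ∈ Set.Ioo k₁ k₂ ∧
      (2 * ξ ^ 2 - k₁ ^ 2 - k₂ ^ 2) * Real.sin (2 * d * Real.sqrt (k₂ ^ 2 - ξ ^ 2)) /
          Real.sqrt (k₂ ^ 2 - ξ ^ 2) +
        2 * Real.sqrt (ξ ^ 2 - k₁ ^ 2) * Real.cos (2 * d * Real.sqrt (k₂ ^ 2 - ξ ^ 2)) = 0} := by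
  have hk : k₁ ^ 2 < k₂ ^ 2 := pow_lt_pow_left₀ h2 h1.le two_ne_zero
  have hfin := (analyticOnNhd_slabWronskianExt k₁ k₂ d h1.le).finite_zeros_Icc_of_ne_zero_endpoints
    (continuous_slabWronskianExt k₁ k₂ d).continuousOn
    (slabWronskianExt_left_ne_zero hk hd hres) (slabWronskianExt_right_pos hk hd.le).ne'
  refine hfin.subset fun ξ ⟨hξ, hF⟩ => ⟨Ioo_subset_Icc_self hξ, ?_⟩
  rwa [slabWronskianExt_eq k₁ k₂ d (by nlinarith [hξ.1, hξ.2])]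
end

section
/- Let μ > 0 and d > 0, and let q : ℝ → ℝ be a bounded measurable function with q(z) = 0 for |z| > d. Suppose v : ℝ → ℂ is a bounded C¹ function whose derivative v' is locally absolutely continuous, that v''(x) = μ² v(x) − q(x) v(x) for almost every x ∈ ℝ, and that v(x) → 0 as |x| → ∞. Then for every y ∈ ℝ, v(y) = (1/(2μ)) ∫_{-d}^{d} e^{-μ|y−z|} q(z) v(z) dz. -/
/-!
For `κ = ±μ` consider the Wronskian `W_κ(t) = e^{-κ(t-y)} (κ v(t) + v'(t))` of the exponential
`e^{-κ(t-y)}` with `v`. Since `v'` is absolutely continuous with `v'' = κ² v - q v` a.e.,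
`W_κ' = -e^{-κ(t-y)} q v` a.e., so integrating `W_μ` over `[y, b]` and `W_{-μ}` over `[a, y]` gives
`∫_a^b e^{-μ|y-z|} q v = 2μ v(y) - W_μ(b) + W_{-μ}(a)`.
As `v` is bounded and `v'` grows at most linearly, both boundary terms tend to `0` as
`a → -∞`, `b → ∞`, while the left side equals the integral over `[-d, d]` once `a ≤ -d ≤ d ≤ b`.
-/

open MeasureTheory intervalIntegral Set Filter Topology

section
variable {E : Type*} [NormedAddCommGroup E]

theorem MeasureTheory.LocallyIntegrable.intervalIntegrable {f : ℝ → E}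
    (hf : LocallyIntegrable f volume) (a b : ℝ) : IntervalIntegrable f volume a b :=
  intervalIntegrable_iff.2 ((hf.integrableOn_isCompact isCompact_uIcc).mono_set uIoc_subset_uIcc)

variable [NormedSpace ℝ E]

theorem intervalIntegral_eq_of_forall_lt_abs_eq_zero {f : ℝ → E} {a b d : ℝ} (hd : 0 ≤ d)
    (hf : ∀ x, d < |x| → f x = 0) (ha : a ≤ -d) (hb : d ≤ b) :
    ∫ x in a..b, f x = ∫ x in (-d)..d, f x := by
  have h : ∀ a b, a ≤ -d → d ≤ b → ∫ x in a..b, f x = ∫ x, f x := fun a b ha hb => by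
    rw [integral_of_le (by linarith), ← integral_Icc_eq_integral_Ioc,
      setIntegral_eq_integral_of_forall_compl_eq_zero fun x hx => hf x ?_]
    rw [mem_Icc, not_and_or, not_le, not_le] at hx
    exact lt_abs.2 (by rcases hx with hx | hx <;> [right; left] <;> linarith)
  rw [h a b ha hb, h (-d) d le_rfl le_rfl]

theorem lipschitzWith_of_sub_eq_integral {f g : ℝ → E} {C : ℝ} (hgC : ∀ x, ‖g x‖ ≤ C)
    (hf : ∀ x y, f x - f y = ∫ t in y..x, g t) : LipschitzWith (Real.toNNReal C) f :=
  LipschitzWith.of_dist_le' fun x y => by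
    rw [dist_eq_norm, hf, Real.dist_eq]
    exact norm_integral_le_of_norm_le_const fun t _ => hgC t

variable [CompleteSpace E]

theorem ae_hasDerivAt_of_sub_eq_integral {f g : ℝ → E} (hg : LocallyIntegrable g volume)
    (hf : ∀ x y, f x - f y = ∫ t in y..x, g t) : ∀ᵐ x, HasDerivAt f (g x) x := by
  filter_upwards [LocallyIntegrable.ae_hasDerivAt_integral hg] with x hx
  have hfx : f = fun x => f 0 + ∫ t in 0..x, g t := funext fun x => by rw [← hf]; abel
  rw [hfx]
  exact (hx 0).const_add _

/-- The bound on `f` makes its primitive Lipschitz, hence absolutely continuous; then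
`F - ∫ f` is absolutely continuous with derivative `0` a.e. -/
theorem AbsolutelyContinuousOnInterval.integral_eq_sub_of_ae_hasDerivAt {F f : ℝ → E}
    {a b C : ℝ} (hF : AbsolutelyContinuousOnInterval F a b) (hf : IntervalIntegrable f volume a b)
    (hfC : ∀ x ∈ uIcc a b, ‖f x‖ ≤ C) (hderiv : ∀ᵐ x, x ∈ uIcc a b → HasDerivAt F (f x) x) :
    ∫ x in a..b, f x = F b - F a := by
  have hfi : ∀ x ∈ uIcc a b, ∀ y ∈ uIcc a b, IntervalIntegrable f volume x y := fun x hx y hy =>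
    hf.mono_set (uIcc_subset_uIcc hx hy)
  have hprim : LipschitzOnWith (Real.toNNReal C) (fun x => ∫ t in a..x, f t) (uIcc a b) :=
    LipschitzOnWith.of_dist_le' fun x hx y hy => by
      rw [dist_eq_norm, integral_interval_sub_left (hfi a left_mem_uIcc x hx)
        (hfi a left_mem_uIcc y hy), Real.dist_eq]
      exact norm_integral_le_of_norm_le_const fun t ht =>
        hfC t (uIcc_subset_uIcc hy hx (uIoc_subset_uIcc ht))
  obtain ⟨K, hK⟩ := (hF.sub hprim.absolutelyContinuousOnInterval).const_of_ae_hasDerivAt_zero (by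
    filter_upwards [hderiv, hf.ae_hasDerivAt_integral] with x hFx hPx hx
    simpa using (hFx hx).sub (hPx hx a left_mem_uIcc))
  have ha := hK a left_mem_uIcc
  have hb := hK b right_mem_uIcc
  simp only [Pi.sub_apply, integral_same, sub_zero] at ha hb
  rw [← ha] at hb
  rw [← hb]
  abel

end

/-- The Wronskian `f v' - f' v` of `f t = exp (-κ (t - c))` and `v`. -/
noncomputable def expWronskian (κ c : ℝ) (v v' : ℝ → ℂ) (t : ℝ) : ℂ :=
  (Real.exp (-(κ * (t - c))) : ℂ) * (κ * v t + v' t)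

theorem hasDerivAt_exp_neg_mul_sub (κ c t : ℝ) :
    HasDerivAt (fun t : ℝ => (Real.exp (-(κ * (t - c))) : ℂ))
      (-κ * Real.exp (-(κ * (t - c)))) t := by
  have h : HasDerivAt (fun t => -(κ * (t - c))) (-κ) t := by
    simpa using (((hasDerivAt_id' t).sub_const c).const_mul κ).fun_neg
  convert h.exp.ofReal_comp using 1
  push_cast
  ring

theorem hasDerivAt_expWronskian (κ c : ℝ) {v v' : ℝ → ℂ} {x : ℝ} {w : ℂ}
    (hv : HasDerivAt v (v' x) x) (hv' : HasDerivAt v' w x) :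
    HasDerivAt (expWronskian κ c v v')
      ((Real.exp (-(κ * (x - c))) : ℂ) * (w - κ ^ 2 * v x)) x := by
  refine ((hasDerivAt_exp_neg_mul_sub κ c x).mul ((hv.const_mul (κ : ℂ)).add hv')).congr_deriv ?_
  simp only [Pi.add_apply]
  ring

theorem absolutelyContinuousOnInterval_expWronskian (κ c : ℝ) {v v' : ℝ → ℂ} {K : NNReal}
    (hv : ∀ x, HasDerivAt v (v' x) x) (hv' : LipschitzWith K v') (a b : ℝ) :
    AbsolutelyContinuousOnInterval (expWronskian κ c v v') a b := by
  have he : ContDiff ℝ 1 fun t : ℝ => (Real.exp (-(κ * (t - c))) : ℂ) :=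
    Complex.ofRealCLM.contDiff.comp (Real.contDiff_exp.comp (by fun_prop))
  have hvC : ContDiff ℝ 1 v := contDiff_one_iff_deriv.2
    ⟨fun x => (hv x).differentiableAt, by rw [funext fun x => (hv x).deriv]; exact hv'.continuous⟩
  exact he.contDiffOn.absolutelyContinuousOnInterval.fun_smul
    ((hvC.contDiffOn.absolutelyContinuousOnInterval.const_smul (κ : ℂ)).add
      hv'.lipschitzOnWith.absolutelyContinuousOnInterval)

theorem integral_exp_mul_eq_expWronskian_sub (κ c : ℝ) {v v' g : ℝ → ℂ} {C : ℝ}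
    (hv : ∀ x, HasDerivAt v (v' x) x) (hg : LocallyIntegrable g volume) (hgC : ∀ x, ‖g x‖ ≤ C)
    (hv' : ∀ x y, v' x - v' y = ∫ t in y..x, g t) (a b : ℝ) :
    ∫ t in a..b, (Real.exp (-(κ * (t - c))) : ℂ) * (g t - κ ^ 2 * v t)
      = expWronskian κ c v v' b - expWronskian κ c v v' a := by
  have hvc : Continuous v := continuous_iff_continuousAt.2 fun x => (hv x).continuousAt
  have hec : Continuous fun t : ℝ => (Real.exp (-(κ * (t - c))) : ℂ) := by fun_prop
  obtain ⟨Ce, hCe⟩ := (isCompact_uIcc (a := a) (b := b)).exists_bound_of_continuousOn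
    hec.continuousOn
  obtain ⟨Cv, hCv⟩ := (isCompact_uIcc (a := a) (b := b)).exists_bound_of_continuousOn
    hvc.continuousOn
  refine (absolutelyContinuousOnInterval_expWronskian κ c hv
    (lipschitzWith_of_sub_eq_integral hgC hv') a b).integral_eq_sub_of_ae_hasDerivAt
    (C := Ce * (C + κ ^ 2 * Cv))
    (((hg.sub (continuous_const.mul hvc).locallyIntegrable).intervalIntegrable a b).continuousOn_mul
      hec.continuousOn) (fun x hx => ?_) ?_
  · have hκv : ‖(κ : ℂ) ^ 2 * v x‖ ≤ κ ^ 2 * Cv := by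
      rw [norm_mul, norm_pow, Complex.norm_real, Real.norm_eq_abs, sq_abs]
      exact mul_le_mul_of_nonneg_left (hCv x hx) (sq_nonneg κ)
    exact (norm_mul_le _ _).trans (mul_le_mul (hCe x hx)
      ((norm_sub_le _ _).trans (add_le_add (hgC x) hκv)) (norm_nonneg _)
      ((norm_nonneg _).trans (hCe x hx)))
  · filter_upwards [ae_hasDerivAt_of_sub_eq_integral hg hv'] with x hx _
    exact hasDerivAt_expWronskian κ c (hv x) hx

theorem integral_exp_neg_abs_mul_eq {μ y a b C : ℝ} {v v' g : ℝ → ℂ}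
    (hv : ∀ x, HasDerivAt v (v' x) x) (hg : LocallyIntegrable g volume) (hgC : ∀ x, ‖g x‖ ≤ C)
    (hv' : ∀ x y, v' x - v' y = ∫ t in y..x, g t) (hay : a ≤ y) (hyb : y ≤ b) :
    ∫ z in a..b, (Real.exp (-(μ * |y - z|)) : ℂ) * (μ ^ 2 * v z - g z)
      = 2 * μ * v y - expWronskian μ y v v' b + expWronskian (-μ) y v v' a := by
  have hvc : Continuous v := continuous_iff_continuousAt.2 fun x => (hv x).continuousAt
  have hint : ∀ a b : ℝ, IntervalIntegrable
      (fun z => (Real.exp (-(μ * |y - z|)) : ℂ) * (μ ^ 2 * v z - g z)) volume a b := fun a b =>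
    (((continuous_const.mul hvc).locallyIntegrable.sub hg).intervalIntegrable a b).continuousOn_mul
      (by fun_prop)
  have hleft : ∫ z in a..y, (Real.exp (-(μ * |y - z|)) : ℂ) * (μ ^ 2 * v z - g z)
      = -∫ z in a..y, (Real.exp (-(-μ * (z - y))) : ℂ) * (g z - (-μ : ℝ) ^ 2 * v z) := by
    rw [← intervalIntegral.integral_neg]
    refine integral_congr fun z hz => ?_
    rw [uIcc_of_le hay] at hz
    simp only [abs_of_nonneg (sub_nonneg.2 hz.2)]
    push_cast
    ring_nf
  have hright : ∫ z in y..b, (Real.exp (-(μ * |y - z|)) : ℂ) * (μ ^ 2 * v z - g z)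
      = -∫ z in y..b, (Real.exp (-(μ * (z - y))) : ℂ) * (g z - (μ : ℂ) ^ 2 * v z) := by
    rw [← intervalIntegral.integral_neg]
    refine integral_congr fun z hz => ?_
    rw [uIcc_of_le hyb] at hz
    simp only [abs_sub_comm y z, abs_of_nonneg (sub_nonneg.2 hz.1)]
    ring
  rw [← integral_add_adjacent_intervals (hint a y) (hint y b), hleft, hright,
    integral_exp_mul_eq_expWronskian_sub _ _ hv hg hgC hv',
    integral_exp_mul_eq_expWronskian_sub _ _ hv hg hgC hv']
  simp only [expWronskian, sub_self, mul_zero, neg_zero, Real.exp_zero]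
  push_cast
  ring

theorem tendsto_exp_neg_mul_sub_mul_affine_atTop {m : ℝ} (hm : 0 < m) (c A B : ℝ) :
    Tendsto (fun s => Real.exp (-(m * (s - c))) * (A + B * s)) atTop (𝓝 0) := by
  have h0 := tendsto_rpow_mul_exp_neg_mul_atTop_nhds_zero 0 m hm
  have h1 := tendsto_rpow_mul_exp_neg_mul_atTop_nhds_zero 1 m hm
  have h := ((h0.const_mul A).add (h1.const_mul B)).const_mul (Real.exp (m * c))
  simp only [Real.rpow_zero, Real.rpow_one, one_mul, mul_zero, add_zero] at h
  refine h.congr fun s => ?_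
  rw [show -(m * (s - c)) = m * c + -m * s by ring, Real.exp_add]
  ring

theorem norm_expWronskian_le {κ c C Cv : ℝ} {v v' g : ℝ → ℂ} (hvb : ∀ x, ‖v x‖ ≤ Cv)
    (hgC : ∀ x, ‖g x‖ ≤ C) (hv' : ∀ x y, v' x - v' y = ∫ t in y..x, g t) (t : ℝ) :
    ‖expWronskian κ c v v' t‖ ≤ Real.exp (-(κ * (t - c))) * (|κ| * Cv + ‖v' 0‖ + C * |t|) := by
  have hv't : ‖v' t - v' 0‖ ≤ C * |t| := by
    simpa [hv'] using norm_integral_le_of_norm_le_const (a := 0) (b := t) fun x _ => hgC x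
  rw [expWronskian, norm_mul, Complex.norm_real, Real.norm_of_nonneg (Real.exp_pos _).le]
  gcongr
  calc ‖(κ : ℂ) * v t + v' t‖ ≤ ‖(κ : ℂ) * v t‖ + ‖v' t‖ := norm_add_le _ _
    _ ≤ |κ| * Cv + (‖v' 0‖ + C * |t|) := by
        refine add_le_add ?_ ((norm_le_insert' _ _).trans (add_le_add_right hv't _))
        rw [norm_mul, Complex.norm_real, Real.norm_eq_abs]
        exact mul_le_mul_of_nonneg_left (hvb t) (abs_nonneg κ)
    _ = |κ| * Cv + ‖v' 0‖ + C * |t| := by ring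

theorem tendsto_expWronskian_atTop {κ c C Cv : ℝ} {v v' g : ℝ → ℂ} (hκ : 0 < κ)
    (hvb : ∀ x, ‖v x‖ ≤ Cv) (hgC : ∀ x, ‖g x‖ ≤ C)
    (hv' : ∀ x y, v' x - v' y = ∫ t in y..x, g t) :
    Tendsto (expWronskian κ c v v') atTop (𝓝 0) := by
  refine squeeze_zero_norm' ?_ (tendsto_exp_neg_mul_sub_mul_affine_atTop hκ c
    (|κ| * Cv + ‖v' 0‖) C)
  filter_upwards [eventually_ge_atTop 0] with t ht
  simpa only [abs_of_nonneg ht] using norm_expWronskian_le hvb hgC hv' t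

theorem tendsto_expWronskian_atBot {κ c C Cv : ℝ} {v v' g : ℝ → ℂ} (hκ : κ < 0)
    (hvb : ∀ x, ‖v x‖ ≤ Cv) (hgC : ∀ x, ‖g x‖ ≤ C)
    (hv' : ∀ x y, v' x - v' y = ∫ t in y..x, g t) :
    Tendsto (expWronskian κ c v v') atBot (𝓝 0) := by
  refine squeeze_zero_norm' ?_ ((tendsto_exp_neg_mul_sub_mul_affine_atTop (neg_pos.2 hκ) (-c)
    (|κ| * Cv + ‖v' 0‖) C).comp tendsto_neg_atBot_atTop)
  filter_upwards [eventually_le_atBot 0] with t ht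
  refine (norm_expWronskian_le hvb hgC hv' t).trans_eq ?_
  simp only [Function.comp_apply, abs_of_nonpos ht]
  ring_nf

theorem two_mul_mul_eq_integral_exp_neg_abs_mul {μ d y C Cv : ℝ} {v v' g : ℝ → ℂ} (hμ : 0 < μ)
    (hd : 0 ≤ d) (hv : ∀ x, HasDerivAt v (v' x) x) (hvb : ∀ x, ‖v x‖ ≤ Cv)
    (hg : LocallyIntegrable g volume) (hgC : ∀ x, ‖g x‖ ≤ C)
    (hv' : ∀ x y, v' x - v' y = ∫ t in y..x, g t) (hsupp : ∀ z, d < |z| → μ ^ 2 * v z = g z) :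
    2 * μ * v y = ∫ z in (-d)..d, (Real.exp (-(μ * |y - z|)) : ℂ) * (μ ^ 2 * v z - g z) := by
  set W : ℝ × ℝ → ℂ := fun p => 2 * μ * v y - expWronskian μ y v v' p.2
    + expWronskian (-μ) y v v' p.1
  have hconst : Tendsto W (atBot ×ˢ atTop)
      (𝓝 (∫ z in (-d)..d, (Real.exp (-(μ * |y - z|)) : ℂ) * (μ ^ 2 * v z - g z))) := by
    refine tendsto_const_nhds.congr' ?_
    filter_upwards [(eventually_le_atBot (min (-d) y)).prod_mk (eventually_ge_atTop (max d y))]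
      with p ⟨ha, hb⟩
    rw [← intervalIntegral_eq_of_forall_lt_abs_eq_zero hd
      (fun z hz => by rw [hsupp z hz, sub_self, mul_zero]) (ha.trans (min_le_left _ _))
      ((le_max_left _ _).trans hb), integral_exp_neg_abs_mul_eq hv hg hgC hv'
      (ha.trans (min_le_right _ _)) ((le_max_right _ _).trans hb)]
  have hlim : Tendsto W (atBot ×ˢ atTop) (𝓝 (2 * μ * v y - 0 + 0)) :=
    (tendsto_const_nhds.sub ((tendsto_expWronskian_atTop hμ hvb hgC hv').comp tendsto_snd)).add
      ((tendsto_expWronskian_atBot (neg_neg_of_pos hμ) hvb hgC hv').comp tendsto_fst)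
  simpa using tendsto_nhds_unique hlim hconst

theorem guided_mode_reproducing_identity_general (μ d : ℝ) (hμ : 0 < μ) (hd : 0 < d)
    (q : ℝ → ℝ) (hqm : Measurable q) (hqb : ∃ Q : ℝ, ∀ x, |q x| ≤ Q)
    (hqs : ∀ z : ℝ, d < |z| → q z = 0)
    (v v' : ℝ → ℂ) (hv : ∀ x : ℝ, HasDerivAt v (v' x) x)
    (hvb : ∃ Cb : ℝ, ∀ x, ‖v x‖ ≤ Cb)
    (hv'' : ∀ x y : ℝ,
      v' x - v' y = ∫ t in y..x, ((μ ^ 2 : ℂ) * v t - (q t : ℂ) * v t)) :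
    ∀ y : ℝ, v y = (1 / (2 * (μ : ℂ))) *
      ∫ z in (-d)..d, ((Real.exp (-(μ * |y - z|)) : ℝ) : ℂ) * (q z : ℂ) * v z := by
  intro y
  obtain ⟨Q, hqb⟩ := hqb
  obtain ⟨Cb, hvb⟩ := hvb
  set g : ℝ → ℂ := fun t => (μ ^ 2 : ℂ) * v t - (q t : ℂ) * v t
  have hvc : Continuous v := continuous_iff_continuousAt.2 fun x => (hv x).continuousAt
  have hgC : ∀ x, ‖g x‖ ≤ μ ^ 2 * Cb + Q * Cb := fun x => by
    refine (norm_sub_le _ _).trans (add_le_add ?_ ?_) <;>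
      rw [norm_mul] <;> push_cast [norm_pow, Complex.norm_real, Real.norm_eq_abs, sq_abs]
    · exact mul_le_mul_of_nonneg_left (hvb x) (sq_nonneg μ)
    · exact mul_le_mul (hqb x) (hvb x) (norm_nonneg _) ((abs_nonneg _).trans (hqb 0))
  have hg : LocallyIntegrable g volume :=
    (memLp_top_of_bound (by fun_prop) _ (ae_of_all _ hgC)).locallyIntegrable le_top
  have h := two_mul_mul_eq_integral_exp_neg_abs_mul (y := y) hμ hd.le hv hvb hg hgC hv''
    fun z hz => by simp [g, hqs z hz]
  rw [integral_congr (g := fun z => ((Real.exp (-(μ * |y - z|)) : ℝ) : ℂ) * (q z : ℂ) * v z)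
    fun z _ => by simp only [g]; ring] at h
  rw [← h]
  field_simp [Complex.ofReal_ne_zero.2 hμ.ne']

/-- Let `μ > 0`, `d > 0` and let `q` be a bounded measurable potential
vanishing for `|z| > d`.  If `v` is a bounded `C¹` function whose derivative is locally
absolutely continuous (expressed by the fundamental theorem of calculus identity for
`v'` with a.e. second derivative `μ²v − qv`), and `v → 0` at infinity, then `v` is
reproduced by the exponential Green's function:
`v(y) = (1/(2μ)) ∫_{-d}^d e^{-μ|y−z|} q(z) v(z) dz`. -/
theorem guided_mode_reproducing_identity (μ d : ℝ) (hμ : 0 < μ) (hd : 0 < d)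
    (q : ℝ → ℝ) (hqm : Measurable q) (hqb : ∃ Q : ℝ, ∀ x, |q x| ≤ Q)
    (hqs : ∀ z : ℝ, d < |z| → q z = 0)
    (v v' : ℝ → ℂ) (hv : ∀ x : ℝ, HasDerivAt v (v' x) x)
    (hvb : ∃ Cb : ℝ, ∀ x, ‖v x‖ ≤ Cb)
    (hv'' : ∀ x y : ℝ,
      v' x - v' y = ∫ t in y..x, ((μ ^ 2 : ℂ) * v t - (q t : ℂ) * v t))
    (hdecay : Filter.Tendsto v (Filter.cocompact ℝ) (nhds 0)) :
    ∀ y : ℝ, v y = (1 / (2 * (μ : ℂ))) *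
      ∫ z in (-d)..d, ((Real.exp (-(μ * |y - z|)) : ℝ) : ℂ) * (q z : ℂ) * v z :=
  guided_mode_reproducing_identity_general μ d hμ hd q hqm hqb hqs v v' hv hvb hv''
end

section
/- Let k₁ > 0 and R₀ > k₁. There exists a constant M > 0 (depending only on k₁ and R₀) such that for all x₁ > 0, all λ > 0, and all R ≥ R₀, the absolutely convergent integral f_R(x₁, λ) = ∫_R^∞ e^{i x₁ ξ} e^{-λ√(ξ² − k₁²)} · ξ / √(ξ² − k₁²) dξ satisfies |f_R(x₁, λ)| ≤ M · e^{-λ√(R² − k₁²)} / x₁. -/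
/-!
Write the integrand as `e^{i x ξ} g(ξ)` with `g(ξ) = e^{-λ√(ξ²-k²)} ξ/√(ξ²-k²)`. Both factors of
`g` are positive and decreasing on `(k, ∞)`, and `g` is the derivative of `-e^{-λ√(ξ²-k²)}/λ`, so
`g` is integrable and tends to `0`. Integrating by parts against `e^{i x ξ}/(i x)` bounds the tail
integral by `(g(R) + ∫_R^∞ |g'|)/x = 2 g(R)/x`, and `g(R) ≤ e^{-λ√(R²-k²)} R₀/√(R₀²-k²)` because
`ξ/√(ξ²-k²)` is decreasing.
-/

open MeasureTheory Set Filter Topology Complex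

section OscillatoryIntegral

lemma norm_cexp_I_mul_mul (x ξ : ℝ) : ‖cexp (I * x * ξ)‖ = 1 := by
  rw [show I * x * ξ = ((x * ξ : ℝ) : ℂ) * I by push_cast; ring, norm_exp_ofReal_mul_I]

theorem integrableOn_Ioi_cexp_mul {g : ℝ → ℝ} {a : ℝ} (x : ℝ)
    (hg : IntegrableOn g (Ioi a)) :
    IntegrableOn (fun ξ : ℝ => cexp (I * x * ξ) * g ξ) (Ioi a) :=
  hg.ofReal.bdd_mul (by fun_prop) (ae_of_all _ fun ξ => (norm_cexp_I_mul_mul x ξ).le)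

theorem norm_integral_Ioi_cexp_mul_le_of_antitoneOn {g : ℝ → ℝ} {a x : ℝ}
    (hdiff : ∀ ξ ∈ Ici a, DifferentiableAt ℝ g ξ) (hanti : AntitoneOn g (Ici a))
    (hint : IntegrableOn g (Ioi a)) (hlim : Tendsto g atTop (𝓝 0)) (hx : x ≠ 0) :
    ‖∫ ξ in Ioi a, cexp (I * x * ξ) * g ξ‖ ≤ 2 * g a / |x| := by
  set v : ℝ → ℂ := fun ξ => cexp (I * x * ξ) / (I * x)
  have hIx : I * (x : ℂ) ≠ 0 := mul_ne_zero I_ne_zero (ofReal_ne_zero.2 hx)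
  have hv : ∀ ξ : ℝ, HasDerivAt v (cexp (I * x * ξ)) ξ := fun ξ => by
    have := ((((hasDerivAt_id (ξ : ℂ)).const_mul (I * x)).cexp).comp_ofReal).div_const (I * x)
    simpa [hIx] using this
  have hv_norm : ∀ ξ : ℝ, ‖v ξ‖ = |x|⁻¹ := fun ξ => by
    simp [v, norm_cexp_I_mul_mul]
  have hga : 0 ≤ g a := le_of_tendsto hlim <|
    (eventually_ge_atTop a).mono fun ξ hξ => hanti self_mem_Ici hξ hξ
  have hderiv : ∀ ξ ∈ Ici a, HasDerivAt g (deriv g ξ) ξ :=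
    fun ξ hξ => (hdiff ξ hξ).hasDerivAt
  have hderiv_nonpos : ∀ ξ ∈ Ioi a, deriv g ξ ≤ 0 := fun ξ hξ => by
    rw [← derivWithin_of_isOpen isOpen_Ioi hξ]
    exact (hanti.mono Ioi_subset_Ici_self).derivWithin_nonpos
  have hint' : IntegrableOn (deriv g) (Ioi a) :=
    integrableOn_Ioi_deriv_of_nonpos' hderiv hderiv_nonpos hlim
  have hparts :=
    integral_Ioi_mul_deriv_eq_deriv_mul (a := a) (u := fun ξ => (g ξ : ℂ)) (v := v)
    (fun ξ hξ => (hderiv ξ (Ioi_subset_Ici_self hξ)).ofReal_comp) (fun ξ _ => hv ξ)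
    (by simpa only [Pi.mul_def, mul_comm] using integrableOn_Ioi_cexp_mul x hint)
    (hint'.ofReal.mul_bdd (by fun_prop) (ae_of_all _ fun ξ => (hv_norm ξ).le))
    (((continuous_ofReal.continuousAt.comp (hdiff a self_mem_Ici).continuousAt).mul
      (hv a).continuousAt).tendsto.mono_left nhdsWithin_le_nhds)
    (squeeze_zero_norm (fun ξ => by simp [hv_norm])
      ((hlim.abs.mul_const |x|⁻¹).trans (by simp)))
  have hrest : ∫ ξ in Ioi a, ‖((deriv g ξ : ℝ) : ℂ) * v ξ‖ = g a / |x| := by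
    calc ∫ ξ in Ioi a, ‖((deriv g ξ : ℝ) : ℂ) * v ξ‖
        = ∫ ξ in Ioi a, -deriv g ξ * |x|⁻¹ := by
          refine setIntegral_congr_fun measurableSet_Ioi fun ξ hξ => ?_
          simp [hv_norm, abs_of_nonpos (hderiv_nonpos ξ hξ)]
      _ = g a / |x| := by
          rw [integral_mul_const, integral_neg,
            integral_Ioi_of_hasDerivAt_of_nonpos' hderiv hderiv_nonpos hlim]
          ring
  simp_rw [mul_comm (cexp _)]
  rw [hparts]
  calc ‖0 - (g a : ℂ) * v a - ∫ ξ in Ioi a, ((deriv g ξ : ℝ) : ℂ) * v ξ‖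
      ≤ ‖(g a : ℂ) * v a‖ + ∫ ξ in Ioi a, ‖((deriv g ξ : ℝ) : ℂ) * v ξ‖ := by
        rw [zero_sub, ← neg_add', norm_neg]
        exact (norm_add_le _ _).trans (add_le_add_right (norm_integral_le_integral_norm _) _)
    _ = 2 * g a / |x| := by
        rw [hrest, norm_mul, hv_norm, norm_real, Real.norm_of_nonneg hga]
        ring

end OscillatoryIntegral

section SquareRootWeight

variable {k lam : ℝ}

theorem hasDerivAt_sqrt_sq_sub_sq {ξ : ℝ} (h : k ^ 2 < ξ ^ 2) :
    HasDerivAt (fun t => √(t ^ 2 - k ^ 2)) (ξ / √(ξ ^ 2 - k ^ 2)) ξ := by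
  have hs : √(ξ ^ 2 - k ^ 2) ≠ 0 := (Real.sqrt_pos.2 (sub_pos.2 h)).ne'
  convert ((hasDerivAt_pow 2 ξ).sub_const (k ^ 2)).sqrt (sub_pos.2 h).ne' using 1
  field_simp
  ring

theorem antitoneOn_div_sqrt_sq_sub_sq (hk : 0 ≤ k) :
    AntitoneOn (fun ξ => ξ / √(ξ ^ 2 - k ^ 2)) (Ioi k) := by
  intro b hb ξ hξ hbξ
  have hkb : k ^ 2 < b ^ 2 := pow_lt_pow_left₀ hb hk two_ne_zero
  have hkξ : k ^ 2 < ξ ^ 2 := pow_lt_pow_left₀ hξ hk two_ne_zero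
  have hb0 : 0 ≤ b := hk.trans hb.le
  have hξ0 : 0 ≤ ξ := hk.trans hξ.le
  rw [div_le_div_iff₀ (Real.sqrt_pos.2 (sub_pos.2 hkξ)) (Real.sqrt_pos.2 (sub_pos.2 hkb))]
  refine (pow_le_pow_iff_left₀ (by positivity) (by positivity) two_ne_zero).1 ?_
  rw [mul_pow, mul_pow, Real.sq_sqrt (sub_pos.2 hkb).le, Real.sq_sqrt (sub_pos.2 hkξ).le]
  nlinarith [mul_le_mul_of_nonneg_left (pow_le_pow_left₀ hb0 hbξ 2) (sq_nonneg k)]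

theorem antitoneOn_exp_neg_mul_sqrt_sq_sub_sq (hlam : 0 ≤ lam) :
    AntitoneOn (fun ξ => Real.exp (-(lam * √(ξ ^ 2 - k ^ 2)))) (Ici 0) :=
  fun _ hb _ _ hbξ => Real.exp_le_exp.2 <| neg_le_neg <| mul_le_mul_of_nonneg_left
    (Real.sqrt_le_sqrt (by gcongr)) hlam

theorem tendsto_exp_neg_mul_sqrt_sq_sub_sq (hlam : 0 < lam) :
    Tendsto (fun ξ => Real.exp (-(lam * √(ξ ^ 2 - k ^ 2)))) atTop (𝓝 0) :=
  Real.tendsto_exp_atBot.comp <| tendsto_neg_atTop_atBot.comp <|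
    (Real.tendsto_sqrt_atTop.comp <|
      tendsto_atTop_add_const_right _ _ (tendsto_pow_atTop two_ne_zero)).const_mul_atTop hlam

noncomputable def tailAmplitude (k lam ξ : ℝ) : ℝ :=
  Real.exp (-(lam * √(ξ ^ 2 - k ^ 2))) * (ξ / √(ξ ^ 2 - k ^ 2))

theorem tailAmplitude_nonneg (hk : 0 ≤ k) {ξ : ℝ} (hξ : k ≤ ξ) :
    0 ≤ tailAmplitude k lam ξ := by
  have : 0 ≤ ξ := hk.trans hξ
  unfold tailAmplitude; positivity

theorem antitoneOn_tailAmplitude (hk : 0 ≤ k) (hlam : 0 ≤ lam) :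
    AntitoneOn (tailAmplitude k lam) (Ioi k) := fun b hb ξ hξ hbξ =>
  mul_le_mul (antitoneOn_exp_neg_mul_sqrt_sq_sub_sq hlam (hk.trans hb.le : (0:ℝ) ≤ b)
      (hk.trans hξ.le : (0:ℝ) ≤ ξ) hbξ)
    (antitoneOn_div_sqrt_sq_sub_sq hk hb hξ hbξ)
    (div_nonneg (hk.trans hξ.le) (Real.sqrt_nonneg _)) (Real.exp_nonneg _)

theorem differentiableAt_tailAmplitude {ξ : ℝ} (h : k ^ 2 < ξ ^ 2) :
    DifferentiableAt ℝ (tailAmplitude k lam) ξ := by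
  have hs := (hasDerivAt_sqrt_sq_sub_sq h).differentiableAt
  have hs0 : √(ξ ^ 2 - k ^ 2) ≠ 0 := (Real.sqrt_pos.2 (sub_pos.2 h)).ne'
  unfold tailAmplitude
  fun_prop (disch := exact hs0)

theorem hasDerivAt_neg_exp_neg_mul_sqrt_sq_sub_sq_div {ξ : ℝ} (hlam : lam ≠ 0)
    (h : k ^ 2 < ξ ^ 2) :
    HasDerivAt (fun t => -Real.exp (-(lam * √(t ^ 2 - k ^ 2))) / lam)
      (tailAmplitude k lam ξ) ξ := by
  refine ((((hasDerivAt_sqrt_sq_sub_sq h).const_mul lam).neg.exp).neg.div_const lam).congr_deriv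
    ?_
  simp only [tailAmplitude, Pi.neg_apply]
  field_simp

theorem integrableOn_tailAmplitude (hk : 0 ≤ k) (hlam : 0 < lam) {a : ℝ} (ha : k < a) :
    IntegrableOn (tailAmplitude k lam) (Ioi a) :=
  integrableOn_Ioi_deriv_of_nonneg'
    (fun ξ hξ => hasDerivAt_neg_exp_neg_mul_sqrt_sq_sub_sq_div hlam.ne'
      (pow_lt_pow_left₀ (ha.trans_le hξ) hk two_ne_zero))
    (fun ξ hξ => tailAmplitude_nonneg hk (ha.trans hξ).le)
    (by simpa using (tendsto_exp_neg_mul_sqrt_sq_sub_sq (k := k) hlam).neg.div_const lam)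

theorem tendsto_tailAmplitude (hk : 0 ≤ k) (hlam : 0 < lam) {a : ℝ} (ha : k < a) :
    Tendsto (tailAmplitude k lam) atTop (𝓝 0) := by
  have hexp := (tendsto_exp_neg_mul_sqrt_sq_sub_sq (k := k) hlam).mul_const (a / √(a ^ 2 - k ^ 2))
  rw [zero_mul] at hexp
  refine squeeze_zero' ?_ ?_ hexp <;> filter_upwards [eventually_ge_atTop a] with ξ hξ
  · exact tailAmplitude_nonneg hk (ha.le.trans hξ)
  · exact mul_le_mul_of_nonneg_left (antitoneOn_div_sqrt_sq_sub_sq hk ha (ha.trans_le hξ) hξ)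
      (Real.exp_nonneg _)

end SquareRootWeight

/-- Let `k₁ > 0` and `R₀ > k₁`.  There is `M > 0` (depending only on
`k₁, R₀`) such that for all `x₁ > 0`, `λ > 0`, `R ≥ R₀`, the tail integral
`f_R(x₁,λ) = ∫_R^∞ e^{i x₁ ξ} e^{-λ√(ξ²−k₁²)} ξ/√(ξ²−k₁²) dξ` is absolutely convergent
and satisfies `|f_R(x₁,λ)| ≤ M e^{-λ√(R²−k₁²)}/x₁`. -/
theorem high_frequency_tail_estimate (k₁ R₀ : ℝ) (hk : 0 < k₁) (hR₀ : k₁ < R₀) :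
    ∃ M : ℝ, 0 < M ∧ ∀ x₁ : ℝ, 0 < x₁ → ∀ lam : ℝ, 0 < lam → ∀ R : ℝ, R₀ ≤ R →
      IntegrableOn
        (fun ξ : ℝ => Complex.exp (Complex.I * (x₁ : ℂ) * (ξ : ℂ)) *
          ((Real.exp (-(lam * Real.sqrt (ξ ^ 2 - k₁ ^ 2))) : ℝ) : ℂ) * (ξ : ℂ) /
          ((Real.sqrt (ξ ^ 2 - k₁ ^ 2) : ℝ) : ℂ))
        (Set.Ioi R) ∧
      ‖∫ ξ in Set.Ioi R, Complex.exp (Complex.I * (x₁ : ℂ) * (ξ : ℂ)) *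
          ((Real.exp (-(lam * Real.sqrt (ξ ^ 2 - k₁ ^ 2))) : ℝ) : ℂ) * (ξ : ℂ) /
          ((Real.sqrt (ξ ^ 2 - k₁ ^ 2) : ℝ) : ℂ)‖ ≤
        M * Real.exp (-(lam * Real.sqrt (R ^ 2 - k₁ ^ 2))) / x₁ := by
  have hsR₀ : 0 < √(R₀ ^ 2 - k₁ ^ 2) :=
    Real.sqrt_pos.2 (sub_pos.2 (pow_lt_pow_left₀ hR₀ hk.le two_ne_zero))
  have hR₀pos : 0 < R₀ := hk.trans hR₀
  refine ⟨2 * (R₀ / √(R₀ ^ 2 - k₁ ^ 2)), by positivity, fun x₁ hx₁ lam hlam R hR => ?_⟩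
  have hkR : k₁ < R := hR₀.trans_le hR
  have hintegrand : (fun ξ : ℝ => cexp (I * x₁ * ξ) *
      (Real.exp (-(lam * √(ξ ^ 2 - k₁ ^ 2))) : ℂ) * ξ / (√(ξ ^ 2 - k₁ ^ 2) : ℂ)) =
      fun ξ : ℝ => cexp (I * x₁ * ξ) * tailAmplitude k₁ lam ξ := by
    funext ξ
    simp only [tailAmplitude]
    push_cast
    ring
  rw [hintegrand]
  have hint := integrableOn_tailAmplitude hk.le hlam hkR
  refine ⟨integrableOn_Ioi_cexp_mul x₁ hint, ?_⟩
  calc _ ≤ 2 * tailAmplitude k₁ lam R / |x₁| :=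
        norm_integral_Ioi_cexp_mul_le_of_antitoneOn
          (fun ξ hξ => differentiableAt_tailAmplitude
            (pow_lt_pow_left₀ (hkR.trans_le hξ) hk.le two_ne_zero))
          ((antitoneOn_tailAmplitude hk.le hlam.le).mono (Ici_subset_Ioi.2 hkR))
          hint (tendsto_tailAmplitude hk.le hlam hkR) hx₁.ne'
    _ ≤ 2 * (Real.exp (-(lam * √(R ^ 2 - k₁ ^ 2))) * (R₀ / √(R₀ ^ 2 - k₁ ^ 2))) / x₁ := by
        rw [abs_of_pos hx₁]
        gcongr
        exact mul_le_mul_of_nonneg_left (antitoneOn_div_sqrt_sq_sub_sq hk.le hR₀ hkR hR)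
          (Real.exp_nonneg _)
    _ = _ := by ring
end

section
/- Let ψ : [0,1] → ℂ be continuously differentiable. Then there is a constant C (depending only on ψ) such that for every α ∈ (0,1), every r ≥ 1, every μ ∈ [0,1], and each choice of sign ±, one has | ∫₀^α e^{± i r w²} ψ(w) dw | ≤ C · α^μ · r^{-(1-μ)/2}. -/
/-!
For purely imaginary `c ≠ 0` the partial integrals `∫₀^x e^{c w²} dw` are bounded by `x`, and
also by `2 / √|c|`: split at `δ = 1 / √|c|`, bound the piece over `[0, δ]` by its length, and
integrate by parts against `1 / w` on `[δ, x]`, writing `e^{c w²} = w⁻¹ · (e^{c w²} / 2c)'`.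
A second integration by parts, against the primitive of `e^{c w²}`, turns a bound `K` on
these partial integrals into the bound `(sup |ψ| + ∫ |ψ'|) K` for `∫₀^α e^{c w²} ψ(w) dw`.
Hence the integral is `O(min(α, r^{-1/2}))`, and `min(a, b) ≤ a^μ b^{1-μ}` interpolates.
-/

open Set Complex MeasureTheory intervalIntegral

theorem Real.min_le_rpow_mul_rpow {a b μ : ℝ} (ha : 0 ≤ a) (hb : 0 ≤ b) (hμ : μ ∈ Icc (0 : ℝ) 1) :
    min a b ≤ a ^ μ * b ^ (1 - μ) := by
  have hm : 0 ≤ min a b := le_min ha hb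
  calc min a b = min a b ^ μ * min a b ^ (1 - μ) := by
        rw [← Real.rpow_add' hm (by norm_num), add_sub_cancel, Real.rpow_one]
    _ ≤ a ^ μ * b ^ (1 - μ) := by
        gcongr
        · exact hμ.1
        · exact min_le_left a b
        · linarith [hμ.2]
        · exact min_le_right a b

theorem integral_inv_sq_of_pos {a b : ℝ} (ha : 0 < a) (hab : a ≤ b) :
    ∫ w in a..b, (w ^ 2)⁻¹ = a⁻¹ - b⁻¹ := by
  have h0 : (0 : ℝ) ∉ uIcc a b := by
    rw [uIcc_of_le hab]; exact fun h ↦ ha.not_ge h.1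
  simp_rw [← zpow_natCast, ← zpow_neg]
  rw [integral_zpow (Or.inr ⟨by norm_num, h0⟩)]
  norm_num
  ring

theorem norm_integral_mul_le_of_norm_integral_le {f ψ ψ' : ℝ → ℂ} {a b K : ℝ} (hab : a ≤ b)
    (hf : Continuous f) (hψ : ∀ x ∈ Icc a b, HasDerivWithinAt ψ (ψ' x) (Icc a b) x)
    (hψ' : IntervalIntegrable ψ' volume a b) (hK : ∀ x ∈ Icc a b, ‖∫ w in a..x, f w‖ ≤ K) :
    ‖∫ w in a..b, f w * ψ w‖ ≤ K * (‖ψ b‖ + ∫ w in a..b, ‖ψ' w‖) := by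
  set F : ℝ → ℂ := fun x ↦ ∫ w in a..x, f w
  have hF : ∀ x ∈ uIcc a b, HasDerivWithinAt F (f x) (uIcc a b) x := fun x _ ↦
    (hf.integral_hasStrictDerivAt a x).hasDerivAt.hasDerivWithinAt
  have ibp := integral_mul_deriv_eq_deriv_mul_of_hasDerivWithinAt (uIcc_of_le hab ▸ hψ) hF hψ'
    (hf.intervalIntegrable a b)
  have hFa : F a = 0 := integral_same
  have hrest : ‖∫ w in a..b, ψ' w * F w‖ ≤ ∫ w in a..b, ‖ψ' w‖ * K := by
    refine norm_integral_le_of_norm_le hab (ae_of_all _ fun w hw ↦ ?_) (hψ'.norm.mul_const K)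
    rw [norm_mul]
    exact mul_le_mul_of_nonneg_left (hK w (Ioc_subset_Icc_self hw)) (norm_nonneg _)
  simp_rw [mul_comm (f _)]
  rw [ibp, hFa, mul_zero, sub_zero]
  calc _ ≤ ‖ψ b‖ * ‖F b‖ + ‖∫ w in a..b, ψ' w * F w‖ := by
        rw [← norm_mul]; exact norm_sub_le _ _
    _ ≤ ‖ψ b‖ * K + ∫ w in a..b, ‖ψ' w‖ * K := by
        gcongr
        exact hK b ⟨hab, le_rfl⟩
    _ = K * (‖ψ b‖ + ∫ w in a..b, ‖ψ' w‖) := by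
        rw [intervalIntegral.integral_mul_const]; ring

theorem ContDiffOn.exists_norm_integral_mul_le {ψ : ℝ → ℂ} {a b : ℝ} (hab : a < b)
    (hψ : ContDiffOn ℝ 1 ψ (Icc a b)) :
    ∃ C ≥ 0, ∀ f : ℝ → ℂ, Continuous f → ∀ x ∈ Icc a b, ∀ K : ℝ,
      (∀ y ∈ Icc a x, ‖∫ w in a..y, f w‖ ≤ K) → ‖∫ w in a..x, f w * ψ w‖ ≤ C * K := by
  obtain ⟨M, hM⟩ := isCompact_Icc.exists_bound_of_continuousOn hψ.continuousOn
  set ψ' := derivWithin ψ (Icc a b)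
  have hψ' : ContinuousOn ψ' (Icc a b) :=
    hψ.continuousOn_derivWithin (uniqueDiffOn_Icc hab) le_rfl
  refine ⟨M + ∫ w in a..b, ‖ψ' w‖, ?_, fun f hf x hx K hK ↦ ?_⟩
  · exact add_nonneg ((norm_nonneg _).trans (hM a (left_mem_Icc.2 hab.le)))
      (integral_nonneg hab.le fun _ _ ↦ norm_nonneg _)
  have hsub : Icc a x ⊆ Icc a b := Icc_subset_Icc_right hx.2
  have hK0 : 0 ≤ K := by simpa using hK a (left_mem_Icc.2 hx.1)
  refine (norm_integral_mul_le_of_norm_integral_le hx.1 hf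
    (fun y hy ↦ ((hψ.differentiableOn one_ne_zero y (hsub hy)).hasDerivWithinAt).mono hsub)
    ((hψ'.mono hsub).intervalIntegrable_of_Icc hx.1) hK).trans ?_
  rw [mul_comm K]
  gcongr
  · exact hM x hx
  · exact integral_mono_interval le_rfl hx.1 hx.2 (ae_of_all _ fun _ ↦ norm_nonneg _)
      (hψ'.norm.intervalIntegrable_of_Icc hab.le)

theorem norm_cexp_mul_sq {c : ℂ} (hc : c.re = 0) (w : ℝ) : ‖cexp (c * (w : ℂ) ^ 2)‖ = 1 := by
  rw [Complex.norm_exp, ← ofReal_pow, re_mul_ofReal, hc, zero_mul, Real.exp_zero]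

theorem norm_integral_cexp_mul_sq_le {c : ℂ} (hc : c.re = 0) (a b : ℝ) :
    ‖∫ w in a..b, cexp (c * (w : ℂ) ^ 2)‖ ≤ |b - a| := by
  simpa using norm_integral_le_of_norm_le_const (C := 1) fun w _ ↦ (norm_cexp_mul_sq hc w).le

theorem norm_integral_cexp_mul_sq_le_inv {c : ℂ} (hc : c.re = 0) (hc0 : c ≠ 0) {a b : ℝ}
    (ha : 0 < a) (hab : a ≤ b) :
    ‖∫ w in a..b, cexp (c * (w : ℂ) ^ 2)‖ ≤ (‖c‖ * a)⁻¹ := by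
  have hpos : ∀ w ∈ uIcc a b, 0 < w := fun w hw ↦ ha.trans_le (uIcc_of_le hab ▸ hw).1
  set v : ℝ → ℂ := fun w ↦ cexp (c * (w : ℂ) ^ 2) / (2 * c)
  have hv_norm : ∀ w, ‖v w‖ = (2 * ‖c‖)⁻¹ := fun w ↦ by
    simp [v, norm_cexp_mul_sq hc, mul_comm]
  have hu : ∀ w ∈ uIcc a b, HasDerivAt (fun w : ℝ ↦ (w : ℂ)⁻¹) (-((w : ℂ) ^ 2)⁻¹) w := fun w hw ↦
    by simpa using (hasDerivAt_inv (hpos w hw).ne').ofReal_comp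
  have hv : ∀ w ∈ uIcc a b, HasDerivAt v ((w : ℂ) * cexp (c * (w : ℂ) ^ 2)) w := fun w _ ↦ by
    have hsq : HasDerivAt (fun w : ℝ ↦ (w : ℂ) ^ 2) (2 * w) w := by
      simpa using (hasDerivAt_pow 2 w).ofReal_comp
    refine ((hsq.const_mul c).cexp.div_const (2 * c)).congr_deriv ?_
    field_simp
  have ibp := integral_mul_deriv_eq_deriv_mul hu hv
    ((ContinuousOn.neg (ContinuousOn.inv₀ (by fun_prop) fun w hw ↦ by
      simpa using (hpos w hw).ne')).intervalIntegrable)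
    ((by fun_prop : Continuous fun w : ℝ ↦ (w : ℂ) * cexp (c * (w : ℂ) ^ 2)).intervalIntegrable _ _)
  have hfactor : ∫ w in a..b, cexp (c * (w : ℂ) ^ 2)
      = ∫ w in a..b, (w : ℂ)⁻¹ * ((w : ℂ) * cexp (c * (w : ℂ) ^ 2)) :=
    integral_congr fun w hw ↦ by
      rw [inv_mul_cancel_left₀ (ofReal_ne_zero.2 (hpos w hw).ne')]
  have hrest : ‖∫ w in a..b, -((w : ℂ) ^ 2)⁻¹ * v w‖ ≤ (a⁻¹ - b⁻¹) / (2 * ‖c‖) := by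
    rw [← integral_inv_sq_of_pos ha hab, ← intervalIntegral.integral_div]
    refine norm_integral_le_of_norm_le hab (ae_of_all _ fun w hw ↦ ?_) ?_
    · rw [norm_mul, hv_norm, norm_neg, norm_inv, ← ofReal_pow, norm_real,
        Real.norm_of_nonneg (sq_nonneg w), div_eq_mul_inv]
    · exact (ContinuousOn.div_const (ContinuousOn.inv₀ (by fun_prop)
        fun w hw ↦ (pow_pos (hpos w hw) 2).ne') _).intervalIntegrable
  have hbdry : ∀ w : ℝ, 0 < w → ‖(w : ℂ)⁻¹ * v w‖ = (2 * ‖c‖ * w)⁻¹ := fun w hw ↦ by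
    rw [norm_mul, hv_norm, norm_inv, norm_real, Real.norm_of_nonneg hw.le, mul_comm, ← mul_inv]
  rw [hfactor, ibp]
  calc _ ≤ ‖(b : ℂ)⁻¹ * v b‖ + ‖(a : ℂ)⁻¹ * v a‖ + ‖∫ w in a..b, -((w : ℂ) ^ 2)⁻¹ * v w‖ :=
        norm_sub_le_of_le (norm_sub_le _ _) le_rfl
    _ ≤ (2 * ‖c‖ * b)⁻¹ + (2 * ‖c‖ * a)⁻¹ + (a⁻¹ - b⁻¹) / (2 * ‖c‖) := by
        rw [hbdry b (ha.trans_le hab), hbdry a ha]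
        gcongr
    _ = (‖c‖ * a)⁻¹ := by
        field_simp
        ring

theorem norm_integral_cexp_mul_sq_le_two_div_sqrt {c : ℂ} (hc : c.re = 0) (hc0 : c ≠ 0) {x : ℝ}
    (hx : 0 ≤ x) : ‖∫ w in (0 : ℝ)..x, cexp (c * (w : ℂ) ^ 2)‖ ≤ 2 / √‖c‖ := by
  set δ := 1 / √‖c‖ with hδ_def
  have hδ : 0 < δ := by positivity
  rw [← mul_one_div, ← hδ_def]
  rcases le_or_gt x δ with hxδ | hδx
  · calc _ ≤ |x - 0| := norm_integral_cexp_mul_sq_le hc 0 x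
      _ ≤ 2 * δ := by rw [sub_zero, abs_of_nonneg hx]; linarith
  have hint : ∀ a b : ℝ, IntervalIntegrable (fun w : ℝ ↦ cexp (c * (w : ℂ) ^ 2)) volume a b :=
    (by fun_prop : Continuous fun w : ℝ ↦ cexp (c * (w : ℂ) ^ 2)).intervalIntegrable
  have hcδ : (‖c‖ * δ)⁻¹ = δ := by
    rw [hδ_def, mul_one_div, Real.div_sqrt, one_div]
  rw [← integral_add_adjacent_intervals (hint 0 δ) (hint δ x)]
  calc _ ≤ |δ - 0| + (‖c‖ * δ)⁻¹ := norm_add_le_of_le (norm_integral_cexp_mul_sq_le hc 0 δ)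
        (norm_integral_cexp_mul_sq_le_inv hc hc0 hδ hδx.le)
    _ = 2 * δ := by rw [sub_zero, abs_of_pos hδ, hcδ]; ring

/-- Let `ψ` be `C¹` on `[0,1]`.  There is a constant `C` (depending
only on `ψ`) such that for every `α ∈ (0,1)`, `r ≥ 1`, `μ ∈ [0,1]` and both signs,
`|∫₀^α e^{± i r w²} ψ(w) dw| ≤ C α^μ r^{-(1-μ)/2}`. -/
theorem short_oscillatory_interpolated_estimate (ψ : ℝ → ℂ)
    (hψ : ContDiffOn ℝ 1 ψ (Set.Icc 0 1)) :
    ∃ C : ℝ, ∀ α ∈ Set.Ioo (0 : ℝ) 1, ∀ r : ℝ, 1 ≤ r → ∀ μ ∈ Set.Icc (0 : ℝ) 1,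
      ∀ ε : ℝ, (ε = 1 ∨ ε = -1) →
      ‖∫ w in (0 : ℝ)..α, Complex.exp ((ε : ℂ) * Complex.I * (r : ℂ) * (w : ℂ) ^ 2) * ψ w‖ ≤
        C * α ^ μ * r ^ (-(1 - μ) / 2) := by
  obtain ⟨C, hC0, hC⟩ := hψ.exists_norm_integral_mul_le zero_lt_one
  refine ⟨2 * C, fun α hα r hr μ hμ ε hε ↦ ?_⟩
  have hr0 : 0 < r := one_pos.trans_le hr
  set c : ℂ := ε * I * r
  have hc_re : c.re = 0 := by simp [c]
  have hc_norm : ‖c‖ = r := by rcases hε with rfl | rfl <;> simp [c, abs_of_pos hr0]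
  have hc0 : c ≠ 0 := norm_pos_iff.1 (hc_norm ▸ hr0)
  have hK : ∀ y ∈ Icc 0 α, ‖∫ w in (0 : ℝ)..y, cexp (c * (w : ℂ) ^ 2)‖ ≤ min α (2 / √r) :=
    fun y hy ↦ le_min ((norm_integral_cexp_mul_sq_le hc_re 0 y).trans
        (by rw [sub_zero, abs_of_nonneg hy.1]; exact hy.2))
      (hc_norm ▸ norm_integral_cexp_mul_sq_le_two_div_sqrt hc_re hc0 hy.1)
  have hmin : min α (2 / √r) ≤ 2 * (α ^ μ * (1 / √r) ^ (1 - μ)) := by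
    calc min α (2 / √r) ≤ min (2 * α) (2 * (1 / √r)) := by
          rw [mul_one_div]; gcongr; linarith [hα.1]
      _ = 2 * min α (1 / √r) := (mul_min_of_nonneg _ _ zero_le_two).symm
      _ ≤ 2 * (α ^ μ * (1 / √r) ^ (1 - μ)) := by
        gcongr; exact Real.min_le_rpow_mul_rpow hα.1.le (by positivity) hμ
  have hsqrt_rpow : (1 / √r) ^ (1 - μ) = r ^ (-(1 - μ) / 2) := by
    rw [Real.sqrt_eq_rpow, one_div, ← Real.rpow_neg hr0.le, ← Real.rpow_mul hr0.le]
    ring_nf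
  calc _ ≤ C * min α (2 / √r) := hC _ (by fun_prop) α (Ioo_subset_Icc_self hα) _ hK
    _ ≤ C * (2 * (α ^ μ * (1 / √r) ^ (1 - μ))) := by gcongr
    _ = 2 * C * α ^ μ * r ^ (-(1 - μ) / 2) := by rw [hsqrt_rpow]; ring
end

section
/- Let ψ be a smooth function on [0,∞) with support contained in [0,1), let β ∈ {−1, +1}, and for α ∈ (0, 1/2) and r > 0 define I_±(r) = ∫₀¹ e^{i r β (w ± α)²} ψ(w) dw. Then there is a constant C (depending only on ψ) such that for all α ∈ (0, 1/2), all r ≥ 1, and both choices of sign, |I_±(r)| ≤ C / √r. -/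
open intervalIntegral

section Aux
open Complex MeasureTheory

noncomputable def fr (β : ℝ) (u : ℝ) : ℂ := Complex.exp (Complex.I * β * (u:ℂ)^2)

lemma fr_cont (β : ℝ) : Continuous (fr β) := by
  unfold fr; fun_prop

lemma fr_norm (β : ℝ) (u : ℝ) : ‖fr β u‖ = 1 := by
  have : Complex.I * β * (u:ℂ)^2 = ((β * u^2 : ℝ) : ℂ) * Complex.I := by push_cast; ring
  rw [fr, this, Complex.norm_exp_ofReal_mul_I]

lemma fr_hasDeriv (β : ℝ) (x : ℝ) :
    HasDerivAt (fun y => ∫ u in (0:ℝ)..y, fr β u) (fr β x) x :=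
  intervalIntegral.integral_hasDerivAt_right ((fr_cont β).intervalIntegrable _ _)
    ((fr_cont β).stronglyMeasurableAtFilter _ _) (fr_cont β).continuousAt

lemma fresnel_tail (β : ℝ) (hβ : β = 1 ∨ β = -1) (x : ℝ) (hx : 1 ≤ x) :
    ‖∫ u in (1:ℝ)..x, fr β u‖ ≤ 2 := by
  set c : ℂ := 2 * Complex.I * β with hc
  have hβ0 : (β:ℂ) ≠ 0 := by rcases hβ with h | h <;> simp [h]
  have hcn : ‖c‖ = 2 := by
    rcases hβ with h | h <;> simp [hc, h, norm_mul]
  have hc0 : c ≠ 0 := by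
    intro h; rw [h] at hcn; norm_num at hcn
  have hct : ∀ t : ℝ, 1 ≤ t → c * t ≠ 0 := by
    intro t ht
    exact mul_ne_zero hc0 (by exact_mod_cast (by linarith : (0:ℝ) < t).ne')
  -- derivative facts
  have hid : ∀ t : ℝ, HasDerivAt (fun s : ℝ => (s:ℂ)) 1 t := by
    intro t
    simpa using (hasDerivAt_id t).ofReal_comp
  have hv : ∀ t : ℝ, HasDerivAt (fun s : ℝ => fr β s) (fr β t * (c * t)) t := by
    intro t
    have h1 : HasDerivAt (fun s : ℝ => Complex.I * β * ((s:ℂ) * (s:ℂ))) (c * t) t := by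
      have := (((hid t).mul (hid t)).const_mul (Complex.I * (β:ℂ)))
      refine HasDerivAt.congr_deriv this ?_
      rw [hc]; ring
    have h2 := h1.cexp
    have heq : (fun s : ℝ => Complex.exp (Complex.I * β * ((s:ℂ) * (s:ℂ)))) = fr β := by
      funext s; rw [fr, pow_two]
    rw [heq] at h2
    convert h2 using 2
    rw [fr, pow_two]
  have hu : ∀ t : ℝ, t ∈ Set.uIcc (1:ℝ) x → HasDerivAt (fun s : ℝ => (c * (s:ℂ))⁻¹)
      (-c / (c * (t:ℂ))^2) t := by
    intro t ht
    rw [Set.uIcc_of_le hx] at ht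
    have h1 : HasDerivAt (fun s : ℝ => c * (s:ℂ)) c t := by
      simpa using (hid t).const_mul c
    have h2 := (hasDerivAt_inv (hct t ht.1)).scomp t h1
    refine HasDerivAt.congr_deriv h2 ?_
    have := hct t ht.1
    rw [smul_eq_mul, div_eq_mul_inv]; ring
  -- integrability
  have hint1 : IntervalIntegrable (fun t : ℝ => -c / (c * (t:ℂ))^2) volume 1 x := by
    apply ContinuousOn.intervalIntegrable
    apply ContinuousOn.div continuousOn_const
    · fun_prop
    · intro t ht
      rw [Set.uIcc_of_le hx] at ht
      exact pow_ne_zero _ (hct t ht.1)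
  have hint2 : IntervalIntegrable (fun t : ℝ => fr β t * (c * t)) volume 1 x := by
    exact ((fr_cont β).mul (by fun_prop)).intervalIntegrable _ _
  -- integration by parts
  have ibp := intervalIntegral.integral_mul_deriv_eq_deriv_mul
    (u := fun s : ℝ => (c * (s:ℂ))⁻¹) (v := fun s : ℝ => fr β s)
    (u' := fun t : ℝ => -c / (c * (t:ℂ))^2) (v' := fun t : ℝ => fr β t * (c * t))
    hu (fun t _ => hv t) hint1 hint2
  have key : (∫ u in (1:ℝ)..x, fr β u) = ∫ t in (1:ℝ)..x, (c * (t:ℂ))⁻¹ * (fr β t * (c * t)) := by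
    apply intervalIntegral.integral_congr
    intro t ht
    rw [Set.uIcc_of_le hx] at ht
    have htc : (t:ℂ) ≠ 0 := by exact_mod_cast (by linarith [ht.1] : (0:ℝ) < t).ne'
    field_simp [hct t ht.1, htc]
  rw [key, ibp]
  have hx0 : (0:ℝ) < x := by linarith
  -- bound the three pieces
  have b1 : ‖(c * (x:ℂ))⁻¹ * fr β x‖ ≤ 1/2 := by
    rw [norm_mul, fr_norm, mul_one, norm_inv, norm_mul, hcn, Complex.norm_real,
      Real.norm_eq_abs, abs_of_pos hx0]
    rw [inv_le_comm₀ (by positivity) (by norm_num)]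
    linarith
  have b2 : ‖(c * ((1:ℝ):ℂ))⁻¹ * fr β 1‖ ≤ 1/2 := by
    rw [norm_mul, fr_norm, mul_one, norm_inv]
    simp [hcn]
  have b3 : ‖∫ t in (1:ℝ)..x, (-c / (c * (t:ℂ))^2) * fr β t‖ ≤ 1/2 := by
    have hb : ∀ᵐ (t : ℝ) ∂(volume.restrict (Set.uIoc (1:ℝ) x)),
        ‖(-c / (c * (t:ℂ))^2) * fr β t‖ ≤ (1/2) * t⁻¹^2 := by
      filter_upwards [ae_restrict_mem measurableSet_uIoc] with t ht
      rw [Set.uIoc_of_le hx] at ht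
      have ht1 : (1:ℝ) ≤ t := le_of_lt ht.1
      have ht0 : (0:ℝ) < t := by linarith
      have hnct : ‖c * (t:ℂ)‖ = 2 * t := by
        rw [norm_mul, hcn, Complex.norm_real, Real.norm_eq_abs, abs_of_pos ht0]
      have heq : ‖-c / (c * (t:ℂ))^2 * fr β t‖ = ‖c‖ / ‖c * (t:ℂ)‖^2 := by
        rw [norm_mul, fr_norm, mul_one, norm_div, norm_neg, norm_pow]
      rw [heq, hcn, hnct]
      have : (2:ℝ) / (2*t)^2 = 1/2 * t⁻¹^2 := by field_simp
      rw [this]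
    have hgint : IntervalIntegrable (fun t : ℝ => (1/2) * t⁻¹^2) volume 1 x := by
      apply ContinuousOn.intervalIntegrable
      apply ContinuousOn.mul continuousOn_const
      apply ContinuousOn.pow
      apply ContinuousOn.inv₀ continuousOn_id
      intro t ht
      rw [Set.uIcc_of_le hx] at ht
      exact (by linarith [ht.1] : (0:ℝ) < t).ne'
    have := intervalIntegral.norm_integral_le_abs_of_norm_le hb hgint
    refine this.trans ?_
    have hval : (∫ t in (1:ℝ)..x, (1/2) * t⁻¹^2) = (1/2) * (1 - x⁻¹) := by
      rw [intervalIntegral.integral_const_mul]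
      have hpt : ∀ t : ℝ, t⁻¹^2 = t^(-2:ℤ) := by
        intro t
        rw [zpow_neg, inv_pow]
        norm_cast
      rw [intervalIntegral.integral_congr (g := fun t : ℝ => t^(-2:ℤ)) (fun t _ => hpt t)]
      rw [integral_zpow]
      · norm_num
        ring
      · right
        constructor
        · norm_num
        · rw [Set.uIcc_of_le hx]; intro h; linarith [h.1]
    rw [hval]
    have h1 : 0 < x⁻¹ := inv_pos.mpr hx0
    have h2 : x⁻¹ * x = 1 := inv_mul_cancel₀ hx0.ne'
    have h3 : x⁻¹ ≤ 1 := by nlinarith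
    rw [_root_.abs_of_nonneg (by nlinarith)]
    nlinarith
  calc ‖(c * (x:ℂ))⁻¹ * fr β x - (c * ((1:ℝ):ℂ))⁻¹ * fr β 1 -
        ∫ t in (1:ℝ)..x, (-c / (c * (t:ℂ))^2) * fr β t‖
      ≤ ‖(c * (x:ℂ))⁻¹ * fr β x - (c * ((1:ℝ):ℂ))⁻¹ * fr β 1‖ +
        ‖∫ t in (1:ℝ)..x, (-c / (c * (t:ℂ))^2) * fr β t‖ := norm_sub_le _ _
    _ ≤ (‖(c * (x:ℂ))⁻¹ * fr β x‖ + ‖(c * ((1:ℝ):ℂ))⁻¹ * fr β 1‖) +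
        ‖∫ t in (1:ℝ)..x, (-c / (c * (t:ℂ))^2) * fr β t‖ := by
        gcongr; exact norm_sub_le _ _
    _ ≤ (1/2 + 1/2) + 1/2 := by gcongr
    _ ≤ 2 := by norm_num


lemma fresnel_bound_nonneg (β : ℝ) (hβ : β = 1 ∨ β = -1) (x : ℝ) (hx : 0 ≤ x) :
    ‖∫ u in (0:ℝ)..x, fr β u‖ ≤ 3 := by
  rcases le_or_gt x 1 with h1 | h1
  · have := intervalIntegral.norm_integral_le_of_norm_le_const
      (C := 1) (f := fr β) (a := 0) (b := x) (fun u _ => le_of_eq (fr_norm β u))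
    refine this.trans ?_
    rw [sub_zero, one_mul, _root_.abs_of_nonneg hx]
    linarith
  · have hsplit : (∫ u in (0:ℝ)..1, fr β u) + (∫ u in (1:ℝ)..x, fr β u)
        = ∫ u in (0:ℝ)..x, fr β u :=
      intervalIntegral.integral_add_adjacent_intervals
        ((fr_cont β).intervalIntegrable _ _) ((fr_cont β).intervalIntegrable _ _)
    rw [← hsplit]
    have b1 : ‖∫ u in (0:ℝ)..1, fr β u‖ ≤ 1 := by
      have := intervalIntegral.norm_integral_le_of_norm_le_const
        (C := 1) (f := fr β) (a := 0) (b := 1) (fun u _ => le_of_eq (fr_norm β u))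
      simpa using this
    have b2 := fresnel_tail β hβ x h1.le
    calc ‖(∫ u in (0:ℝ)..1, fr β u) + ∫ u in (1:ℝ)..x, fr β u‖
        ≤ ‖∫ u in (0:ℝ)..1, fr β u‖ + ‖∫ u in (1:ℝ)..x, fr β u‖ := norm_add_le _ _
      _ ≤ 1 + 2 := by gcongr
      _ = 3 := by norm_num

lemma fresnel_bound (β : ℝ) (hβ : β = 1 ∨ β = -1) (x : ℝ) :
    ‖∫ u in (0:ℝ)..x, fr β u‖ ≤ 3 := by
  rcases le_or_gt 0 x with hx | hx
  · exact fresnel_bound_nonneg β hβ x hx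
  · have hsym : (∫ u in (0:ℝ)..(-x), fr β u) = - ∫ u in (0:ℝ)..x, fr β u := by
      have h1 : (∫ u in (0:ℝ)..(-x), fr β (-u)) = ∫ u in (x:ℝ)..0, fr β u := by
        have := intervalIntegral.integral_comp_neg (a := 0) (b := -x) (fun u => fr β u)
        simpa using this
      have h2 : ∀ u : ℝ, fr β (-u) = fr β u := by
        intro u; unfold fr; push_cast; ring_nf
      simp_rw [h2] at h1
      rw [h1, intervalIntegral.integral_symm]
    have := fresnel_bound_nonneg β hβ (-x) (by linarith)
    rw [hsym, norm_neg] at this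
    exact this

end Aux

section Main
open Complex MeasureTheory

/-- Let `ψ` be smooth with support in `[0,1)`, `β = ±1`, and for
`α ∈ (0,1/2)` set `I_±(r) = ∫₀¹ e^{irβ(w±α)²} ψ(w) dw`.  Then there is `C` (depending
only on `ψ`) such that `|I_±(r)| ≤ C/√r` for all `α ∈ (0,1/2)`, `r ≥ 1`, both signs. -/
theorem moving_stationary_point_uniform_bound (ψ : ℝ → ℂ)
    (hψ : ContDiff ℝ (⊤ : ℕ∞) ψ) (hsupp : ∀ w : ℝ, 1 ≤ w → ψ w = 0)
    (β : ℝ) (hβ : β = 1 ∨ β = -1) :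
    ∃ C : ℝ, ∀ α ∈ Set.Ioo (0 : ℝ) (1 / 2), ∀ r : ℝ, 1 ≤ r →
      ∀ s : ℝ, (s = 1 ∨ s = -1) →
      ‖∫ w in (0 : ℝ)..1,
          Complex.exp (Complex.I * (r : ℂ) * (β : ℂ) * ((w + s * α : ℝ) : ℂ) ^ 2) * ψ w‖ ≤
        C / Real.sqrt r := by
  have hψd : Differentiable ℝ ψ := hψ.differentiable (by simp)
  have hψ' : Continuous (deriv ψ) := hψ.continuous_deriv (by simp)
  set K : ℝ := ∫ w in (0:ℝ)..1, ‖deriv ψ w‖ with hK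
  have hK0 : 0 ≤ K := intervalIntegral.integral_nonneg (by norm_num) (fun w _ => norm_nonneg _)
  refine ⟨3 * (‖ψ 0‖ + K), ?_⟩
  intro α hα r hr s hs
  set σ : ℝ := Real.sqrt r with hσ
  have hσ0 : 0 < σ := Real.sqrt_pos.mpr (by linarith)
  have hσ2 : (σ:ℝ)^2 = r := Real.sq_sqrt (by linarith)
  set F : ℝ → ℂ := fun y => ∫ u in (0:ℝ)..y, fr β u with hF
  set G : ℝ → ℂ := fun w => (σ:ℂ)⁻¹ * F (σ * (w + s * α)) with hG
  -- derivative of G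
  have hGd : ∀ w : ℝ, HasDerivAt G
      (Complex.exp (Complex.I * (r:ℂ) * (β:ℂ) * ((w + s * α : ℝ) : ℂ)^2)) w := by
    intro w
    have hin : HasDerivAt (fun w : ℝ => σ * (w + s * α)) σ w := by
      simpa using ((hasDerivAt_id w).add_const (s * α)).const_mul σ
    have hcomp : HasDerivAt (fun w : ℝ => F (σ * (w + s * α)))
        (σ • fr β (σ * (w + s * α))) w :=
      by have := (fr_hasDeriv β (σ * (w + s * α))).scomp w hin; exact this
    have := hcomp.const_mul ((σ:ℂ)⁻¹)
    refine HasDerivAt.congr_deriv this ?_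
    have hσc : (σ:ℂ) ≠ 0 := by exact_mod_cast hσ0.ne'
    rw [fr, Complex.real_smul, ← mul_assoc, inv_mul_cancel₀ hσc, one_mul]
    congr 1
    have hrc : (r:ℂ) = (σ:ℂ)^2 := by exact_mod_cast hσ2.symm
    rw [hrc]
    push_cast
    ring
  -- integration by parts
  have hG1 : ∀ w : ℝ, ‖G w‖ ≤ 3 / σ := by
    intro w
    rw [hG]
    simp only [norm_mul, norm_inv, Complex.norm_real, Real.norm_eq_abs, _root_.abs_of_pos hσ0]
    rw [div_eq_inv_mul]
    gcongr
    exact fresnel_bound β hβ _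
  have hint1 : IntervalIntegrable (deriv ψ) volume 0 1 := hψ'.intervalIntegrable _ _
  have hint2 : IntervalIntegrable
      (fun w : ℝ => Complex.exp (Complex.I * (r:ℂ) * (β:ℂ) * ((w + s * α : ℝ) : ℂ)^2))
      volume 0 1 := by
    apply Continuous.intervalIntegrable
    fun_prop
  have ibp := intervalIntegral.integral_mul_deriv_eq_deriv_mul
    (u := ψ) (v := G) (u' := deriv ψ)
    (v' := fun w : ℝ => Complex.exp (Complex.I * (r:ℂ) * (β:ℂ) * ((w + s * α : ℝ) : ℂ)^2))
    (fun w _ => (hψd w).hasDerivAt) (fun w _ => hGd w) hint1 hint2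
  have hcomm : (∫ w in (0:ℝ)..1,
      Complex.exp (Complex.I * (r:ℂ) * (β:ℂ) * ((w + s * α : ℝ) : ℂ)^2) * ψ w)
      = ∫ w in (0:ℝ)..1,
      ψ w * Complex.exp (Complex.I * (r:ℂ) * (β:ℂ) * ((w + s * α : ℝ) : ℂ)^2) := by
    apply intervalIntegral.integral_congr
    intro w _
    exact mul_comm _ _
  rw [hcomm, ibp, hsupp 1 le_rfl, zero_mul, zero_sub]
  have hb1 : ‖ψ 0 * G 0‖ ≤ ‖ψ 0‖ * (3 / σ) := by
    rw [norm_mul]; gcongr; exact hG1 0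
  have hb2 : ‖∫ w in (0:ℝ)..1, deriv ψ w * G w‖ ≤ K * (3 / σ) := by
    have hb : ∀ᵐ (w : ℝ) ∂(volume.restrict (Set.uIoc (0:ℝ) 1)),
        ‖deriv ψ w * G w‖ ≤ ‖deriv ψ w‖ * (3 / σ) := by
      filter_upwards with w
      rw [norm_mul]
      exact mul_le_mul_of_nonneg_left (hG1 w) (norm_nonneg _)
    have hgint : IntervalIntegrable (fun w : ℝ => ‖deriv ψ w‖ * (3 / σ)) volume 0 1 :=
      (hψ'.norm.mul continuous_const).intervalIntegrable _ _
    have := intervalIntegral.norm_integral_le_abs_of_norm_le hb hgint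
    refine this.trans ?_
    rw [intervalIntegral.integral_mul_const, ← hK,
      _root_.abs_of_nonneg (by positivity)]
  calc ‖-(ψ 0 * G 0) - ∫ w in (0:ℝ)..1, deriv ψ w * G w‖
      ≤ ‖-(ψ 0 * G 0)‖ + ‖∫ w in (0:ℝ)..1, deriv ψ w * G w‖ := norm_sub_le _ _
    _ ≤ ‖ψ 0‖ * (3 / σ) + K * (3 / σ) := by rw [norm_neg]; gcongr
    _ = 3 * (‖ψ 0‖ + K) / σ := by ring
    _ ≤ 3 * (‖ψ 0‖ + K) / Real.sqrt r := le_of_eq rfl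

end Main
end

section
/- Let 0 < k₁ < k₂ and d > 0, and set q₀ = k₂² − k₁². For ξ > k₂ set Ã = √(ξ² − k₂²) and B̃ = √(ξ² − k₁²), and define 𝔄₀(ξ) = ∫_{-d}^{d} q₀ · e^{B̃(z − d)} · [ cosh(Ã(d + z)) + B̃ · sinh(Ã(d + z)) / Ã ] dz. Then there exists a constant M (depending only on k₁, k₂, d) such that for all ξ > k₂, |𝔄₀(ξ)| ≤ M · e^{2 d B̃} / (1 + ξ). -/
/-!
The integrand is an exact derivative: `d/dz [e^{B̃(z-d)} sinh(Ã(d+z))/Ã]`, so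
`𝔄₀(ξ) = q₀ sinh(2dÃ)/Ã`. The elementary bound `sinh x · (1 + x) ≤ 2x eˣ` turns this into
`4 q₀ d e^{2dÃ}/(1 + 2dÃ)`, and `Ã ≥ ξ - k₂` makes `1 + 2dÃ` comparable to `1 + ξ`, while
`Ã ≤ B̃` gives `e^{2dÃ} ≤ e^{2dB̃}`.
-/

open Real intervalIntegral

lemma Real.sinh_mul_one_add_le {x : ℝ} (hx : 0 ≤ x) : sinh x * (1 + x) ≤ 2 * x * exp x := by
  have h_small : sinh x ≤ x * exp x := by
    have h_exp_mul : exp x * (1 - x) ≤ 1 :=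
      calc exp x * (1 - x) ≤ exp x * exp (-x) := by gcongr; linarith [add_one_le_exp (-x)]
        _ = 1 := by rw [← exp_add, add_neg_cancel, exp_zero]
    rw [sinh_eq]
    nlinarith [add_one_le_exp (-x), one_le_exp hx]
  have h_large : x * sinh x ≤ x * (exp x / 2) := by
    gcongr
    rw [sinh_eq]
    linarith [exp_pos (-x)]
  nlinarith [exp_pos x]

lemma Real.sinh_mul_div_le {A c : ℝ} (hA : 0 < A) (hc : 0 ≤ c) :
    sinh (A * c) / A ≤ 2 * c * exp (A * c) / (1 + A * c) := by
  have hAc : 0 ≤ A * c := by positivity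
  rw [div_le_div_iff₀ hA (by positivity)]
  linarith [sinh_mul_one_add_le hAc]

lemma Real.sub_le_sqrt_sq_sub_sq {k ξ : ℝ} (hk : 0 ≤ k) (hkξ : k ≤ ξ) :
    ξ - k ≤ √(ξ ^ 2 - k ^ 2) :=
  (le_sqrt (by linarith) (by nlinarith)).mpr (by nlinarith)

lemma mul_one_add_le_of_sub_le {c k ξ A : ℝ} (hc : 0 ≤ c) (hk : 0 ≤ k) (hkξ : k ≤ ξ)
    (hA : ξ - k ≤ A) : c * (1 + ξ) ≤ (c * (1 + k) + 1) * (1 + A * c) := by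
  have h_gap : 0 ≤ c * (c * (1 + k)) * (ξ - k) := by
    have := sub_nonneg.mpr hkξ
    positivity
  nlinarith [mul_le_mul_of_nonneg_left hA (by positivity : 0 ≤ c * (c * (1 + k) + 1))]

lemma hasDerivAt_exp_mul_sinh_div (a b A B z : ℝ) (hA : A ≠ 0) :
    HasDerivAt (fun t => exp (B * (t - b)) * sinh (A * (t - a)) / A)
      (exp (B * (z - b)) * (cosh (A * (z - a)) + B * sinh (A * (z - a)) / A)) z := by
  have he := (((hasDerivAt_id' z).sub_const b).const_mul B).exp
  have hs := (((hasDerivAt_id' z).sub_const a).const_mul A).sinh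
  refine ((he.mul hs).div_const A).congr_deriv ?_
  field_simp
  ring

lemma integral_exp_mul_cosh_add_mul_sinh_div (a b A B : ℝ) (hA : A ≠ 0) :
    ∫ z in a..b, exp (B * (z - b)) * (cosh (A * (z - a)) + B * sinh (A * (z - a)) / A) =
      sinh (A * (b - a)) / A := by
  rw [integral_eq_sub_of_hasDerivAt (fun z _ => hasDerivAt_exp_mul_sinh_div a b A B z hA)
    (by apply Continuous.intervalIntegrable; fun_prop)]
  simp

/-- Let `0 < k₁ < k₂`, `d > 0`, `q₀ = k₂² − k₁²`.  For `ξ > k₂` let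
`Ã = √(ξ²−k₂²)`, `B̃ = √(ξ²−k₁²)` and
`𝔄₀(ξ) = ∫_{-d}^d q₀ e^{B̃(z−d)} [cosh(Ã(d+z)) + B̃ sinh(Ã(d+z))/Ã] dz`.
Then `|𝔄₀(ξ)| ≤ M e^{2dB̃}/(1+ξ)` for a constant `M` depending only on `k₁, k₂, d`. -/
theorem channel_integral_high_frequency_bound (k₁ k₂ d : ℝ)
    (h1 : 0 < k₁) (h2 : k₁ < k₂) (hd : 0 < d) :
    ∃ M : ℝ, 0 < M ∧ ∀ ξ : ℝ, k₂ < ξ →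
      |∫ z in (-d)..d, (k₂ ^ 2 - k₁ ^ 2) *
          Real.exp (Real.sqrt (ξ ^ 2 - k₁ ^ 2) * (z - d)) *
          (Real.cosh (Real.sqrt (ξ ^ 2 - k₂ ^ 2) * (d + z)) +
            Real.sqrt (ξ ^ 2 - k₁ ^ 2) *
              Real.sinh (Real.sqrt (ξ ^ 2 - k₂ ^ 2) * (d + z)) /
              Real.sqrt (ξ ^ 2 - k₂ ^ 2))| ≤
        M * Real.exp (2 * d * Real.sqrt (ξ ^ 2 - k₁ ^ 2)) / (1 + ξ) := by
  have hq₀ : 0 < k₂ ^ 2 - k₁ ^ 2 := sub_pos.mpr (by gcongr)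
  have hk₂ : 0 < k₂ := h1.trans h2
  refine ⟨2 * (k₂ ^ 2 - k₁ ^ 2) * (2 * d * (1 + k₂) + 1), by positivity, fun ξ hξ => ?_⟩
  set A := √(ξ ^ 2 - k₂ ^ 2)
  set B := √(ξ ^ 2 - k₁ ^ 2)
  have hA_pos : 0 < A := sqrt_pos.mpr (by nlinarith)
  have hA_ge : ξ - k₂ ≤ A := sub_le_sqrt_sq_sub_sq (by linarith) hξ.le
  have hAB : A ≤ B := sqrt_le_sqrt (by nlinarith)
  have h_integral := integral_exp_mul_cosh_add_mul_sinh_div (-d) d A B hA_pos.ne'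
  simp only [sub_neg_eq_add, add_comm _ d, ← two_mul] at h_integral
  simp only [mul_assoc (k₂ ^ 2 - k₁ ^ 2), integral_const_mul, h_integral]
  have h_sinh := sinh_mul_div_le hA_pos (by positivity : 0 ≤ 2 * d)
  have h_exp : A * (2 * d) ≤ 2 * d * B := by nlinarith
  have h_denom := mul_one_add_le_of_sub_le (by positivity : 0 ≤ 2 * d) hk₂.le hξ.le hA_ge
  rw [abs_of_nonneg (by positivity)]
  calc (k₂ ^ 2 - k₁ ^ 2) * (sinh (A * (2 * d)) / A)
      ≤ (k₂ ^ 2 - k₁ ^ 2) * (2 * (2 * d) * exp (2 * d * B) / (1 + A * (2 * d))) := by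
        exact mul_le_mul_of_nonneg_left (h_sinh.trans (by gcongr)) hq₀.le
    _ ≤ _ := by
        rw [mul_div_assoc', div_le_div_iff₀ (by positivity) (by linarith)]
        calc _ = 2 * (k₂ ^ 2 - k₁ ^ 2) * exp (2 * d * B) * (2 * d * (1 + ξ)) := by ring
          _ ≤ 2 * (k₂ ^ 2 - k₁ ^ 2) * exp (2 * d * B) *
              ((2 * d * (1 + k₂) + 1) * (1 + A * (2 * d))) := by gcongr
          _ = _ := by ring
end
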